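/- arXiv:2503.07228 — 13 statements merged into one kernel-verified Lean document; each statement's English description precedes it below -/
import Mathlib

section
/- Let v₁, v₂, v₃ ∈ ℝ³ be linearly independent vectors (three non-collinear projective points) and let l ∈ ℝ³ be a vector with ⟪vᵢ, l⟫ ≠ 0 for i = 1, 2, 3 (a projective line not passing through any of the three points). If A ∈ GL(3, ℝ) satisfies A vᵢ = cᵢ • vᵢ for some scalars cᵢ (i = 1, 2, 3) and Aᵀ l = d • l for some scalar d, then A is a scalar multiple of the identity matrix. (So three non-collinear points together with a line avoiding them form a complete projective pinning system.) -/
open Matrix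

namespace Matrix

variable {n : Type*} [Fintype n]

theorem eigenvalue_eq_of_transpose_eigenvector {R : Type*} [CommRing R] [IsDomain R]
    {A : Matrix n n R} {x l : n → R} {c d : R}
    (hx : A *ᵥ x = c • x) (hl : Aᵀ *ᵥ l = d • l) (hxl : x ⬝ᵥ l ≠ 0) : c = d := by
  refine mul_right_cancel₀ hxl ?_
  calc c * (x ⬝ᵥ l) = A *ᵥ x ⬝ᵥ l := by rw [hx, smul_dotProduct, smul_eq_mul]
    _ = l ⬝ᵥ A *ᵥ x := dotProduct_comm _ _
    _ = Aᵀ *ᵥ l ⬝ᵥ x := by rw [dotProduct_mulVec, ← mulVec_transpose]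
    _ = d * (x ⬝ᵥ l) := by rw [hl, smul_dotProduct, smul_eq_mul, dotProduct_comm]

theorem eq_smul_one_of_mulVec_eq_smul {K : Type*} [Field K] [DecidableEq n]
    {A : Matrix n n K} {v : n → n → K} (hv : LinearIndependent K v) {k : K}
    (hAv : ∀ i, A *ᵥ v i = k • v i) : A = k • (1 : Matrix n n K) := by
  have hspan : Submodule.span K (Set.range v) = ⊤ :=
    hv.span_eq_top_of_card_eq_finrank' (Module.finrank_fintype_fun_eq_card K).symm
  refine toLin'.injective (LinearMap.ext_on_range hspan fun i => ?_)
  simp [hAv i]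

end Matrix

theorem fix_three_points_and_line_scalar_identity_general
    (v : Fin 3 → Fin 3 → ℝ) (hv : LinearIndependent ℝ v)
    (l : Fin 3 → ℝ) (hl : ∀ i, v i ⬝ᵥ l ≠ 0)
    (A : Matrix (Fin 3) (Fin 3) ℝ)
    (c : Fin 3 → ℝ) (hAv : ∀ i, A.mulVec (v i) = c i • v i)
    (d : ℝ) (hAl : Aᵀ.mulVec l = d • l) :
    ∃ k : ℝ, A = k • (1 : Matrix (Fin 3) (Fin 3) ℝ) := by
  have hc : ∀ i, c i = d := fun i => eigenvalue_eq_of_transpose_eigenvector (hAv i) hAl (hl i)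
  exact ⟨d, eq_smul_one_of_mulVec_eq_smul hv fun i => hc i ▸ hAv i⟩

/-- an invertible matrix fixing (projectively) three non-collinear
points and fixing (setwise) a line not passing through any of them is a scalar
multiple of the identity: three non-collinear points and an avoiding line form
a complete projective pinning system. -/
theorem fix_three_points_and_line_scalar_identity
    (v : Fin 3 → Fin 3 → ℝ) (hv : LinearIndependent ℝ v)
    (l : Fin 3 → ℝ) (hl : ∀ i, v i ⬝ᵥ l ≠ 0)
    (A : Matrix (Fin 3) (Fin 3) ℝ) (hA : IsUnit A.det)
    (c : Fin 3 → ℝ) (hAv : ∀ i, A.mulVec (v i) = c i • v i)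
    (d : ℝ) (hAl : Aᵀ.mulVec l = d • l) :
    ∃ k : ℝ, A = k • (1 : Matrix (Fin 3) (Fin 3) ℝ) :=
  fix_three_points_and_line_scalar_identity_general v hv l hl A c hAv d hAl
end

section
/- Let u, v ∈ ℝ³ be linearly independent vectors (two distinct projective points) and let l, m ∈ ℝ³ be linearly independent vectors (two distinct projective lines) such that ⟪u, l⟫ ≠ 0, ⟪u, m⟫ ≠ 0, ⟪v, l⟫ ≠ 0 and ⟪v, m⟫ ≠ 0 (neither point lies on either line). Then there exists A ∈ GL(3, ℝ) that is not a scalar multiple of the identity matrix such that A u is a scalar multiple of u, A v is a scalar multiple of v, Aᵀ l is a scalar multiple of l, and Aᵀ m is a scalar multiple of m. That is, requiring two points and two lines to be fixed still leaves a nontrivial projectivity, so two points and two lines never comprise a complete projective pinning system. -/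
/-!
Let `z = u ⨯₃ v` be the line through the two points and `w = l ⨯₃ m` the intersection point of
the two lines. The central collineation `x ↦ x + t (z ⬝ᵥ x) w` with axis `z` and centre `w`
fixes every point of its axis and every line through its centre, so it fixes `u`, `v`, `l`
and `m`; for `t ≠ 0` it is not the identity, and `t` can be chosen so that it is invertible.
-/

open Matrix

section CentralCollineation

variable {R n : Type*} [CommRing R] [DecidableEq n]

def centralCollineation (t : R) (w z : n → R) : Matrix n n R :=
  1 + t • vecMulVec w z

theorem transpose_centralCollineation (t : R) (w z : n → R) :
    (centralCollineation t w z)ᵀ = centralCollineation t z w := by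
  simp [centralCollineation]

theorem centralCollineation_mulVec [Fintype n] (t : R) (w z x : n → R) :
    centralCollineation t w z *ᵥ x = x + (t * (z ⬝ᵥ x)) • w := by
  rw [centralCollineation, add_mulVec, one_mulVec, smul_mulVec, vecMulVec_mulVec, op_smul_eq_smul,
    smul_smul]

theorem centralCollineation_mulVec_of_dotProduct_eq_zero [Fintype n] {t : R} {w z x : n → R}
    (hx : x ⬝ᵥ z = 0) : centralCollineation t w z *ᵥ x = x := by
  rw [centralCollineation_mulVec, dotProduct_comm, hx, mul_zero, zero_smul, add_zero]

theorem transpose_centralCollineation_mulVec_of_dotProduct_eq_zero [Fintype n] {t : R}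
    {w z x : n → R} (hx : x ⬝ᵥ w = 0) : (centralCollineation t w z)ᵀ *ᵥ x = x := by
  rw [transpose_centralCollineation, centralCollineation_mulVec_of_dotProduct_eq_zero hx]

theorem det_centralCollineation [Fintype n] (t : R) (w z : n → R) :
    (centralCollineation t w z).det = 1 + t * (z ⬝ᵥ w) := by
  rw [centralCollineation, ← vecMulVec_smul, vecMulVec_eq Unit,
    det_one_add_replicateCol_mul_replicateRow, smul_dotProduct, smul_eq_mul]

theorem centralCollineation_ne_smul_one [Fintype n] [IsDomain R] {t : R} {w z x : n → R}
    (ht : t ≠ 0) (hw : w ≠ 0) (hz : z ≠ 0) (hx : x ≠ 0) (hxz : x ⬝ᵥ z = 0) (k : R) :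
    centralCollineation t w z ≠ k • 1 := by
  intro hk
  have hfix := centralCollineation_mulVec_of_dotProduct_eq_zero (t := t) (w := w) hxz
  rw [hk, smul_mulVec, one_mulVec] at hfix
  have hk1 : k = 1 := by
    obtain ⟨i, hi⟩ := Function.ne_iff.1 hx
    exact mul_right_cancel₀ hi (by simpa using congrFun hfix i)
  rw [hk1, one_smul, centralCollineation, add_eq_left, smul_eq_zero, vecMulVec_eq_zero] at hk
  tauto

end CentralCollineation

theorem exists_ne_zero_one_add_mul_ne_zero {K : Type*} [Field K] [CharZero K] (s : K) :
    ∃ t : K, t ≠ 0 ∧ 1 + t * s ≠ 0 := by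
  by_cases hs : 1 + s = 0
  · refine ⟨-1, by norm_num, ?_⟩
    rw [eq_neg_of_add_eq_zero_right hs]
    norm_num
  · exact ⟨1, one_ne_zero, by rwa [one_mul]⟩

theorem two_points_two_lines_not_pinning_general
    (u v : Fin 3 → ℝ) (huv : LinearIndependent ℝ ![u, v])
    (l m : Fin 3 → ℝ) (hlm : LinearIndependent ℝ ![l, m]) :
    ∃ A : Matrix (Fin 3) (Fin 3) ℝ, IsUnit A.det ∧
      (¬∃ k : ℝ, A = k • (1 : Matrix (Fin 3) (Fin 3) ℝ)) ∧
      (∃ c : ℝ, A.mulVec u = c • u) ∧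
      (∃ c : ℝ, A.mulVec v = c • v) ∧
      (∃ c : ℝ, Aᵀ.mulVec l = c • l) ∧
      (∃ c : ℝ, Aᵀ.mulVec m = c • m) := by
  obtain ⟨t, ht, hdet⟩ := exists_ne_zero_one_add_mul_ne_zero ((u ⨯₃ v) ⬝ᵥ (l ⨯₃ m))
  have hu : u ≠ 0 := by simpa using huv.ne_zero 0
  refine ⟨centralCollineation t (l ⨯₃ m) (u ⨯₃ v), ?_, ?_, ⟨1, ?_⟩, ⟨1, ?_⟩, ⟨1, ?_⟩, ⟨1, ?_⟩⟩
  · rwa [isUnit_iff_ne_zero, det_centralCollineation]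
  · rintro ⟨k, hk⟩
    exact centralCollineation_ne_smul_one ht (crossProduct_ne_zero_iff_linearIndependent.2 hlm)
      (crossProduct_ne_zero_iff_linearIndependent.2 huv) hu (dot_self_cross u v) k hk
  · exact (centralCollineation_mulVec_of_dotProduct_eq_zero (dot_self_cross u v)).trans
      (one_smul ℝ u).symm
  · exact (centralCollineation_mulVec_of_dotProduct_eq_zero (dot_cross_self u v)).trans
      (one_smul ℝ v).symm
  · exact (transpose_centralCollineation_mulVec_of_dotProduct_eq_zero (dot_self_cross l m)).trans
      (one_smul ℝ l).symm
  · exact (transpose_centralCollineation_mulVec_of_dotProduct_eq_zero (dot_cross_self l m)).trans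
      (one_smul ℝ m).symm

/-- given two distinct projective points and two distinct projective
lines, neither point on either line, there is a projectivity which is not the
identity (not a scalar multiple of the identity matrix) fixing both points and
both lines: two points and two lines never form a complete projective pinning
system. -/
theorem two_points_two_lines_not_pinning
    (u v : Fin 3 → ℝ) (huv : LinearIndependent ℝ ![u, v])
    (l m : Fin 3 → ℝ) (hlm : LinearIndependent ℝ ![l, m])
    (hul : u ⬝ᵥ l ≠ 0) (hum : u ⬝ᵥ m ≠ 0)
    (hvl : v ⬝ᵥ l ≠ 0) (hvm : v ⬝ᵥ m ≠ 0) :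
    ∃ A : Matrix (Fin 3) (Fin 3) ℝ, IsUnit A.det ∧
      (¬∃ k : ℝ, A = k • (1 : Matrix (Fin 3) (Fin 3) ℝ)) ∧
      (∃ c : ℝ, A.mulVec u = c • u) ∧
      (∃ c : ℝ, A.mulVec v = c • v) ∧
      (∃ c : ℝ, Aᵀ.mulVec l = c • l) ∧
      (∃ c : ℝ, Aᵀ.mulVec m = c • m) :=
  two_points_two_lines_not_pinning_general u v huv l m hlm
end

section
/- Let (p, l) be an affine-normalized realization of an incidence structure S = (P, L, I) with pin set Q ⊆ P, and suppose this pinned realization is infinitesimally rigid. Then for every pinned smooth motion (p_t, l_t) of (p, l) and every n ≥ 1, the n-th derivatives at t = 0 vanish: (d/dt)ⁿ p_t i |_{t=0} = 0 for every i ∈ P and (d/dt)ⁿ l_t j |_{t=0} = 0 for every j ∈ L. -/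
open Matrix Finset

private lemma contDiff_iteratedDeriv' {f : ℝ → ℝ} (hf : ContDiff ℝ (⊤ : ℕ∞) f) (k : ℕ) :
    ContDiff ℝ (⊤ : ℕ∞) (iteratedDeriv k f) := by
  have := ContDiff.iterate_deriv k (f := f) hf
  rwa [← iteratedDeriv_eq_iterate] at this

private lemma iteratedDeriv_comp_clm {F G : Type*} [NormedAddCommGroup F] [NormedSpace ℝ F]
    [NormedAddCommGroup G] [NormedSpace ℝ G]
    (g : F →L[ℝ] G) {f : ℝ → F} (hf : ContDiff ℝ (⊤ : ℕ∞) f) (n : ℕ) (x : ℝ) :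
    iteratedDeriv n (fun t => g (f t)) x = g (iteratedDeriv n f x) := by
  rw [iteratedDeriv_eq_iteratedFDeriv, iteratedDeriv_eq_iteratedFDeriv,
    show (fun t => g (f t)) = g ∘ f from rfl, g.iteratedFDeriv_comp_left hf.contDiffAt (by exact_mod_cast le_top)]
  rfl

private lemma iteratedDeriv_add' {f g : ℝ → ℝ} (hf : ContDiff ℝ (⊤ : ℕ∞) f) (hg : ContDiff ℝ (⊤ : ℕ∞) g)
    (n : ℕ) (x : ℝ) :
    iteratedDeriv n (fun t => f t + g t) x = iteratedDeriv n f x + iteratedDeriv n g x := by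
  simp only [iteratedDeriv_eq_iteratedFDeriv]
  rw [show (fun t => f t + g t) = f + g from rfl,
    iteratedFDeriv_add_apply (hf.of_le (by exact_mod_cast le_top)).contDiffAt (hg.of_le (by exact_mod_cast le_top)).contDiffAt]
  rfl

private lemma iteratedDeriv_const'' {F : Type*} [NormedAddCommGroup F] [NormedSpace ℝ F]
    (c : F) {n : ℕ} (hn : n ≠ 0) (x : ℝ) : iteratedDeriv n (fun _ : ℝ => c) x = 0 := by
  rw [iteratedDeriv_eq_iteratedFDeriv, iteratedFDeriv_const_of_ne hn]
  rfl

private lemma choose_sum_aux (a b : ℕ → ℝ) (n : ℕ) :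
    ∑ k ∈ Finset.range (n + 1),
        (n.choose k : ℝ) * (a (k+1) * b (n-k) + a k * b (n+1-k))
      = ∑ k ∈ Finset.range (n + 2), ((n+1).choose k : ℝ) * (a k * b (n+1-k)) := by
  rw [Finset.sum_range_succ' (fun k => ((n+1).choose k : ℝ) * (a k * b (n+1-k))) (n+1)]
  simp only [mul_add, Finset.sum_add_distrib, Nat.succ_sub_succ, Nat.choose_succ_succ,
    Nat.cast_add, add_mul, Nat.choose_zero_right, Nat.cast_one, one_mul, Nat.sub_zero]
  rw [Finset.sum_range_succ (fun k => (n.choose (k+1) : ℝ) * (a (k+1) * b (n-k))) n,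
    Finset.sum_range_succ' (fun k => (n.choose k : ℝ) * (a k * b (n+1-k))) n]
  simp [Nat.choose_succ_self, Nat.succ_sub_succ]
  ring

private lemma leibniz_iteratedDeriv {f g : ℝ → ℝ} (hf : ContDiff ℝ (⊤ : ℕ∞) f) (hg : ContDiff ℝ (⊤ : ℕ∞) g) :
    ∀ n : ℕ, ∀ x : ℝ, iteratedDeriv n (fun t => f t * g t) x
      = ∑ k ∈ Finset.range (n + 1),
          (n.choose k : ℝ) * (iteratedDeriv k f x * iteratedDeriv (n - k) g x) := by
  intro n
  induction n with
  | zero => intro x; simp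
  | succ n ih =>
    intro x
    have Hf : ∀ k (y : ℝ), HasDerivAt (iteratedDeriv k f) (iteratedDeriv (k+1) f y) y := by
      intro k y
      rw [iteratedDeriv_succ]
      exact (((contDiff_iteratedDeriv' hf k).differentiable (by norm_num)) y).hasDerivAt
    have Hg : ∀ k (y : ℝ), HasDerivAt (iteratedDeriv k g) (iteratedDeriv (k+1) g y) y := by
      intro k y
      rw [iteratedDeriv_succ]
      exact (((contDiff_iteratedDeriv' hg k).differentiable (by norm_num)) y).hasDerivAt
    have hsum : iteratedDeriv n (fun t => f t * g t)
        = fun y => ∑ k ∈ Finset.range (n + 1),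
            (n.choose k : ℝ) * (iteratedDeriv k f y * iteratedDeriv (n - k) g y) :=
      funext ih
    have hder : HasDerivAt (fun y => ∑ k ∈ Finset.range (n + 1),
            (n.choose k : ℝ) * (iteratedDeriv k f y * iteratedDeriv (n - k) g y))
        (∑ k ∈ Finset.range (n + 1), (n.choose k : ℝ) *
          (iteratedDeriv (k+1) f x * iteratedDeriv (n-k) g x
            + iteratedDeriv k f x * iteratedDeriv (n-k+1) g x)) x := by
      apply HasDerivAt.fun_sum
      intro k _
      exact (((Hf k x).mul (Hg (n-k) x))).const_mul _
    rw [iteratedDeriv_succ, hsum, hder.deriv]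
    have hnk : ∀ k ∈ Finset.range (n+1), (n.choose k : ℝ) *
          (iteratedDeriv (k+1) f x * iteratedDeriv (n-k) g x
            + iteratedDeriv k f x * iteratedDeriv (n-k+1) g x)
        = (n.choose k : ℝ) *
          (iteratedDeriv (k+1) f x * iteratedDeriv (n-k) g x
            + iteratedDeriv k f x * iteratedDeriv (n+1-k) g x) := by
      intro k hk
      rw [Finset.mem_range] at hk
      rw [Nat.sub_add_comm (Nat.lt_succ_iff.mp hk)]
    rw [Finset.sum_congr rfl hnk]
    exact choose_sum_aux (fun k => iteratedDeriv k f x) (fun k => iteratedDeriv k g x) n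

/-- if a pinned affine-normalized realization of an incidence
structure is infinitesimally rigid, then every pinned smooth motion has all
derivatives of all orders `n ≥ 1` vanishing at `t = 0`, for all points and lines. -/
theorem infRigid_smooth_motion_derivs_vanish
    {P L : Type*} [Fintype P] [Fintype L] (I : Set (P × L))
    (p : P → Fin 2 → ℝ) (l : L → Fin 2 → ℝ)
    (hreal : ∀ ij ∈ I, p ij.1 ⬝ᵥ l ij.2 = -1)
    (Q : Set P)
    (hrigid : ∀ (p' : P → Fin 2 → ℝ) (l' : L → Fin 2 → ℝ),
      (∀ ij ∈ I, p ij.1 ⬝ᵥ l' ij.2 + p' ij.1 ⬝ᵥ l ij.2 = 0) →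
      (∀ i ∈ Q, p' i = 0) → p' = 0 ∧ l' = 0)
    (pt : ℝ → P → Fin 2 → ℝ) (lt : ℝ → L → Fin 2 → ℝ)
    (hsmooth_p : ∀ i, ContDiff ℝ (⊤ : ℕ∞) (fun t => pt t i))
    (hsmooth_l : ∀ j, ContDiff ℝ (⊤ : ℕ∞) (fun t => lt t j))
    (h0p : pt 0 = p) (h0l : lt 0 = l)
    (hmot : ∀ t, ∀ ij ∈ I, pt t ij.1 ⬝ᵥ lt t ij.2 = -1)
    (hpin : ∀ t, ∀ i ∈ Q, pt t i = p i) :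
    ∀ n : ℕ, 1 ≤ n →
      (∀ i, iteratedDeriv n (fun t => pt t i) 0 = 0) ∧
      (∀ j, iteratedDeriv n (fun t => lt t j) 0 = 0) := by
  have hsp : ∀ i, ContDiff ℝ (⊤ : ℕ∞) (fun t => pt t i) :=
    fun i => (hsmooth_p i).of_le (by simp)
  have hsl : ∀ j, ContDiff ℝ (⊤ : ℕ∞) (fun t => lt t j) :=
    fun j => (hsmooth_l j).of_le (by simp)
  have hspc : ∀ i a, ContDiff ℝ (⊤ : ℕ∞) (fun t => pt t i a) := fun i a =>
    ((ContinuousLinearMap.proj a : (Fin 2 → ℝ) →L[ℝ] ℝ).contDiff).comp (hsp i)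
  have hslc : ∀ j a, ContDiff ℝ (⊤ : ℕ∞) (fun t => lt t j a) := fun j a =>
    ((ContinuousLinearMap.proj a : (Fin 2 → ℝ) →L[ℝ] ℝ).contDiff).comp (hsl j)
  intro n
  induction n using Nat.strong_induction_on with
  | _ n ih =>
    intro hn
    have hp'c : ∀ i a, iteratedDeriv n (fun t => pt t i a) 0
        = iteratedDeriv n (fun t => pt t i) 0 a := fun i a =>
      iteratedDeriv_comp_clm (ContinuousLinearMap.proj a) (hsp i) n 0
    have hl'c : ∀ j a, iteratedDeriv n (fun t => lt t j a) 0
        = iteratedDeriv n (fun t => lt t j) 0 a := fun j a =>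
      iteratedDeriv_comp_clm (ContinuousLinearMap.proj a) (hsl j) n 0
    have hlow_p : ∀ k, 1 ≤ k → k < n → ∀ i a,
        iteratedDeriv k (fun t => pt t i a) 0 = 0 := by
      intro k h1 h2 i a
      have := iteratedDeriv_comp_clm (ContinuousLinearMap.proj a) (hsp i) k 0
      rw [show iteratedDeriv k (fun t => (ContinuousLinearMap.proj a : (Fin 2 → ℝ) →L[ℝ] ℝ)
        (pt t i)) 0 = iteratedDeriv k (fun t => pt t i a) 0 from rfl] at this
      rw [this, (ih k h2 h1).1 i]
      rfl
    have hflex : ∀ ij ∈ I,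
        p ij.1 ⬝ᵥ (iteratedDeriv n (fun t => lt t ij.2) 0)
          + (iteratedDeriv n (fun t => pt t ij.1) 0) ⬝ᵥ l ij.2 = 0 := by
      intro ij hij
      have hconst : (fun t => pt t ij.1 ⬝ᵥ lt t ij.2) = fun _ => (-1 : ℝ) :=
        funext fun t => hmot t ij hij
      have h0 : iteratedDeriv n (fun t => pt t ij.1 ⬝ᵥ lt t ij.2) 0 = 0 := by
        rw [hconst]; exact iteratedDeriv_const'' _ (by omega) 0
      have hdot : (fun t => pt t ij.1 ⬝ᵥ lt t ij.2)
          = fun t => pt t ij.1 0 * lt t ij.2 0 + pt t ij.1 1 * lt t ij.2 1 := by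
        funext t; simp [dotProduct, Fin.sum_univ_two]
      rw [hdot, iteratedDeriv_add' ((hspc _ 0).mul (hslc _ 0))
        ((hspc _ 1).mul (hslc _ 1))] at h0
      have key : ∀ a : Fin 2, iteratedDeriv n (fun t => pt t ij.1 a * lt t ij.2 a) 0
          = p ij.1 a * (iteratedDeriv n (fun t => lt t ij.2) 0 a)
            + (iteratedDeriv n (fun t => pt t ij.1) 0 a) * l ij.2 a := by
        intro a
        obtain ⟨m, rfl⟩ : ∃ m, n = m + 1 := ⟨n - 1, by omega⟩
        rw [leibniz_iteratedDeriv (hspc _ a) (hslc _ a) (m + 1) 0,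
          Finset.sum_range_succ, Finset.sum_range_succ']
        have hmid : ∀ k ∈ Finset.range m, ((m+1).choose (k+1) : ℝ) *
            (iteratedDeriv (k+1) (fun t => pt t ij.1 a) 0 *
              iteratedDeriv (m+1-(k+1)) (fun t => lt t ij.2 a) 0) = 0 := by
          intro k hk
          rw [Finset.mem_range] at hk
          rw [hlow_p (k+1) (by omega) (by omega)]
          ring
        rw [Finset.sum_congr rfl hmid]
        have e1 : iteratedDeriv (m+1) (fun t => pt t ij.1 a) 0
            = iteratedDeriv (m+1) (fun t => pt t ij.1) 0 a := hp'c _ a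
        have e2 : iteratedDeriv (m+1) (fun t => lt t ij.2 a) 0
            = iteratedDeriv (m+1) (fun t => lt t ij.2) 0 a := hl'c _ a
        simp only [Finset.sum_const_zero, Nat.choose_self, Nat.choose_zero_right,
          Nat.cast_one, iteratedDeriv_zero, Nat.sub_self, Nat.sub_zero, e1, e2,
          zero_add, one_mul]
        rw [show pt 0 ij.1 a = p ij.1 a from by rw [h0p],
          show lt 0 ij.2 a = l ij.2 a from by rw [h0l]]

      rw [key 0, key 1] at h0
      simp only [dotProduct, Fin.sum_univ_two]
      linarith [h0]
    have hpinz : ∀ i ∈ Q, iteratedDeriv n (fun t => pt t i) 0 = 0 := by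
      intro i hi
      have hc : (fun t => pt t i) = fun _ => p i := funext fun t => hpin t i hi
      rw [hc]
      exact iteratedDeriv_const'' _ (by omega) 0
    obtain ⟨hp0, hl0⟩ := hrigid (fun i => iteratedDeriv n (fun t => pt t i) 0)
      (fun j => iteratedDeriv n (fun t => lt t j) 0) hflex hpinz
    exact ⟨fun i => congrFun hp0 i, fun j => congrFun hl0 j⟩
end

section
/- Let (p, l) be an affine-normalized realization of an incidence structure S = (P, L, I) with pin set Q ⊆ P, and suppose this pinned realization is infinitesimally rigid. Then every pinned analytic motion (p_t, l_t) of (p, l) is constant: p_t = p and l_t = l for all t ∈ ℝ. That is, every infinitesimally rigid projective framework is rigid. -/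
/-!
Differentiate the incidence constraints `⟪p_t i, l_t j⟫ = -1` and the pins `k + 1` times at
`t = 0`. If the derivatives of orders `1, …, k` of `t ↦ p_t` vanish at `0`, Leibniz's rule leaves
only the two extreme terms, so the `(k + 1)`-st derivatives of the motion form a pinned
infinitesimal flex, which vanishes by infinitesimal rigidity. Inductively all derivatives of
positive order vanish at `0`, and an analytic function on `ℝ` with this property is constant.
-/

open Matrix Finset

section IteratedDeriv

variable {𝕜 : Type*} [NontriviallyNormedField 𝕜] {E F : Type*}
  [NormedAddCommGroup E] [NormedSpace 𝕜 E] [NormedAddCommGroup F] [NormedSpace 𝕜 F]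

theorem ContinuousLinearMap.iteratedDeriv_comp_left (L : E →L[𝕜] F) {f : 𝕜 → E} {x : 𝕜}
    {n : ℕ} (hf : ContDiffAt 𝕜 n f x) :
    iteratedDeriv n (fun s => L (f s)) x = L (iteratedDeriv n f x) := by
  simp only [iteratedDeriv_eq_iteratedFDeriv]
  rw [show (fun s => L (f s)) = L ∘ f from rfl, L.iteratedFDeriv_comp_left hf le_rfl]
  rfl

theorem iteratedDeriv_apply_of_contDiffAt {ι : Type*} [Fintype ι] {f : 𝕜 → ι → E} {x : 𝕜}
    {n : ℕ} (hf : ContDiffAt 𝕜 n f x) (c : ι) :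
    iteratedDeriv n (fun s => f s c) x = iteratedDeriv n f x c :=
  (ContinuousLinearMap.proj c).iteratedDeriv_comp_left hf

theorem iteratedDeriv_succ_mul_of_iteratedDeriv_eq_zero {𝔸 : Type*} [NormedRing 𝔸]
    [NormedAlgebra 𝕜 𝔸] {f g : 𝕜 → 𝔸} {x : 𝕜} {k : ℕ}
    (hf : ContDiffAt 𝕜 (k + 1) f x) (hg : ContDiffAt 𝕜 (k + 1) g x)
    (hf0 : ∀ m < k, iteratedDeriv (m + 1) f x = 0) :
    iteratedDeriv (k + 1) (fun s => f s * g s) x =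
      f x * iteratedDeriv (k + 1) g x + iteratedDeriv (k + 1) f x * g x := by
  have hmiddle : ∑ m ∈ range k, ((k + 1).choose (m + 1) : 𝔸) *
      iteratedDeriv (m + 1) f x * iteratedDeriv (k + 1 - (m + 1)) g x = 0 :=
    sum_eq_zero fun m hm => by rw [hf0 m (mem_range.mp hm), mul_zero, zero_mul]
  rw [iteratedDeriv_fun_mul (by exact_mod_cast hf) (by exact_mod_cast hg), sum_range_succ,
    sum_range_succ', hmiddle]
  simp

theorem iteratedDeriv_succ_dotProduct_of_iteratedDeriv_eq_zero {ι : Type*} [Fintype ι]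
    {f g : 𝕜 → ι → 𝕜} {x : 𝕜} {k : ℕ}
    (hf : ContDiffAt 𝕜 (k + 1) f x) (hg : ContDiffAt 𝕜 (k + 1) g x)
    (hf0 : ∀ m < k, iteratedDeriv (m + 1) f x = 0) :
    iteratedDeriv (k + 1) (fun s => f s ⬝ᵥ g s) x =
      f x ⬝ᵥ iteratedDeriv (k + 1) g x + iteratedDeriv (k + 1) f x ⬝ᵥ g x := by
  have hfc (c : ι) : ContDiffAt 𝕜 (k + 1) (fun s => f s c) x := contDiffAt_pi.mp hf c
  have hgc (c : ι) : ContDiffAt 𝕜 (k + 1) (fun s => g s c) x := contDiffAt_pi.mp hg c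
  simp only [dotProduct, ← sum_add_distrib]
  rw [iteratedDeriv_fun_sum fun c _ => (hfc c).mul (hgc c)]
  refine sum_congr rfl fun c _ => ?_
  rw [iteratedDeriv_succ_mul_of_iteratedDeriv_eq_zero (hfc c) (hgc c) fun m hm => ?_,
    iteratedDeriv_apply_of_contDiffAt (f := f) (by exact_mod_cast hf),
    iteratedDeriv_apply_of_contDiffAt (f := g) (by exact_mod_cast hg)]
  rw [iteratedDeriv_apply_of_contDiffAt (hf.of_le (by norm_cast; omega)), hf0 m hm,
    Pi.zero_apply]

theorem eq_of_forall_iteratedDeriv_succ_eq_zero [PreconnectedSpace 𝕜] [CharZero 𝕜]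
    [CompleteSpace E] {f : 𝕜 → E} (hf : ∀ z, AnalyticAt 𝕜 f z) {z₀ : 𝕜}
    (h : ∀ n, iteratedDeriv (n + 1) f z₀ = 0) (z : 𝕜) : f z = f z₀ := by
  have hg (z) : AnalyticAt 𝕜 (fun s => f s - f z₀) z := (hf z).sub analyticAt_const
  have hderiv : ∀ n, iteratedDeriv n (fun s => f s - f z₀) z₀ = 0
    | 0 => by simp
    | n + 1 => by
      rw [iteratedDeriv_fun_sub ((hf z₀).contDiffAt.of_le le_top) contDiffAt_const, h n,
        iteratedDeriv_const, if_neg n.succ_ne_zero, sub_zero]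
  have htop : analyticOrderAt (fun s => f s - f z₀) z₀ = ⊤ :=
    ENat.eq_top_iff_forall_ge.mpr fun n =>
      (natCast_le_analyticOrderAt_iff_iteratedDeriv_eq_zero (hg z₀)).mpr fun i _ => hderiv i
  have hzero := (AnalyticOnNhd.analyticOrderAt_eq_top_iff_eq_zero z₀ hg).mp htop
  exact sub_eq_zero.mp (congrFun hzero z)

end IteratedDeriv

section Incidence

variable {ι P L : Type*} [Fintype ι]

def IsPinnedInfFlex (I : Set (P × L)) (Q : Set P) (p : P → ι → ℝ) (l : L → ι → ℝ)
    (p' : P → ι → ℝ) (l' : L → ι → ℝ) : Prop :=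
  (∀ ij ∈ I, p ij.1 ⬝ᵥ l' ij.2 + p' ij.1 ⬝ᵥ l ij.2 = 0) ∧ ∀ i ∈ Q, p' i = 0

theorem isPinnedInfFlex_iteratedDeriv_succ {I : Set (P × L)} {Q : Set P}
    {pt : ℝ → P → ι → ℝ} {lt : ℝ → L → ι → ℝ} {t₀ : ℝ} {k : ℕ}
    (hp : ∀ i, ContDiffAt ℝ (k + 1) (fun s => pt s i) t₀)
    (hl : ∀ j, ContDiffAt ℝ (k + 1) (fun s => lt s j) t₀)
    (hmot : ∀ t, ∀ ij ∈ I, pt t ij.1 ⬝ᵥ lt t ij.2 = -1)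
    (hpin : ∀ t, ∀ i ∈ Q, pt t i = pt t₀ i)
    (hp0 : ∀ m < k, ∀ i, iteratedDeriv (m + 1) (fun s => pt s i) t₀ = 0) :
    IsPinnedInfFlex I Q (pt t₀) (lt t₀) (fun i => iteratedDeriv (k + 1) (fun s => pt s i) t₀)
      (fun j => iteratedDeriv (k + 1) (fun s => lt s j) t₀) := by
  constructor
  · intro ij hij
    have hconst : (fun s => pt s ij.1 ⬝ᵥ lt s ij.2) = fun _ => -1 :=
      funext fun s => hmot s ij hij
    rw [← iteratedDeriv_succ_dotProduct_of_iteratedDeriv_eq_zero (hp _) (hl _)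
      fun m hm => hp0 m hm _, hconst, iteratedDeriv_const, if_neg k.succ_ne_zero]
  · intro i hi
    have hconst : (fun s => pt s i) = fun _ => pt t₀ i := funext fun s => hpin s i hi
    simp only [hconst, iteratedDeriv_const, if_neg k.succ_ne_zero]

end Incidence

theorem infRigid_implies_rigid_general
    {P L : Type*} (I : Set (P × L))
    (p : P → Fin 2 → ℝ) (l : L → Fin 2 → ℝ)
    (Q : Set P)
    (hrigid : ∀ (p' : P → Fin 2 → ℝ) (l' : L → Fin 2 → ℝ),
      (∀ ij ∈ I, p ij.1 ⬝ᵥ l' ij.2 + p' ij.1 ⬝ᵥ l ij.2 = 0) →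
      (∀ i ∈ Q, p' i = 0) → p' = 0 ∧ l' = 0)
    (pt : ℝ → P → Fin 2 → ℝ) (lt : ℝ → L → Fin 2 → ℝ)
    (han_p : ∀ i, ∀ t : ℝ, AnalyticAt ℝ (fun s => pt s i) t)
    (han_l : ∀ j, ∀ t : ℝ, AnalyticAt ℝ (fun s => lt s j) t)
    (h0p : pt 0 = p) (h0l : lt 0 = l)
    (hmot : ∀ t, ∀ ij ∈ I, pt t ij.1 ⬝ᵥ lt t ij.2 = -1)
    (hpin : ∀ t, ∀ i ∈ Q, pt t i = p i) :
    ∀ t : ℝ, pt t = p ∧ lt t = l := by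
  subst h0p h0l
  have hderiv (k : ℕ) : (∀ i, iteratedDeriv (k + 1) (fun s => pt s i) 0 = 0) ∧
      ∀ j, iteratedDeriv (k + 1) (fun s => lt s j) 0 = 0 := by
    induction k using Nat.strong_induction_on with
    | _ k ih =>
      obtain ⟨hflex, hpinned⟩ := isPinnedInfFlex_iteratedDeriv_succ
        (fun i => (han_p i 0).contDiffAt.of_le le_top)
        (fun j => (han_l j 0).contDiffAt.of_le le_top) hmot hpin fun m hm => (ih m hm).1
      obtain ⟨hp, hl⟩ := hrigid (fun i => iteratedDeriv (k + 1) (fun s => pt s i) 0)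
        (fun j => iteratedDeriv (k + 1) (fun s => lt s j) 0) hflex hpinned
      exact ⟨congrFun hp, congrFun hl⟩
  intro t
  exact ⟨funext fun i =>
      eq_of_forall_iteratedDeriv_succ_eq_zero (han_p i) (fun k => (hderiv k).1 i) t,
    funext fun j =>
      eq_of_forall_iteratedDeriv_succ_eq_zero (han_l j) (fun k => (hderiv k).2 j) t⟩

/-- an infinitesimally rigid pinned affine-normalized realization is
rigid: every pinned real-analytic motion is constant. -/
theorem infRigid_implies_rigid
    {P L : Type*} [Fintype P] [Fintype L] (I : Set (P × L))
    (p : P → Fin 2 → ℝ) (l : L → Fin 2 → ℝ)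
    (hreal : ∀ ij ∈ I, p ij.1 ⬝ᵥ l ij.2 = -1)
    (Q : Set P)
    (hrigid : ∀ (p' : P → Fin 2 → ℝ) (l' : L → Fin 2 → ℝ),
      (∀ ij ∈ I, p ij.1 ⬝ᵥ l' ij.2 + p' ij.1 ⬝ᵥ l ij.2 = 0) →
      (∀ i ∈ Q, p' i = 0) → p' = 0 ∧ l' = 0)
    (pt : ℝ → P → Fin 2 → ℝ) (lt : ℝ → L → Fin 2 → ℝ)
    (han_p : ∀ i, ∀ t : ℝ, AnalyticAt ℝ (fun s => pt s i) t)
    (han_l : ∀ j, ∀ t : ℝ, AnalyticAt ℝ (fun s => lt s j) t)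
    (h0p : pt 0 = p) (h0l : lt 0 = l)
    (hmot : ∀ t, ∀ ij ∈ I, pt t ij.1 ⬝ᵥ lt t ij.2 = -1)
    (hpin : ∀ t, ∀ i ∈ Q, pt t i = p i) :
    ∀ t : ℝ, pt t = p ∧ lt t = l :=
  infRigid_implies_rigid_general I p l Q hrigid pt lt han_p han_l h0p h0l hmot hpin
end

section
/- Let (p, l) be an independent affine-normalized realization of an incidence structure S = (P, L, I). Let i₁, i₂ ∈ P be distinct with p i₁ ≠ p i₂, and let m ∈ ℝ² satisfy ⟪p i₁, m⟫ = -1 and ⟪p i₂, m⟫ = -1 (m is the affine-normalized coordinate vector of the line through the two points), and suppose m ≠ l j for every j ∈ L. Let S' = (P, L', I') be the incidence structure obtained by adjoining a new line j₀ to L with incidences (i₁, j₀) and (i₂, j₀), and extend l by setting l j₀ = m. Then the resulting affine-normalized realization of S' is independent. -/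
/-!
Two distinct points on a line not through the origin are linearly independent, so the only
stress supported on the new line, which has just the two incidences, is zero. A self-stress
of the extension therefore vanishes on the new line, and what remains is a self-stress of
the original realization, hence zero by independence.
-/

open Matrix

theorem linearIndependent_pair_of_dotProduct_eq {ι K : Type*} [Fintype ι] [Field K]
    {x y m : ι → K} (hxy : x ≠ y) (heq : x ⬝ᵥ m = y ⬝ᵥ m) (hne : x ⬝ᵥ m ≠ 0) :
    LinearIndependent K ![x, y] := by
  refine LinearIndependent.pair_iff.mpr fun s t hst => ?_
  have ht : t = -s := by
    have h := congrArg (· ⬝ᵥ m) hst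
    simp only [add_dotProduct, smul_dotProduct, smul_eq_mul, zero_dotProduct, ← heq] at h
    have : (s + t) * (x ⬝ᵥ m) = 0 := by linear_combination h
    linear_combination (mul_eq_zero.mp this).resolve_right hne
  subst ht
  have hs : s • (x - y) = 0 := by rw [smul_sub, sub_eq_add_neg, ← neg_smul, hst]
  have hs0 : s = 0 := (smul_eq_zero.mp hs).resolve_right (sub_ne_zero.mpr hxy)
  exact ⟨hs0, by rw [hs0, neg_zero]⟩

theorem eq_zero_of_sum_smul_eq_zero_of_support_pair {ι K V : Type*} [Fintype ι] [Ring K]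
    [AddCommGroup V] [Module K V] {v : ι → V} {c : ι → K} {a b : ι} (hab : a ≠ b)
    (hv : LinearIndependent K ![v a, v b]) (hc : ∀ i, i ≠ a ∧ i ≠ b → c i = 0)
    (hsum : ∑ i, c i • v i = 0) : c = 0 := by
  rw [Fintype.sum_eq_add a b hab fun i hi => by rw [hc i hi, zero_smul]] at hsum
  obtain ⟨ha, hb⟩ := LinearIndependent.pair_iff.mp hv _ _ hsum
  funext i
  by_cases hia : i = a
  · rw [hia, ha, Pi.zero_apply]
  by_cases hib : i = b
  · rw [hib, hb, Pi.zero_apply]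
  exact hc i ⟨hia, hib⟩

section LineExtension

variable {P L : Type*}

def lineExtension (I : Set (P × L)) (i₁ i₂ : P) : Set (P × Option L) :=
  {ij | ∃ q ∈ I, ij = (q.1, some q.2)} ∪ {(i₁, none), (i₂, none)}

variable {I : Set (P × L)} {i₁ i₂ : P}

@[simp]
theorem mk_some_mem_lineExtension {i : P} {j : L} :
    (i, some j) ∈ lineExtension I i₁ i₂ ↔ (i, j) ∈ I := by
  simp [lineExtension]

@[simp]
theorem mk_none_mem_lineExtension {i : P} :
    (i, none) ∈ lineExtension I i₁ i₂ ↔ i = i₁ ∨ i = i₂ := by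
  simp [lineExtension]

end LineExtension

theorem line_extension_preserves_independence_general
    {P L : Type*} [Fintype P] [Fintype L] (I : Set (P × L))
    (p : P → Fin 2 → ℝ) (l : L → Fin 2 → ℝ)
    (hindep : ∀ ω : P × L → ℝ, (∀ ij ∉ I, ω ij = 0) →
      (∀ j, ∑ i, ω (i, j) • p i = 0) → (∀ i, ∑ j, ω (i, j) • l j = 0) → ω = 0)
    (i₁ i₂ : P) (hne : i₁ ≠ i₂) (hpne : p i₁ ≠ p i₂)
    (m : Fin 2 → ℝ) (hm1 : p i₁ ⬝ᵥ m = -1) (hm2 : p i₂ ⬝ᵥ m = -1) :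
    ∀ ω : P × Option L → ℝ,
      (∀ ij ∉ ({ij : P × Option L | ∃ q ∈ I, ij = (q.1, some q.2)} ∪
        {(i₁, (none : Option L)), (i₂, (none : Option L))}), ω ij = 0) →
      (∀ j : Option L, ∑ i, ω (i, j) • p i = 0) →
      (∀ i, ∑ j : Option L, ω (i, j) • (j.elim m l) = 0) →
      ω = 0 := by
  intro ω hsupp hcol hrow
  have hind : LinearIndependent ℝ ![p i₁, p i₂] :=
    linearIndependent_pair_of_dotProduct_eq hpne (hm1.trans hm2.symm) (by rw [hm1]; norm_num)
  have hnone : (fun i => ω (i, none)) = 0 :=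
    eq_zero_of_sum_smul_eq_zero_of_support_pair hne hind
      (fun i hi => hsupp _ (mk_none_mem_lineExtension.not.mpr (not_or.mpr hi))) (hcol none)
  have hsome : (fun ij : P × L => ω (ij.1, some ij.2)) = 0 := by
    refine hindep _ (fun ij hij => hsupp _ (mk_some_mem_lineExtension.not.mpr hij))
      (fun j => hcol (some j)) (fun i => ?_)
    simpa [Fintype.sum_option, congrFun hnone i] using hrow i
  funext ⟨i, j⟩
  cases j with
  | none => exact congrFun hnone i
  | some j => exact congrFun hsome (i, j)

/-- adjoining to an independent affine-normalized realization a new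
line `m` through two distinct points `i₁, i₂` (a line not already present),
with the two incidences `(i₁, j₀)` and `(i₂, j₀)`, yields an independent
realization. The extended line set is `Option L`, with `none` the new line `j₀`
realized by `m`. -/
theorem line_extension_preserves_independence
    {P L : Type*} [Fintype P] [Fintype L] (I : Set (P × L))
    (p : P → Fin 2 → ℝ) (l : L → Fin 2 → ℝ)
    (hreal : ∀ ij ∈ I, p ij.1 ⬝ᵥ l ij.2 = -1)
    (hindep : ∀ ω : P × L → ℝ, (∀ ij ∉ I, ω ij = 0) →
      (∀ j, ∑ i, ω (i, j) • p i = 0) → (∀ i, ∑ j, ω (i, j) • l j = 0) → ω = 0)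
    (i₁ i₂ : P) (hne : i₁ ≠ i₂) (hpne : p i₁ ≠ p i₂)
    (m : Fin 2 → ℝ) (hm1 : p i₁ ⬝ᵥ m = -1) (hm2 : p i₂ ⬝ᵥ m = -1)
    (hmnew : ∀ j, m ≠ l j) :
    ∀ ω : P × Option L → ℝ,
      (∀ ij ∉ ({ij : P × Option L | ∃ q ∈ I, ij = (q.1, some q.2)} ∪
        {(i₁, (none : Option L)), (i₂, (none : Option L))}), ω ij = 0) →
      (∀ j : Option L, ∑ i, ω (i, j) • p i = 0) →
      (∀ i, ∑ j : Option L, ω (i, j) • (j.elim m l) = 0) →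
      ω = 0 :=
  line_extension_preserves_independence_general I p l hindep i₁ i₂ hne hpne m hm1 hm2
end

section
/- Let (p, l) be an independent affine-normalized realization of an incidence structure S = (P, L, I). Let j₁, j₂ ∈ L be distinct with l j₁ ≠ l j₂, and let q ∈ ℝ² satisfy ⟪q, l j₁⟫ = -1 and ⟪q, l j₂⟫ = -1 (q is the affine-normalized coordinate vector of the intersection point of the two lines), and suppose q ≠ p i for every i ∈ P. Let S' = (P', L, I') be the incidence structure obtained by adjoining a new point i₀ to P with incidences (i₀, j₁) and (i₀, j₂), and extend p by setting p i₀ = q. Then the resulting affine-normalized realization of S' is independent. -/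
open Matrix

/-! Both lines pass through `q`, so `⟪q, l j₁⟫ = ⟪q, l j₂⟫ = -1`; together with `l j₁ ≠ l j₂`
this makes `l j₁, l j₂` linearly independent. The row of a self-stress at the new point is a
combination of these two vectors only, so it vanishes, and what is left is a self-stress of the
original realization, hence zero. -/

section

variable {ι P L K V W : Type*}

theorem linearIndepOn_pair_of_apply_eq [Field K] [AddCommGroup W] [Module K W]
    (φ : W →ₗ[K] K) (v : ι → W) {i j : ι} (hv : v i ≠ v j) (hφ : φ (v i) = φ (v j))
    (hφ₀ : φ (v i) ≠ 0) : LinearIndepOn K v {i, j} := by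
  refine (LinearIndepOn.pair_iff v (ne_of_apply_ne v hv)).2 fun c d hcd => ?_
  have hdc : d = -c := by
    have := congrArg φ hcd
    rw [map_add, map_smul, map_smul, ← hφ, smul_eq_mul, smul_eq_mul, ← add_mul, map_zero,
      mul_eq_zero] at this
    exact eq_neg_of_add_eq_zero_right (this.resolve_right hφ₀)
  have hc : c • (v i - v j) = 0 := by rwa [hdc, neg_smul, ← sub_eq_add_neg, ← smul_sub] at hcd
  have hc0 : c = 0 := (smul_eq_zero.1 hc).resolve_right (sub_ne_zero.2 hv)
  exact ⟨hc0, by rw [hdc, hc0, neg_zero]⟩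

theorem LinearIndepOn.eq_zero_of_sum_smul_eq_zero [Fintype ι] [Ring K] [AddCommGroup W]
    [Module K W] {v : ι → W} {s : Set ι} (hv : LinearIndepOn K v s) {g : ι → K}
    (hg : ∀ i ∉ s, g i = 0) (hsum : ∑ i, g i • v i = 0) : g = 0 := by
  classical
  have hsum' : ∑ i with i ∈ s, g i • v i = 0 := by
    rwa [Finset.sum_filter_of_ne fun i _ hi => by_contra fun his => hi (by simp [hg i his])]
  funext i
  by_cases hi : i ∈ s
  · exact linearIndepOn_iff''.1 hv _ g (by simp) (by simpa using hg) hsum' i (by simpa using hi)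
  · exact hg i hi

/-- `none` is the new point, incident with `j₁` and `j₂`. -/
def pointExtension (I : Set (P × L)) (j₁ j₂ : L) : Set (Option P × L) :=
  {ij | ∃ r ∈ I, ij = (some r.1, r.2)} ∪ {(none, j₁), (none, j₂)}

@[simp]
theorem some_mem_pointExtension {I : Set (P × L)} {j₁ j₂ : L} {i : P} {j : L} :
    (some i, j) ∈ pointExtension I j₁ j₂ ↔ (i, j) ∈ I := by
  simp [pointExtension]

@[simp]
theorem none_mem_pointExtension {I : Set (P × L)} {j₁ j₂ j : L} :
    ((none : Option P), j) ∈ pointExtension I j₁ j₂ ↔ j = j₁ ∨ j = j₂ := by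
  simp [pointExtension]

structure IsSelfStress [Fintype P] [Fintype L] [Semiring K] [AddCommMonoid V] [Module K V]
    [AddCommMonoid W] [Module K W] (I : Set (P × L)) (p : P → V) (l : L → W) (ω : P × L → K) :
    Prop where
  eq_zero_of_notMem : ∀ ij ∉ I, ω ij = 0
  sum_points : ∀ j, ∑ i, ω (i, j) • p i = 0
  sum_lines : ∀ i, ∑ j, ω (i, j) • l j = 0

namespace IsSelfStress

variable [Fintype P] [Fintype L] {I : Set (P × L)} {j₁ j₂ : L} {ω : Option P × L → K}

theorem apply_none_eq_zero [Ring K] [AddCommMonoid V] [Module K V] [AddCommGroup W] [Module K W]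
    {p : Option P → V} {l : L → W} (hω : IsSelfStress (pointExtension I j₁ j₂) p l ω)
    (hl : LinearIndepOn K l {j₁, j₂}) (j : L) : ω (none, j) = 0 :=
  congrFun (hl.eq_zero_of_sum_smul_eq_zero (g := fun j => ω (none, j))
    (fun j hj => hω.eq_zero_of_notMem _ (by simpa using hj)) (hω.sum_lines none)) j

theorem restrict_some [Semiring K] [AddCommMonoid V] [Module K V] [AddCommMonoid W]
    [Module K W] {q : V} {p : P → V} {l : L → W}
    (hω : IsSelfStress (pointExtension I j₁ j₂) (fun i => i.elim q p) l ω)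
    (hnone : ∀ j, ω (none, j) = 0) : IsSelfStress I p l fun ij => ω (some ij.1, ij.2) where
  eq_zero_of_notMem ij hij := hω.eq_zero_of_notMem _ (by simpa using hij)
  sum_points j := by simpa [Fintype.sum_option, hnone] using hω.sum_points j
  sum_lines i := hω.sum_lines (some i)

end IsSelfStress

end

theorem point_extension_preserves_independence_general
    {P L : Type*} [Fintype P] [Fintype L] (I : Set (P × L))
    (p : P → Fin 2 → ℝ) (l : L → Fin 2 → ℝ)
    (hindep : ∀ ω : P × L → ℝ, (∀ ij ∉ I, ω ij = 0) →
      (∀ j, ∑ i, ω (i, j) • p i = 0) → (∀ i, ∑ j, ω (i, j) • l j = 0) → ω = 0)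
    (j₁ j₂ : L) (hlne : l j₁ ≠ l j₂)
    (q : Fin 2 → ℝ) (hq1 : q ⬝ᵥ l j₁ = -1) (hq2 : q ⬝ᵥ l j₂ = -1) :
    ∀ ω : Option P × L → ℝ,
      (∀ ij ∉ ({ij : Option P × L | ∃ r ∈ I, ij = (some r.1, r.2)} ∪
        {((none : Option P), j₁), ((none : Option P), j₂)}), ω ij = 0) →
      (∀ j : L, ∑ i : Option P, ω (i, j) • (i.elim q p) = 0) →
      (∀ i : Option P, ∑ j, ω (i, j) • l j = 0) →
      ω = 0 := by
  intro ω hsupp hcol hrow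
  have hω : IsSelfStress (pointExtension I j₁ j₂) (fun i => i.elim q p) l ω :=
    ⟨hsupp, hcol, hrow⟩
  have hl : LinearIndepOn ℝ l {j₁, j₂} :=
    linearIndepOn_pair_of_apply_eq (dotProductBilin ℝ ℝ q) l hlne (by simp [hq1, hq2])
      (by simp [hq1])
  have hnone := hω.apply_none_eq_zero hl
  obtain ⟨hsupp', hcol', hrow'⟩ := hω.restrict_some hnone
  have hsome := hindep _ hsupp' hcol' hrow'
  funext ⟨i, j⟩
  cases i with
  | none => exact hnone j
  | some i => exact congrFun hsome (i, j)

/-- adjoining to an independent affine-normalized realization a new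
point `q` on two distinct lines `j₁, j₂` (a point not already present), with
the two incidences `(i₀, j₁)` and `(i₀, j₂)`, yields an independent
realization. The extended point set is `Option P`, with `none` the new point
`i₀` realized by `q`. -/
theorem point_extension_preserves_independence
    {P L : Type*} [Fintype P] [Fintype L] (I : Set (P × L))
    (p : P → Fin 2 → ℝ) (l : L → Fin 2 → ℝ)
    (hreal : ∀ ij ∈ I, p ij.1 ⬝ᵥ l ij.2 = -1)
    (hindep : ∀ ω : P × L → ℝ, (∀ ij ∉ I, ω ij = 0) →
      (∀ j, ∑ i, ω (i, j) • p i = 0) → (∀ i, ∑ j, ω (i, j) • l j = 0) → ω = 0)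
    (j₁ j₂ : L) (hne : j₁ ≠ j₂) (hlne : l j₁ ≠ l j₂)
    (q : Fin 2 → ℝ) (hq1 : q ⬝ᵥ l j₁ = -1) (hq2 : q ⬝ᵥ l j₂ = -1)
    (hqnew : ∀ i, q ≠ p i) :
    ∀ ω : Option P × L → ℝ,
      (∀ ij ∉ ({ij : Option P × L | ∃ r ∈ I, ij = (some r.1, r.2)} ∪
        {((none : Option P), j₁), ((none : Option P), j₂)}), ω ij = 0) →
      (∀ j : L, ∑ i : Option P, ω (i, j) • (i.elim q p) = 0) →
      (∀ i : Option P, ∑ j, ω (i, j) • l j = 0) →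
      ω = 0 :=
  point_extension_preserves_independence_general I p l hindep j₁ j₂ hlne q hq1 hq2
end

section
/- For each natural number N there exist an incidence structure S = (P, L, I) and a homogeneous realization (p, l) of S such that: (1) distinct points of P have non-parallel coordinate vectors and distinct lines of L have non-parallel coordinate vectors; (2) every geometric incidence is recorded, i.e. for all i ∈ P and j ∈ L, if ⟪p i, l j⟫ = 0 then (i, j) ∈ I; (3) the realization is independent: its only homogeneous self-stress is zero; (4) the realization is infinitesimally rigid: its space of homogeneous infinitesimal flexes has dimension exactly |P| + |L| + 8; and (5) for all integers n, m with 0 ≤ n ≤ 2^N and 0 ≤ m ≤ 2^N, the vector (n, m, 2^N) ∈ ℝ³ either is a nonzero scalar multiple of p i for some i ∈ P, or satisfies ⟪(n, m, 2^N), l j⟫ = 0 for at least two distinct j ∈ L (every dyadic grid point of level N in the unit square is a point of the configuration or an intersection of at least two of its lines). -/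
/-!
A configuration is *isostatic* when its incidence constraints are independent (every right-hand
side is attained by a flex) and `#incidences + 8 = 2 (#points + #lines)`.  Independence rules out
self-stresses, and rank–nullity then gives a flex space of dimension `#points + #lines + 8`.
Adding a line through exactly two non-proportional points, or dually a point on exactly two
lines, keeps a configuration isostatic: the two new constraints are solved by the new coordinate
vector alone.

Measure in units of `1 / 2 ^ N` and put `B = 2 ^ (N + 1)`.  Start from the points at infinity in
directions `(1, ±1)` and the points `(±B, 0)`, and add the x-axis and the diagonals `x ± y = ±B`.
A node `i` of the x-axis whose neighbours `i ± d` are present is inserted by six moves: the points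
`(i, ±d)` on the diagonals through the neighbours, the vertical line through them, the point
`(i, 0)` on it and on the x-axis, and the two diagonals through `(i, 0)`.  Every earlier point
`(j, e)` has `j` and `j ± e` among the present nodes, so none of the new lines meets it.  After
inserting the nodes of `(-B, B)` by decreasing 2-adic valuation, every grid point `(n, m)` lies
on the diagonals `x + y = n + m` and `x - y = n - m`.
-/

open Matrix

/-- The space of homogeneous infinitesimal flexes of a homogeneous realization
`(p, l)` of an incidence structure with incidence set `I`: pairs `(p', l')`
with `⟪p i, l' j⟫ + ⟪p' i, l j⟫ = 0` for every incidence `(i, j) ∈ I`. -/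
def homFlexSpace {P L : Type*} (I : Set (P × L))
    (p : P → Fin 3 → ℝ) (l : L → Fin 3 → ℝ) :
    Submodule ℝ ((P → Fin 3 → ℝ) × (L → Fin 3 → ℝ)) where
  carrier := {x | ∀ ij ∈ I, p ij.1 ⬝ᵥ x.2 ij.2 + x.1 ij.1 ⬝ᵥ l ij.2 = 0}
  add_mem' := by
    intro a b ha hb ij hij
    have h1 := ha ij hij
    have h2 := hb ij hij
    simp only [Prod.fst_add, Prod.snd_add, Pi.add_apply, dotProduct_add,
      add_dotProduct] at *
    linarith
  zero_mem' := by
    intro ij hij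
    simp
  smul_mem' := by
    intro c a ha ij hij
    have h1 := ha ij hij
    simp only [Prod.smul_fst, Prod.smul_snd, Pi.smul_apply, dotProduct_smul,
      smul_dotProduct, smul_eq_mul] at *
    linear_combination c * h1

open scoped Finset

theorem exists_dotProduct_eq_of_linearIndependent {K m n : Type*} [Field K] [Fintype m]
    [Fintype n] {v : m → n → K} (hv : LinearIndependent K v) (t : m → K) :
    ∃ z : n → K, ∀ i, v i ⬝ᵥ z = t i := by
  have hrange : LinearMap.range (Matrix.of v).mulVecLin = ⊤ :=
    Submodule.eq_top_of_finrank_eq <| by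
      rw [← Matrix.rank, hv.rank_matrix (M := Matrix.of v), Module.finrank_fintype_fun_eq_card]
  obtain ⟨z, hz⟩ := LinearMap.range_eq_top.mp hrange t
  exact ⟨z, fun i => congrFun hz i⟩

section Normalized

variable {K n : Type*} [Field K] {q : K} {k k' : n} {a b : n → K}

theorem ne_zero_of_normalized (hq : q ≠ 0) (ha : a k = q ∨ a k = 0 ∧ a k' = 1) : a ≠ 0 := by
  rintro rfl
  rcases ha with h | ⟨-, h⟩ <;> simp_all [eq_comm]

theorem linearIndependent_pair_of_normalized (hq : q ≠ 0) (ha : a k = q ∨ a k = 0 ∧ a k' = 1)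
    (hb : b k = q ∨ b k = 0 ∧ b k' = 1) (hab : a ≠ b) : LinearIndependent K ![a, b] := by
  refine (LinearIndependent.pair_iff' (ne_zero_of_normalized hq ha)).mpr fun c hc => ?_
  have hk := congrFun hc k
  have hk' := congrFun hc k'
  simp only [Pi.smul_apply, smul_eq_mul] at hk hk'
  have hc1 : c = 1 := by
    rcases ha with ha | ⟨ha, ha'⟩ <;> rcases hb with hb | ⟨hb, hb'⟩
    · rw [ha, hb] at hk; exact (mul_eq_right₀ hq).mp hk
    · rw [ha, hb, mul_eq_zero] at hk
      rw [hb', hk.resolve_right hq, zero_mul] at hk'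
      exact absurd hk' zero_ne_one
    · rw [ha, hb] at hk; simp [hq.symm] at hk
    · rw [ha', hb'] at hk'; simpa using hk'
  exact hab (by rw [← hc, hc1, one_smul])

theorem ne_smul_of_normalized (hq : q ≠ 0) (ha : a k = q ∨ a k = 0 ∧ a k' = 1)
    (hb : b k = q ∨ b k = 0 ∧ b k' = 1) (hab : a ≠ b) (c : K) : a ≠ c • b := by
  intro h
  have hli := linearIndependent_pair_of_normalized hq ha hb hab
  exact one_ne_zero (LinearIndependent.pair_iff.mp hli 1 (-c)
    (by rw [h, one_smul, neg_smul, add_neg_cancel])).1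

end Normalized

section Rigidity

variable {P L : Type*} (I : Set (P × L)) (p : P → Fin 3 → ℝ) (l : L → Fin 3 → ℝ)

def rigidityMap : ((P → Fin 3 → ℝ) × (L → Fin 3 → ℝ)) →ₗ[ℝ] (I → ℝ) where
  toFun x ij := p ij.1.1 ⬝ᵥ x.2 ij.1.2 + x.1 ij.1.1 ⬝ᵥ l ij.1.2
  map_add' x y := by
    ext ij
    simp only [Prod.fst_add, Prod.snd_add, Pi.add_apply, dotProduct_add, add_dotProduct]
    ring
  map_smul' c x := by
    ext ij
    simp only [Prod.smul_fst, Prod.smul_snd, Pi.smul_apply, dotProduct_smul, smul_dotProduct,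
      smul_eq_mul, RingHom.id_apply]
    ring

theorem homFlexSpace_eq_ker_rigidityMap :
    homFlexSpace I p l = LinearMap.ker (rigidityMap I p l) := by
  ext x
  simp [homFlexSpace, rigidityMap, funext_iff]

variable [Fintype P] [Fintype L]

theorem finrank_homFlexSpace_add_card (h : Function.Surjective (rigidityMap I p l)) :
    Module.finrank ℝ (homFlexSpace I p l) + Nat.card I =
      3 * (Fintype.card P + Fintype.card L) := by
  classical
  have := LinearMap.finrank_range_add_finrank_ker (rigidityMap I p l)
  rw [LinearMap.range_eq_top.mpr h, finrank_top, Module.finrank_fintype_fun_eq_card] at this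
  simp only [Module.finrank_prod, Module.finrank_pi_fintype, Module.finrank_self,
    Finset.sum_const, Finset.card_univ, Fintype.card_fin, smul_eq_mul] at this
  rw [homFlexSpace_eq_ker_rigidityMap, Nat.card_eq_fintype_card]
  linarith

theorem sum_mul_flex_eq_zero_of_selfStress {ω : P × L → ℝ}
    (hP : ∀ j, ∑ i, ω (i, j) • p i = 0) (hL : ∀ i, ∑ j, ω (i, j) • l j = 0)
    (x : (P → Fin 3 → ℝ) × (L → Fin 3 → ℝ)) :
    ∑ ij, ω ij * (p ij.1 ⬝ᵥ x.2 ij.2 + x.1 ij.1 ⬝ᵥ l ij.2) = 0 := by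
  have hP' (j : L) : ∑ i, ω (i, j) * (p i ⬝ᵥ x.2 j) = 0 := by
    rw [← zero_dotProduct (x.2 j), ← hP j, sum_dotProduct]
    simp only [smul_dotProduct, smul_eq_mul]
  have hL' (i : P) : ∑ j, ω (i, j) * (x.1 i ⬝ᵥ l j) = 0 := by
    rw [← dotProduct_zero (x.1 i), ← hL i, dotProduct_sum]
    simp only [dotProduct_smul, smul_eq_mul]
  rw [Fintype.sum_prod_type]
  simp only [mul_add, Finset.sum_add_distrib, hL', add_zero]
  rw [Finset.sum_comm]
  simp only [hP', Finset.sum_const_zero]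

theorem eq_zero_of_selfStress (h : Function.Surjective (rigidityMap I p l)) {ω : P × L → ℝ}
    (hω : ∀ ij ∉ I, ω ij = 0) (hP : ∀ j, ∑ i, ω (i, j) • p i = 0)
    (hL : ∀ i, ∑ j, ω (i, j) • l j = 0) : ω = 0 := by
  classical
  funext ij₀
  by_cases hij₀ : ij₀ ∈ I
  · obtain ⟨x, hx⟩ := h (Pi.single ⟨ij₀, hij₀⟩ 1)
    have hsingle (ij : P × L) (hij : ij ∈ I) :
        p ij.1 ⬝ᵥ x.2 ij.2 + x.1 ij.1 ⬝ᵥ l ij.2 = if ij = ij₀ then 1 else 0 := by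
      simpa [rigidityMap, Pi.single_apply, Subtype.ext_iff] using congrFun hx ⟨ij, hij⟩
    have hsum := sum_mul_flex_eq_zero_of_selfStress p l hP hL x
    rw [Finset.sum_eq_single ij₀
      (fun ij _ hne => by by_cases hij : ij ∈ I <;> simp [hsingle, hω, hij, hne]) (by simp),
      hsingle ij₀ hij₀] at hsum
    simpa using hsum
  · exact hω ij₀ hij₀

end Rigidity

namespace Finset

variable {α : Type*} (s : Finset α)

noncomputable def enum (i : Fin #s) : α := s.equivFin.symm i

theorem enum_mem (i : Fin #s) : s.enum i ∈ s := (s.equivFin.symm i).2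

theorem enum_injective : Function.Injective s.enum :=
  Subtype.val_injective.comp s.equivFin.symm.injective

theorem enum_equivFin {a : α} (ha : a ∈ s) : s.enum (s.equivFin ⟨a, ha⟩) = a := by
  simp [enum]

theorem sum_enum {M : Type*} [AddCommMonoid M] (f : α → M) :
    ∑ i, f (s.enum i) = ∑ a ∈ s, f a :=
  (s.equivFin.symm.sum_comp (fun a => f a)).trans (s.sum_coe_sort f)

end Finset

noncomputable def incidenceCount (Ps Ls : Finset (Fin 3 → ℝ)) : ℕ :=
  ∑ a ∈ Ps, ∑ b ∈ Ls, if a ⬝ᵥ b = 0 then 1 else 0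

/-- Flexes are taken as functions on all of `ℝ³`, so that a new point or line only needs a
`Function.update`. -/
structure IsIsostatic (Ps Ls : Finset (Fin 3 → ℝ)) : Prop where
  solvable : ∀ f : (Fin 3 → ℝ) → (Fin 3 → ℝ) → ℝ, ∃ x y : (Fin 3 → ℝ) → Fin 3 → ℝ,
    ∀ a ∈ Ps, ∀ b ∈ Ls, a ⬝ᵥ b = 0 → a ⬝ᵥ y b + x a ⬝ᵥ b = f a b
  card_add : incidenceCount Ps Ls + 8 = 2 * (#Ps + #Ls)

theorem isIsostatic_empty_of_card_eq_four {Ps : Finset (Fin 3 → ℝ)} (h : #Ps = 4) :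
    IsIsostatic Ps ∅ where
  solvable f := ⟨0, 0, by simp⟩
  card_add := by simp [incidenceCount, h]

namespace IsIsostatic

variable {Ps Ls : Finset (Fin 3 → ℝ)}

theorem symm (h : IsIsostatic Ps Ls) : IsIsostatic Ls Ps where
  solvable f := by
    obtain ⟨x, y, hxy⟩ := h.solvable fun a b => f b a
    refine ⟨y, x, fun b hb a ha hba => ?_⟩
    rw [dotProduct_comm] at hba
    rw [← hxy a ha b hb hba, dotProduct_comm b, dotProduct_comm (y b), add_comm]
  card_add := by
    rw [incidenceCount, Finset.sum_comm, add_comm #Ls]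
    simpa only [incidenceCount, dotProduct_comm] using h.card_add

theorem insert_line (h : IsIsostatic Ps Ls) {v a₁ a₂ : Fin 3 → ℝ} (hv : v ∉ Ls)
    (hinc : {a ∈ Ps | a ⬝ᵥ v = 0} = {a₁, a₂}) (ha : LinearIndependent ℝ ![a₁, a₂]) :
    IsIsostatic Ps (insert v Ls) where
  solvable f := by
    classical
    obtain ⟨x, y, hxy⟩ := h.solvable f
    obtain ⟨z, hz⟩ := exists_dotProduct_eq_of_linearIndependent ha
      ![f a₁ v - x a₁ ⬝ᵥ v, f a₂ v - x a₂ ⬝ᵥ v]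
    refine ⟨x, Function.update y v z, fun a ha b hb hab => ?_⟩
    rcases Finset.mem_insert.mp hb with rfl | hb
    · have : a ∈ ({a₁, a₂} : Finset _) := hinc ▸ Finset.mem_filter.mpr ⟨ha, hab⟩
      rcases Finset.mem_insert.mp this with rfl | h2
      · simpa using eq_sub_iff_add_eq.mp (hz 0)
      · rw [Finset.mem_singleton.mp h2]
        simpa using eq_sub_iff_add_eq.mp (hz 1)
    · rw [Function.update_of_ne (ne_of_mem_of_not_mem hb hv)]
      exact hxy a ha b hb hab
  card_add := by
    have h2 : ∑ a ∈ Ps, (if a ⬝ᵥ v = 0 then 1 else 0) = 2 := by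
      rw [← Finset.card_filter, hinc,
        Finset.card_pair (by simpa using ha.injective.ne zero_ne_one)]
    rw [incidenceCount]
    simp only [Finset.sum_insert hv, Finset.sum_add_distrib, h2]
    rw [Finset.card_insert_of_notMem hv]
    have := h.card_add
    rw [incidenceCount] at this
    omega

theorem insert_point (h : IsIsostatic Ps Ls) {w b₁ b₂ : Fin 3 → ℝ} (hw : w ∉ Ps)
    (hinc : {b ∈ Ls | w ⬝ᵥ b = 0} = {b₁, b₂}) (hb : LinearIndependent ℝ ![b₁, b₂]) :
    IsIsostatic (insert w Ps) Ls :=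
  (h.symm.insert_line hw (by simpa only [dotProduct_comm] using hinc) hb).symm

theorem surjective_rigidityMap (h : IsIsostatic Ps Ls) :
    Function.Surjective
      (rigidityMap {ij | Ps.enum ij.1 ⬝ᵥ Ls.enum ij.2 = 0} Ps.enum Ls.enum) := by
  classical
  intro g
  obtain ⟨x, y, hxy⟩ := h.solvable fun a b =>
    if hab : a ∈ Ps ∧ b ∈ Ls ∧ a ⬝ᵥ b = 0 then
      g ⟨(Ps.equivFin ⟨a, hab.1⟩, Ls.equivFin ⟨b, hab.2.1⟩),
        by simpa [Finset.enum_equivFin] using hab.2.2⟩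
    else 0
  refine ⟨(x ∘ Ps.enum, y ∘ Ls.enum), funext fun ij => ?_⟩
  obtain ⟨⟨i, j⟩, hij⟩ := ij
  simp only [rigidityMap, LinearMap.coe_mk, AddHom.coe_mk, Function.comp_apply]
  rw [hxy _ (Ps.enum_mem i) _ (Ls.enum_mem j) hij, dif_pos ⟨Ps.enum_mem i, Ls.enum_mem j, hij⟩]
  simp [Finset.enum]

theorem natCard_incidences :
    Nat.card {ij : Fin #Ps × Fin #Ls | Ps.enum ij.1 ⬝ᵥ Ls.enum ij.2 = 0} =
      incidenceCount Ps Ls := by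
  classical
  rw [Nat.card_eq_fintype_card, Fintype.card_subtype, Finset.card_filter, Fintype.sum_prod_type,
    incidenceCount, ← Ps.sum_enum]
  congr! with i
  exact Ls.sum_enum (fun b => if Ps.enum i ⬝ᵥ b = 0 then 1 else 0)

theorem finrank_homFlexSpace (h : IsIsostatic Ps Ls) :
    Module.finrank ℝ (homFlexSpace {ij | Ps.enum ij.1 ⬝ᵥ Ls.enum ij.2 = 0} Ps.enum Ls.enum) =
      #Ps + #Ls + 8 := by
  have := finrank_homFlexSpace_add_card _ _ _ h.surjective_rigidityMap
  rw [natCard_incidences, Fintype.card_fin, Fintype.card_fin] at this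
  have := h.card_add
  omega

end IsIsostatic

section DyadicConfiguration

variable {q : ℝ} {B : ℤ} {S : Finset ℤ}

/-! In affine coordinates `affinePoint q i d` is the point `(i / q, d / q)`, `affineLine q σ i`
is the line `x + σ y = i / q`, and `idealPoint s` is the point at infinity in direction
`(1, s)`. -/

def idealPoint (s : ℤ) : Fin 3 → ℝ := ![1, s, 0]

def affinePoint (q : ℝ) (i d : ℤ) : Fin 3 → ℝ := ![i, d, q]

def xAxis : Fin 3 → ℝ := ![0, 1, 0]

def affineLine (q : ℝ) (σ i : ℤ) : Fin 3 → ℝ := ![q, σ * q, -i]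

@[simp]
theorem affinePoint_dotProduct_affineLine_eq_zero (hq : q ≠ 0) {i d σ j : ℤ} :
    affinePoint q i d ⬝ᵥ affineLine q σ j = 0 ↔ i + σ * d = j := by
  have : affinePoint q i d ⬝ᵥ affineLine q σ j = q * ((i + σ * d - j : ℤ) : ℝ) := by
    simp [affinePoint, affineLine, dotProduct, Fin.sum_univ_three]; ring
  rw [this, mul_eq_zero, Int.cast_eq_zero, sub_eq_zero, or_iff_right hq]

@[simp]
theorem idealPoint_dotProduct_affineLine_eq_zero (hq : q ≠ 0) {s σ j : ℤ} :
    idealPoint s ⬝ᵥ affineLine q σ j = 0 ↔ s * σ = -1 := by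
  have : idealPoint s ⬝ᵥ affineLine q σ j = q * ((s * σ + 1 : ℤ) : ℝ) := by
    simp [idealPoint, affineLine, dotProduct, Fin.sum_univ_three]; ring
  rw [this, mul_eq_zero, Int.cast_eq_zero, or_iff_right hq]
  omega

@[simp]
theorem affinePoint_dotProduct_xAxis {i d : ℤ} : affinePoint q i d ⬝ᵥ xAxis = d := by
  simp [affinePoint, xAxis, dotProduct, Fin.sum_univ_three]

@[simp]
theorem idealPoint_dotProduct_xAxis {s : ℤ} : idealPoint s ⬝ᵥ xAxis = s := by
  simp [idealPoint, xAxis, dotProduct, Fin.sum_univ_three]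

@[simp]
theorem affinePoint_inj {i d i' d' : ℤ} :
    affinePoint q i d = affinePoint q i' d' ↔ i = i' ∧ d = d' := by
  simp [affinePoint]

@[simp]
theorem idealPoint_inj {s s' : ℤ} : idealPoint s = idealPoint s' ↔ s = s' := by
  simp [idealPoint]

@[simp]
theorem affinePoint_ne_idealPoint (hq : q ≠ 0) {i d s : ℤ} :
    affinePoint q i d ≠ idealPoint s := by
  simp [affinePoint, idealPoint, hq]

@[simp]
theorem idealPoint_ne_affinePoint (hq : q ≠ 0) {i d s : ℤ} :
    idealPoint s ≠ affinePoint q i d :=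
  (affinePoint_ne_idealPoint hq).symm

@[simp]
theorem affineLine_inj (hq : q ≠ 0) {σ i σ' i' : ℤ} :
    affineLine q σ i = affineLine q σ' i' ↔ σ = σ' ∧ i = i' := by
  simp [affineLine, hq]

@[simp]
theorem affineLine_ne_xAxis (hq : q ≠ 0) {σ i : ℤ} : affineLine q σ i ≠ xAxis := by
  simp [affineLine, xAxis, hq]

@[simp]
theorem xAxis_ne_affineLine (hq : q ≠ 0) {σ i : ℤ} : xAxis ≠ affineLine q σ i :=
  (affineLine_ne_xAxis hq).symm

theorem IsIsostatic.insert_affineLine {Ps Ls : Finset (Fin 3 → ℝ)} (hq : q ≠ 0)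
    (h : IsIsostatic Ps Ls) {σ i : ℤ} (hσ : σ = 1 ∨ σ = -1)
    (hA : affinePoint q i 0 ∈ Ps) (hE : idealPoint (-σ) ∈ Ps) (hL : affineLine q σ i ∉ Ls)
    (hPs : ∀ a ∈ Ps, a ⬝ᵥ affineLine q σ i = 0 → a = affinePoint q i 0 ∨ a = idealPoint (-σ)) :
    IsIsostatic Ps (insert (affineLine q σ i) Ls) := by
  refine h.insert_line hL ?_ (linearIndependent_pair_of_normalized hq (k := 2) (k' := 0)
    (a := affinePoint q i 0) (b := idealPoint (-σ)) (Or.inl rfl) (Or.inr ⟨rfl, rfl⟩)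
    (by simp [hq]))
  ext a
  simp only [Finset.mem_filter, Finset.mem_insert, Finset.mem_singleton]
  refine ⟨fun ⟨ha, h0⟩ => hPs a ha h0, ?_⟩
  rintro (rfl | rfl)
  · exact ⟨hA, by simp [hq]⟩
  · refine ⟨hE, ?_⟩
    rw [idealPoint_dotProduct_affineLine_eq_zero hq]
    rcases hσ with rfl | rfl <;> norm_num

def withEnds (B : ℤ) (S : Finset ℤ) : Finset ℤ := insert B (insert (-B) S)

noncomputable def stageLines (q : ℝ) (B : ℤ) (S : Finset ℤ) : Finset (Fin 3 → ℝ) :=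
  insert xAxis (S.image (affineLine q 0) ∪ (withEnds B S).image (affineLine q 1) ∪
    (withEnds B S).image (affineLine q (-1)))

def IsStagePoint (q : ℝ) (B : ℤ) (S : Finset ℤ) (a : Fin 3 → ℝ) : Prop :=
  a = idealPoint 1 ∨ a = idealPoint (-1) ∨ ∃ i d : ℤ, a = affinePoint q i d ∧
    i - d ∈ withEnds B S ∧ i ∈ withEnds B S ∧ i + d ∈ withEnds B S

def IsStage (q : ℝ) (B : ℤ) (S : Finset ℤ) : Prop :=
  ∃ Ps : Finset (Fin 3 → ℝ), IsIsostatic Ps (stageLines q B S) ∧ idealPoint 1 ∈ Ps ∧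
    idealPoint (-1) ∈ Ps ∧ ∀ a ∈ Ps, IsStagePoint q B S a

theorem withEnds_insert (i : ℤ) : withEnds B (insert i S) = insert i (withEnds B S) := by
  ext
  simp only [withEnds, Finset.mem_insert]
  tauto

theorem affineLine_mem_stageLines (hq : q ≠ 0) {σ j : ℤ} :
    affineLine q σ j ∈ stageLines q B S ↔
      σ = 0 ∧ j ∈ S ∨ σ = 1 ∧ j ∈ withEnds B S ∨ σ = -1 ∧ j ∈ withEnds B S := by
  simp [stageLines, hq, and_comm, eq_comm]

theorem stageLines_insert (i : ℤ) :
    insert (affineLine q 1 i) (insert (affineLine q (-1) i) (insert (affineLine q 0 i)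
      (stageLines q B S))) = stageLines q B (insert i S) := by
  ext b
  simp only [stageLines, withEnds_insert, Finset.mem_insert, Finset.mem_union, Finset.mem_image]
  grind

theorem IsStagePoint.mono {S' : Finset ℤ} (h : S ⊆ S') {a : Fin 3 → ℝ}
    (ha : IsStagePoint q B S a) : IsStagePoint q B S' a := by
  have hE : withEnds B S ⊆ withEnds B S' :=
    Finset.insert_subset_insert _ (Finset.insert_subset_insert _ h)
  rcases ha with ha | ha | ⟨i, d, rfl, h1, h2, h3⟩
  · exact Or.inl ha
  · exact Or.inr (Or.inl ha)
  · exact Or.inr (Or.inr ⟨i, d, rfl, hE h1, hE h2, hE h3⟩)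

theorem IsStagePoint.eq_idealPoint_of_dotProduct_eq_zero (hq : q ≠ 0) {a : Fin 3 → ℝ}
    (ha : IsStagePoint q B S a) {σ i : ℤ} (hσ : σ = 0 ∨ σ = 1 ∨ σ = -1)
    (hi : i ∉ withEnds B S) (h0 : a ⬝ᵥ affineLine q σ i = 0) :
    a = idealPoint 1 ∧ σ = -1 ∨ a = idealPoint (-1) ∧ σ = 1 := by
  rcases ha with rfl | rfl | ⟨j, d, rfl, h1, h2, h3⟩
  · simp [hq] at h0 ⊢; omega
  · simp [hq] at h0 ⊢; omega
  · rw [affinePoint_dotProduct_affineLine_eq_zero hq] at h0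
    subst h0
    rcases hσ with rfl | rfl | rfl
    · simp_all
    · simp_all
    · exact absurd (by simpa [sub_eq_add_neg] using h1) hi

theorem eq_of_mem_stageLines_of_dotProduct_eq_zero (hq : q ≠ 0) {b : Fin 3 → ℝ}
    (hb : b ∈ stageLines q B S) {i d : ℤ} (hi : i ∉ withEnds B S)
    (h0 : affinePoint q i d ⬝ᵥ b = 0) :
    b = xAxis ∧ d = 0 ∨ b = affineLine q 1 (i + d) ∧ i + d ∈ withEnds B S ∨
      b = affineLine q (-1) (i - d) ∧ i - d ∈ withEnds B S := by
  simp only [stageLines, Finset.mem_insert, Finset.mem_union, Finset.mem_image] at hb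
  rcases hb with rfl | ⟨⟨j, hj, rfl⟩ | ⟨j, hj, rfl⟩⟩ | ⟨j, hj, rfl⟩
  · simp_all
  all_goals rw [affinePoint_dotProduct_affineLine_eq_zero hq] at h0; subst h0
  · simp_all [withEnds]
  · simp_all
  · simp_all [← sub_eq_add_neg]

theorem filter_stageLines_affinePoint (hq : q ≠ 0) {i d : ℤ} (hi : i ∉ withEnds B S)
    (hd : d ≠ 0) (hl : i - d ∈ withEnds B S) (hr : i + d ∈ withEnds B S) :
    {b ∈ stageLines q B S | affinePoint q i d ⬝ᵥ b = 0} =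
      {affineLine q 1 (i + d), affineLine q (-1) (i - d)} := by
  ext b
  simp only [Finset.mem_filter, Finset.mem_insert, Finset.mem_singleton]
  constructor
  · rintro ⟨hb, h0⟩
    rcases eq_of_mem_stageLines_of_dotProduct_eq_zero hq hb hi h0
      with ⟨-, rfl⟩ | ⟨rfl, -⟩ | ⟨rfl, -⟩
    · exact absurd rfl hd
    · exact Or.inl rfl
    · exact Or.inr rfl
  · rintro (rfl | rfl)
    · exact ⟨(affineLine_mem_stageLines hq).mpr (by simp [hr]), by simp [hq]⟩
    · exact ⟨(affineLine_mem_stageLines hq).mpr (by simp [hl]), by simp [hq]; ring⟩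

theorem filter_stageLines_affinePoint_zero (hq : q ≠ 0) {i : ℤ} (hi : i ∉ withEnds B S) :
    {b ∈ stageLines q B S | affinePoint q i 0 ⬝ᵥ b = 0} = {xAxis} := by
  ext b
  simp only [Finset.mem_filter, Finset.mem_singleton]
  constructor
  · rintro ⟨hb, h0⟩
    rcases eq_of_mem_stageLines_of_dotProduct_eq_zero hq hb hi h0
      with ⟨rfl, -⟩ | ⟨-, h⟩ | ⟨-, h⟩
    · rfl
    all_goals simp [hi] at h
  · rintro rfl
    simp [stageLines]

theorem IsStagePoint.ne_affinePoint (hq : q ≠ 0) {a : Fin 3 → ℝ} (ha : IsStagePoint q B S a)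
    {i : ℤ} (hi : i ∉ withEnds B S) (d : ℤ) : a ≠ affinePoint q i d := by
  rcases ha with rfl | rfl | ⟨j, e, rfl, -, hj, -⟩
  · simp [hq]
  · simp [hq]
  · rw [Ne, affinePoint_inj]
    rintro ⟨rfl, -⟩
    exact hi hj

theorem affineLine_notMem_stageLines (hq : q ≠ 0) {i : ℤ} (hi : i ∉ withEnds B S) (σ : ℤ) :
    affineLine q σ i ∉ stageLines q B S := by
  rw [affineLine_mem_stageLines hq]
  rintro (⟨-, h⟩ | ⟨-, h⟩ | ⟨-, h⟩)
  · exact hi (by simp [withEnds, h])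
  · exact hi h
  · exact hi h

theorem IsIsostatic.insert_vertical {Ps : Finset (Fin 3 → ℝ)} (hq : q ≠ 0)
    (h : IsIsostatic Ps (stageLines q B S)) (hPs : ∀ a ∈ Ps, IsStagePoint q B S a) {i d : ℤ}
    (hi : i ∉ withEnds B S) (hd : d ≠ 0) (hl : i - d ∈ withEnds B S)
    (hr : i + d ∈ withEnds B S) :
    IsIsostatic (insert (affinePoint q i 0) (insert (affinePoint q i (-d))
      (insert (affinePoint q i d) Ps))) (insert (affineLine q 0 i) (stageLines q B S)) := by
  have hnew (e : ℤ) : affinePoint q i e ∉ Ps := fun ha => (hPs _ ha).ne_affinePoint hq hi e rfl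
  have hd' : -d ≠ d := by omega
  have h₁ := h.insert_point (hnew d) (filter_stageLines_affinePoint hq hi hd hl hr)
    (linearIndependent_pair_of_normalized hq (k := 0) (k' := 1) (Or.inl rfl) (Or.inl rfl)
      (by simp [hq]))
  have h₂ := h₁.insert_point (w := affinePoint q i (-d)) (by simp [hnew, hd'])
    (filter_stageLines_affinePoint hq hi (neg_ne_zero.mpr hd) (by simpa using hr)
      (by simpa [← sub_eq_add_neg] using hl))
    (linearIndependent_pair_of_normalized hq (k := 0) (k' := 1) (Or.inl rfl) (Or.inl rfl)
      (by simp [hq]))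
  have hvert : ∀ a ∈ Ps, a ⬝ᵥ affineLine q 0 i ≠ 0 := fun a ha h0 => by
    rcases (hPs a ha).eq_idealPoint_of_dotProduct_eq_zero hq (Or.inl rfl) hi h0
      with ⟨-, h⟩ | ⟨-, h⟩ <;> omega
  have h₃ := h₂.insert_line (a₁ := affinePoint q i (-d)) (a₂ := affinePoint q i d)
    (affineLine_notMem_stageLines hq hi 0)
    (by rw [Finset.filter_insert, Finset.filter_insert, if_pos (by simp [hq]),
      if_pos (by simp [hq]), Finset.filter_eq_empty_iff.mpr hvert, Finset.insert_empty])
    (linearIndependent_pair_of_normalized hq (k := 2) (k' := 0) (Or.inl rfl) (Or.inl rfl)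
      (by simp [hd']))
  exact h₃.insert_point (b₁ := affineLine q 0 i) (b₂ := xAxis) (by simp [hnew, hd, hd.symm])
    (by rw [Finset.filter_insert, if_pos (by simp [hq]), filter_stageLines_affinePoint_zero hq hi])
    (linearIndependent_pair_of_normalized hq (k := 0) (k' := 1) (Or.inl rfl) (Or.inr ⟨rfl, rfl⟩)
      (by simp [hq]))

theorem IsStage.insert_midpoint (hq : q ≠ 0) (h : IsStage q B S) {i d : ℤ}
    (hi : i ∉ withEnds B S) (hd : d ≠ 0) (hl : i - d ∈ withEnds B S)
    (hr : i + d ∈ withEnds B S) : IsStage q B (insert i S) := by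
  obtain ⟨Ps, hiso, hE, hE', hPs⟩ := h
  have hdiag (σ : ℤ) (hσ : σ = 1 ∨ σ = -1) : ∀ a ∈ insert (affinePoint q i 0)
      (insert (affinePoint q i (-d)) (insert (affinePoint q i d) Ps)),
      a ⬝ᵥ affineLine q σ i = 0 → a = affinePoint q i 0 ∨ a = idealPoint (-σ) := by
    intro a ha h0
    simp only [Finset.mem_insert] at ha
    rcases ha with rfl | rfl | rfl | ha
    · exact Or.inl rfl
    · simp [hq] at h0; omega
    · simp [hq] at h0; omega
    · rcases (hPs a ha).eq_idealPoint_of_dotProduct_eq_zero hq (Or.inr hσ) hi h0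
        with ⟨rfl, rfl⟩ | ⟨rfl, rfl⟩ <;> simp
  have hiso' := ((hiso.insert_vertical hq hPs hi hd hl hr).insert_affineLine hq (Or.inr rfl)
    (by simp) (by simp [hE]) (by simp [hq, affineLine_notMem_stageLines hq hi])
    (hdiag _ (Or.inr rfl))).insert_affineLine hq (Or.inl rfl) (by simp) (by simp [hE'])
    (by simp [hq, affineLine_notMem_stageLines hq hi]) (hdiag _ (Or.inl rfl))
  refine ⟨_, stageLines_insert i ▸ hiso', by simp [hE], by simp [hE'], ?_⟩
  have hsub : withEnds B S ⊆ withEnds B (insert i S) := by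
    rw [withEnds_insert]; exact Finset.subset_insert _ _
  have hmem : i ∈ withEnds B (insert i S) := by simp [withEnds_insert]
  intro a ha
  simp only [Finset.mem_insert] at ha
  rcases ha with rfl | rfl | rfl | ha
  · exact Or.inr (Or.inr ⟨i, 0, rfl, by simpa using hmem, hmem, by simpa using hmem⟩)
  · exact Or.inr (Or.inr ⟨i, -d, rfl, by simpa using hsub hr, hmem,
      by simpa [← sub_eq_add_neg] using hsub hl⟩)
  · exact Or.inr (Or.inr ⟨i, d, rfl, hsub hl, hmem, hsub hr⟩)
  · exact (hPs a ha).mono (Finset.subset_insert i S)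

theorem isStage_empty (hq : q ≠ 0) (hB : B ≠ 0) : IsStage q B ∅ := by
  set Ps : Finset (Fin 3 → ℝ) :=
    {idealPoint 1, idealPoint (-1), affinePoint q B 0, affinePoint q (-B) 0} with hPs
  have hB' : -B ≠ B := by omega
  have h₀ : IsIsostatic Ps ∅ := isIsostatic_empty_of_card_eq_four (by simp [hPs, hq, hB'.symm])
  have h₁ := h₀.insert_line (v := xAxis) (a₁ := affinePoint q B 0) (a₂ := affinePoint q (-B) 0)
    (Finset.notMem_empty _) (by simp [hPs, Finset.filter_insert, Finset.filter_singleton])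
    (linearIndependent_pair_of_normalized hq (k := 2) (k' := 0) (Or.inl rfl) (Or.inl rfl)
      (by simp [hB'.symm]))
  have h₂ := h₁.insert_affineLine hq (σ := 1) (i := B) (Or.inl rfl) (by simp [hPs])
    (by simp [hPs]) (by simp [hq]) (by simp [hPs, hq])
  have h₃ := h₂.insert_affineLine hq (σ := -1) (i := B) (Or.inr rfl) (by simp [hPs])
    (by simp [hPs]) (by simp [hq]) (by simp [hPs, hq])
  have h₄ := h₃.insert_affineLine hq (σ := 1) (i := -B) (Or.inl rfl) (by simp [hPs])
    (by simp [hPs]) (by simp [hq, hB']) (by simp [hPs, hq])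
  have h₅ := h₄.insert_affineLine hq (σ := -1) (i := -B) (Or.inr rfl) (by simp [hPs])
    (by simp [hPs]) (by simp [hq, hB']) (by simp [hPs, hq])
  refine ⟨Ps, ?_, by simp [hPs], by simp [hPs], ?_⟩
  · convert h₅ using 1
    ext b
    simp [stageLines, withEnds]
    tauto
  · simp [hPs, IsStagePoint, withEnds]

theorem IsStage.union (hq : q ≠ 0) (h : IsStage q B S) {T : Finset ℤ}
    (hT : ∀ i ∈ T, i ∉ withEnds B S ∧
      ∃ d ≠ 0, i - d ∈ withEnds B S ∧ i + d ∈ withEnds B S) :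
    IsStage q B (S ∪ T) := by
  induction T using Finset.induction_on with
  | empty => simpa using h
  | @insert i T hiT ih =>
    obtain ⟨hi, d, hd, hl, hr⟩ := hT i (Finset.mem_insert_self i T)
    have hsub : withEnds B S ⊆ withEnds B (S ∪ T) :=
      Finset.insert_subset_insert _ (Finset.insert_subset_insert _ Finset.subset_union_left)
    rw [Finset.union_insert]
    refine (ih fun j hj => hT j (Finset.mem_insert_of_mem hj)).insert_midpoint hq ?_ hd
      (hsub hl) (hsub hr)
    simp only [withEnds, Finset.mem_insert, Finset.mem_union] at hi ⊢
    tauto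

noncomputable def dyadicNodes (K v : ℕ) : Finset ℤ :=
  {i ∈ Finset.Ioo (-2 ^ K) (2 ^ K) | 2 ^ v ∣ i}

theorem dvd_sub_add_two_pow_of_not_dvd {v : ℕ} {i : ℤ} (h : 2 ^ v ∣ i)
    (h' : ¬ 2 ^ (v + 1) ∣ i) : 2 ^ (v + 1) ∣ i - 2 ^ v ∧ 2 ^ (v + 1) ∣ i + 2 ^ v := by
  obtain ⟨k, rfl⟩ := h
  obtain ⟨m, rfl⟩ := (Int.not_even_iff_odd (n := k)).mp fun ⟨m, hm⟩ =>
    h' ⟨m, by rw [hm, pow_succ]; ring⟩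
  exact ⟨⟨m, by rw [pow_succ]; ring⟩, ⟨m + 1, by rw [pow_succ]; ring⟩⟩

theorem mem_withEnds_dyadicNodes {K v : ℕ} {i : ℤ} (h : 2 ^ v ∣ i) (hl : -2 ^ K ≤ i)
    (hr : i ≤ 2 ^ K) : i ∈ withEnds (2 ^ K) (dyadicNodes K v) := by
  simp only [withEnds, dyadicNodes, Finset.mem_insert, Finset.mem_filter, Finset.mem_Ioo]
  omega

theorem dyadicNodes_self (K : ℕ) : dyadicNodes K K = {0} := by
  ext i
  simp only [dyadicNodes, Finset.mem_filter, Finset.mem_Ioo, Finset.mem_singleton]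
  refine ⟨fun ⟨hi, hdvd⟩ => Int.eq_zero_of_abs_lt_dvd hdvd (abs_lt.mpr hi), ?_⟩
  rintro rfl
  exact ⟨⟨by simp, by simp⟩, dvd_zero _⟩

theorem exists_neighbours_of_mem_sdiff_dyadicNodes {K v : ℕ} (hv : v < K) {i : ℤ}
    (hi : i ∈ dyadicNodes K v \ dyadicNodes K (v + 1)) :
    i ∉ withEnds (2 ^ K) (dyadicNodes K (v + 1)) ∧ ∃ d ≠ 0,
      i - d ∈ withEnds (2 ^ K) (dyadicNodes K (v + 1)) ∧
      i + d ∈ withEnds (2 ^ K) (dyadicNodes K (v + 1)) := by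
  simp only [dyadicNodes, Finset.mem_sdiff, Finset.mem_filter, Finset.mem_Ioo] at hi
  obtain ⟨⟨⟨hl, hr⟩, hdvd⟩, hndvd⟩ := hi
  replace hndvd : ¬ 2 ^ (v + 1) ∣ i := fun h => hndvd ⟨⟨hl, hr⟩, h⟩
  obtain ⟨h₁, h₂⟩ := dvd_sub_add_two_pow_of_not_dvd hdvd hndvd
  have hvK : (2 : ℤ) ^ v ∣ 2 ^ K := pow_dvd_pow 2 hv.le
  have b₁ : 2 ^ v ≤ 2 ^ K - i := Int.le_of_dvd (by omega) (dvd_sub hvK hdvd)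
  have b₂ : 2 ^ v ≤ 2 ^ K + i := Int.le_of_dvd (by omega) (dvd_add hvK hdvd)
  refine ⟨?_, 2 ^ v, by positivity, mem_withEnds_dyadicNodes h₁ (by omega) (by omega),
    mem_withEnds_dyadicNodes h₂ (by omega) (by omega)⟩
  simp only [withEnds, dyadicNodes, Finset.mem_insert, Finset.mem_filter, Finset.mem_Ioo]
  rintro (h | h | ⟨-, h⟩)
  · omega
  · omega
  · exact hndvd h

theorem isStage_dyadicNodes (hq : q ≠ 0) {K v : ℕ} (hv : v ≤ K) :
    IsStage q (2 ^ K) (dyadicNodes K v) := by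
  induction hv using Nat.decreasingInduction with
  | self =>
    have hK : (0 : ℤ) < 2 ^ K := by positivity
    rw [dyadicNodes_self, ← Finset.empty_union {0}]
    refine (isStage_empty hq hK.ne').union hq fun i hi => ?_
    rw [Finset.mem_singleton.mp hi]
    exact ⟨by simp [withEnds, hK.ne], 2 ^ K, hK.ne', by simp [withEnds], by simp [withEnds]⟩
  | of_succ v hv ih =>
    have hsub : dyadicNodes K (v + 1) ⊆ dyadicNodes K v :=
      Finset.monotone_filter_right _ fun i _ h => (pow_dvd_pow 2 v.le_succ).trans h
    rw [← Finset.union_sdiff_of_subset hsub]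
    exact ih.union hq fun i hi => exists_neighbours_of_mem_sdiff_dyadicNodes hv hi

theorem IsStagePoint.normalized {a : Fin 3 → ℝ} (ha : IsStagePoint q B S a) :
    a 2 = q ∨ a 2 = 0 ∧ a 0 = 1 := by
  rcases ha with rfl | rfl | ⟨i, d, rfl, -⟩
  · exact Or.inr ⟨rfl, rfl⟩
  · exact Or.inr ⟨rfl, rfl⟩
  · exact Or.inl rfl

theorem normalized_of_mem_stageLines {b : Fin 3 → ℝ} (hb : b ∈ stageLines q B S) :
    b 0 = q ∨ b 0 = 0 ∧ b 1 = 1 := by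
  simp only [stageLines, Finset.mem_insert, Finset.mem_union, Finset.mem_image] at hb
  rcases hb with rfl | ⟨⟨j, -, rfl⟩ | ⟨j, -, rfl⟩⟩ | ⟨j, -, rfl⟩
  · exact Or.inr ⟨rfl, rfl⟩
  all_goals exact Or.inl rfl

theorem exists_enum_stageLines_through (hq : q ≠ 0) {i d : ℤ} (hl : i - d ∈ withEnds B S)
    (hr : i + d ∈ withEnds B S) :
    ∃ j j' : Fin #(stageLines q B S), j ≠ j' ∧
      affinePoint q i d ⬝ᵥ (stageLines q B S).enum j = 0 ∧
      affinePoint q i d ⬝ᵥ (stageLines q B S).enum j' = 0 := by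
  have h₁ : affineLine q 1 (i + d) ∈ stageLines q B S :=
    (affineLine_mem_stageLines hq).mpr (by simp [hr])
  have h₂ : affineLine q (-1) (i - d) ∈ stageLines q B S :=
    (affineLine_mem_stageLines hq).mpr (by simp [hl])
  refine ⟨(stageLines q B S).equivFin ⟨_, h₁⟩, (stageLines q B S).equivFin ⟨_, h₂⟩, ?_, ?_, ?_⟩
  · simp [hq]
  · rw [Finset.enum_equivFin]; simp [hq]
  · rw [Finset.enum_equivFin]; simp [hq]; ring

end DyadicConfiguration

/-- for each `N` there is an incidence structure with a homogeneous
realization which records every geometric incidence, is independent, is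
infinitesimally rigid (flex space of dimension `|P| + |L| + 8`), and covers the
dyadic grid of level `N` in the unit square: every point `(n/2^N, m/2^N)` with
`0 ≤ n, m ≤ 2^N` is a point of the configuration or lies on at least two of its
lines. -/
theorem isostatic_dyadic_grid (N : ℕ) :
    ∃ (np nl : ℕ) (I : Set (Fin np × Fin nl))
      (p : Fin np → Fin 3 → ℝ) (l : Fin nl → Fin 3 → ℝ),
      (∀ i, p i ≠ 0) ∧ (∀ j, l j ≠ 0) ∧
      (∀ ij ∈ I, p ij.1 ⬝ᵥ l ij.2 = 0) ∧
      (∀ i i', i ≠ i' → ∀ c : ℝ, p i ≠ c • p i') ∧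
      (∀ j j', j ≠ j' → ∀ c : ℝ, l j ≠ c • l j') ∧
      (∀ i j, p i ⬝ᵥ l j = 0 → (i, j) ∈ I) ∧
      (∀ ω : Fin np × Fin nl → ℝ, (∀ ij ∉ I, ω ij = 0) →
        (∀ j, ∑ i, ω (i, j) • p i = 0) → (∀ i, ∑ j, ω (i, j) • l j = 0) →
        ω = 0) ∧
      Module.finrank ℝ (homFlexSpace I p l) = np + nl + 8 ∧
      (∀ n m : ℕ, n ≤ 2 ^ N → m ≤ 2 ^ N →
        (∃ (i : Fin np) (c : ℝ), c ≠ 0 ∧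
          (![(n : ℝ), (m : ℝ), (2 ^ N : ℝ)] : Fin 3 → ℝ) = c • p i) ∨
        (∃ j j' : Fin nl, j ≠ j' ∧
          (![(n : ℝ), (m : ℝ), (2 ^ N : ℝ)] : Fin 3 → ℝ) ⬝ᵥ l j = 0 ∧
          (![(n : ℝ), (m : ℝ), (2 ^ N : ℝ)] : Fin 3 → ℝ) ⬝ᵥ l j' = 0)) := by
  have hq : (2 : ℝ) ^ N ≠ 0 := by positivity
  obtain ⟨Ps, hiso, -, -, hPs⟩ := isStage_dyadicNodes hq (Nat.zero_le (N + 1))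
  set Ls := stageLines (2 ^ N) (2 ^ (N + 1)) (dyadicNodes (N + 1) 0)
  have hPn (i) := (hPs _ (Ps.enum_mem i)).normalized
  have hLn (j) := normalized_of_mem_stageLines (Ls.enum_mem j)
  refine ⟨#Ps, #Ls, {ij | Ps.enum ij.1 ⬝ᵥ Ls.enum ij.2 = 0}, Ps.enum, Ls.enum,
    fun i => ne_zero_of_normalized hq (hPn i), fun j => ne_zero_of_normalized hq (hLn j),
    fun _ h => h,
    fun i i' h => ne_smul_of_normalized hq (hPn i) (hPn i') (Ps.enum_injective.ne h),
    fun j j' h => ne_smul_of_normalized hq (hLn j) (hLn j') (Ls.enum_injective.ne h),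
    fun _ _ h => h, fun _ => eq_zero_of_selfStress _ _ _ hiso.surjective_rigidityMap,
    hiso.finrank_homFlexSpace, fun n m hn hm => Or.inr ?_⟩
  have hmem {k : ℤ} (hl : -2 ^ (N + 1) ≤ k) (hr : k ≤ 2 ^ (N + 1)) :=
    mem_withEnds_dyadicNodes (v := 0) (by simp) hl hr
  have hn' : (n : ℤ) ≤ 2 ^ N := by exact_mod_cast hn
  have hm' : (m : ℤ) ≤ 2 ^ N := by exact_mod_cast hm
  have h2 : (2 : ℤ) ^ (N + 1) = 2 * 2 ^ N := pow_succ' 2 N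
  simpa [affinePoint] using exists_enum_stageLines_through hq (i := n) (d := m)
    (hmem (by omega) (by omega)) (hmem (by omega) (by omega))
end

section
/- There exist an incidence structure S = (P, L, I), an affine-normalized realization (p, l) of S, and a pin set Q ⊆ P such that: (1) the pinned configuration is rigid — every pinned analytic motion (p_t, l_t) of (p, l) is constant, i.e. p_t = p and l_t = l for all t; and (2) the pinned configuration is not infinitesimally rigid — there exists a pinned infinitesimal flex (p', l') with (p', l') ≠ (0, 0). That is, rigidity does not imply infinitesimal rigidity. -/
open Matrix

/-- Points: 0:(1,0), 1:(1,1), 2:(1,2), 3:(2,2), 4:(0,1) are pinned;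
5:(1,2), 6:(1,2) are free. -/
noncomputable def ppts : Fin 7 → Fin 2 → ℝ := fun i =>
  if i = 0 then ![1,0] else if i = 1 then ![1,1] else if i = 2 then ![1,2]
  else if i = 3 then ![2,2] else if i = 4 then ![0,1] else ![1,2]

/-- Lines: 0: y=2 i.e. (0,-1/2); 1: x-y=-1 i.e. (1,-1); 2,3: x=1 i.e. (-1,0). -/
noncomputable def plns : Fin 4 → Fin 2 → ℝ := fun j =>
  if j = 0 then ![0,-1/2] else if j = 1 then ![1,-1] else ![-1,0]

def pinc : Set (Fin 7 × Fin 4) :=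
  {(2,0),(3,0),(5,0),(2,1),(4,1),(6,1),(0,2),(5,2),(6,2),(1,3),(5,3),(6,3)}

def ppin : Set (Fin 7) := {0,1,2,3,4}

noncomputable def pflexp : Fin 7 → Fin 2 → ℝ := fun i =>
  if i = 5 then ![2,0] else if i = 6 then ![2,2] else 0

noncomputable def pflexl : Fin 4 → Fin 2 → ℝ := fun j =>
  if j = 2 then ![0,1] else if j = 3 then ![-2,2] else 0

/-- there is a pinned affine-normalized realization of an incidence
structure which is rigid (every pinned analytic motion is constant) but not
infinitesimally rigid (it has a nonzero pinned infinitesimal flex). -/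
theorem rigid_not_infinitesimally_rigid :
    ∃ (np nl : ℕ) (I : Set (Fin np × Fin nl))
      (p : Fin np → Fin 2 → ℝ) (l : Fin nl → Fin 2 → ℝ) (Q : Set (Fin np)),
      (∀ ij ∈ I, p ij.1 ⬝ᵥ l ij.2 = -1) ∧
      (∀ (pt : ℝ → Fin np → Fin 2 → ℝ) (lt : ℝ → Fin nl → Fin 2 → ℝ),
        (∀ i, ∀ t : ℝ, AnalyticAt ℝ (fun s => pt s i) t) →
        (∀ j, ∀ t : ℝ, AnalyticAt ℝ (fun s => lt s j) t) →
        pt 0 = p → lt 0 = l →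
        (∀ t, ∀ ij ∈ I, pt t ij.1 ⬝ᵥ lt t ij.2 = -1) →
        (∀ t, ∀ i ∈ Q, pt t i = p i) →
        ∀ t, pt t = p ∧ lt t = l) ∧
      (∃ (p' : Fin np → Fin 2 → ℝ) (l' : Fin nl → Fin 2 → ℝ),
        (∀ ij ∈ I, p ij.1 ⬝ᵥ l' ij.2 + p' ij.1 ⬝ᵥ l ij.2 = 0) ∧
        (∀ i ∈ Q, p' i = 0) ∧ (p', l') ≠ (0, 0)) := by
  refine ⟨7, 4, pinc, ppts, plns, ppin, ?_, ?_, ?_⟩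
  · -- realization
    intro ij hij
    simp only [pinc, Set.mem_insert_iff, Set.mem_singleton_iff] at hij
    rcases hij with h|h|h|h|h|h|h|h|h|h|h|h <;> subst h <;>
      norm_num (config := { decide := true })
        [ppts, plns, dotProduct, Fin.sum_univ_two]
  · -- rigidity
    intro pt lt _ _ _ _ hC hQ t
    -- pinned points
    have hp0 : pt t 0 = ppts 0 := hQ t 0 (by simp [ppin])
    have hp1 : pt t 1 = ppts 1 := hQ t 1 (by simp [ppin])
    have hp2 : pt t 2 = ppts 2 := hQ t 2 (by simp [ppin])
    have hp3 : pt t 3 = ppts 3 := hQ t 3 (by simp [ppin])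
    have hp4 : pt t 4 = ppts 4 := hQ t 4 (by simp [ppin])
    -- the twelve incidence equations
    have e1 := hC t (2,0) (by simp [pinc])
    have e2 := hC t (3,0) (by simp [pinc])
    have e3 := hC t (5,0) (by simp [pinc])
    have e4 := hC t (2,1) (by simp [pinc])
    have e5 := hC t (4,1) (by simp [pinc])
    have e6 := hC t (6,1) (by simp [pinc])
    have e7 := hC t (0,2) (by simp [pinc])
    have e8 := hC t (5,2) (by simp [pinc])
    have e9 := hC t (6,2) (by simp [pinc])
    have e10 := hC t (1,3) (by simp [pinc])
    have e11 := hC t (5,3) (by simp [pinc])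
    have e12 := hC t (6,3) (by simp [pinc])
    simp only [] at e1 e2 e3 e4 e5 e6 e7 e8 e9 e10 e11 e12
    rw [hp2] at e1 e4
    rw [hp3] at e2
    rw [hp4] at e5
    rw [hp0] at e7
    rw [hp1] at e10
    simp only [dotProduct, Fin.sum_univ_two] at e1 e2 e3 e4 e5 e6 e7 e8 e9 e10 e11 e12
    norm_num (config := { decide := true }) [ppts] at e1 e2 e4 e5 e7 e10
    -- scalar names
    -- A = lt t 0, B = lt t 1, C = lt t 2, D = lt t 3, u = pt t 5, v = pt t 6
    have hA0 : lt t 0 0 = 0 := by linarith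
    have hA1 : lt t 0 1 = -1/2 := by linarith
    have hB1 : lt t 1 1 = -1 := by linarith
    have hB0 : lt t 1 0 = 1 := by linarith
    have hC0 : lt t 2 0 = -1 := by linarith
    have hu1 : pt t 5 1 = 2 := by
      rw [hA0, hA1] at e3; linarith
    have hv1 : pt t 6 1 = pt t 6 0 + 1 := by
      rw [hB0, hB1] at e6; linarith
    have hD0 : lt t 3 0 = -1 - lt t 3 1 := by linarith
    have hD1 : lt t 3 1 = pt t 6 0 - 1 := by
      rw [hD0, hv1] at e12; linear_combination e12
    rw [hC0, hu1] at e8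
    rw [hC0, hv1] at e9
    rw [hD0, hD1, hu1] at e11
    have huv : pt t 5 0 = pt t 6 0 := by
      linear_combination 2*e9 - (pt t 6 0 + 1)*e8 + e11
    have hsq : (pt t 5 0 - 1)^2 = 0 := by
      linear_combination (-1)*e11 + (pt t 5 0 - 2)*huv
    have hu0 : pt t 5 0 = 1 := by
      have h0 := sub_eq_zero.mp (sq_eq_zero_iff.mp hsq)
      linarith
    have hv0 : pt t 6 0 = 1 := by linarith [huv]
    have hv1' : pt t 6 1 = 2 := by rw [hv1, hv0]; norm_num
    have hC1 : lt t 2 1 = 0 := by rw [hu0] at e8; linarith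
    have hD1' : lt t 3 1 = 0 := by rw [hv0] at hD1; linarith
    have hD0' : lt t 3 0 = -1 := by rw [hD0, hD1']; norm_num
    constructor
    · funext i
      fin_cases i
      · exact hp0
      · exact hp1
      · exact hp2
      · exact hp3
      · exact hp4
      · funext j
        fin_cases j <;>
          norm_num (config := { decide := true }) [ppts] <;>
          first
            | exact hu0
            | exact hu1
      · funext j
        fin_cases j <;>
          norm_num (config := { decide := true }) [ppts] <;>
          first
            | exact hv0
            | exact hv1'
    · funext j
      fin_cases j <;> funext k <;> fin_cases k <;>
        norm_num (config := { decide := true }) [plns] <;>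
        first
          | exact hA0
          | linarith
          | exact hB0
          | exact hB1
          | exact hC0
          | exact hC1
          | exact hD0'
          | exact hD1'
  · -- nonzero infinitesimal flex
    refine ⟨pflexp, pflexl, ?_, ?_, ?_⟩
    · intro ij hij
      simp only [pinc, Set.mem_insert_iff, Set.mem_singleton_iff] at hij
      rcases hij with h|h|h|h|h|h|h|h|h|h|h|h <;> subst h <;>
        norm_num (config := { decide := true })
          [ppts, plns, pflexp, pflexl, dotProduct, Fin.sum_univ_two]
    · intro i hi
      simp only [ppin, Set.mem_insert_iff, Set.mem_singleton_iff] at hi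
      rcases hi with h|h|h|h|h <;> subst h <;>
        norm_num (config := { decide := true }) [pflexp]
    · intro h
      have h1 : pflexp = 0 := congrArg Prod.fst h
      have h2 : pflexp 5 0 = 0 := by rw [h1]; rfl
      norm_num (config := { decide := true }) [pflexp] at h2
end

section
/- Let (p, l) be an affine-normalized realization of an incidence structure S = (P, L, I) with pin set Q ⊆ P, and suppose this pinned realization is second-order rigid. Then for every pinned smooth motion (p_t, l_t) of (p, l) and every n ≥ 1, the n-th derivatives at t = 0 vanish: (d/dt)ⁿ p_t i |_{t=0} = 0 for every i ∈ P and (d/dt)ⁿ l_t j |_{t=0} = 0 for every j ∈ L. -/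
open Matrix


lemma itd_zero_fn {F : Type*} [NormedAddCommGroup F] [NormedSpace ℝ F] (n : ℕ) :
    iteratedDeriv n (fun _ : ℝ => (0 : F)) = fun _ => 0 := by
  induction n with
  | zero => simp [iteratedDeriv_zero]
  | succ n ih => rw [iteratedDeriv_succ, ih]; funext x; simp

lemma itd_const_fn {F : Type*} [NormedAddCommGroup F] [NormedSpace ℝ F] (n : ℕ) (hn : 1 ≤ n)
    (c : F) : iteratedDeriv n (fun _ : ℝ => c) = fun _ => 0 := by
  obtain ⟨m, rfl⟩ := Nat.exists_eq_add_of_le hn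
  rw [show 1 + m = m + 1 by omega, iteratedDeriv_succ',
    show deriv (fun _ : ℝ => c) = fun _ : ℝ => (0 : F) from funext fun x => deriv_const x c,
    itd_zero_fn]

lemma itd_apply {f : ℝ → Fin 2 → ℝ} (hf : ContDiff ℝ (⊤ : ℕ∞) f) (n : ℕ) (x : ℝ) (k : Fin 2) :
    iteratedDeriv n (fun t => f t k) x = iteratedDeriv n f x k := by
  have h := (ContinuousLinearMap.proj (R := ℝ) (φ := fun _ : Fin 2 => ℝ) k).iteratedFDeriv_comp_left
    (hf.contDiffAt (x := x)) (i := n) (by exact_mod_cast le_top)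
  have heq : (fun t => f t k)
      = (ContinuousLinearMap.proj (R := ℝ) (φ := fun _ : Fin 2 => ℝ) k) ∘ f := rfl
  rw [heq, iteratedDeriv_eq_iteratedFDeriv, iteratedDeriv_eq_iteratedFDeriv, h]
  rfl

lemma pascal_sum (A B : ℕ → ℝ) (n : ℕ) :
    ∑ m ∈ Finset.range (n + 1),
        (n.choose m : ℝ) * (A (m + 1) * B (n - m) + A m * B (n - m + 1))
      = ∑ m ∈ Finset.range (n + 2), ((n + 1).choose m : ℝ) * (A m * B (n + 1 - m)) := by
  have expand : ∑ m ∈ Finset.range (n + 1),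
      (n.choose m : ℝ) * (A (m + 1) * B (n - m) + A m * B (n - m + 1))
      = (∑ m ∈ Finset.range (n + 1), (n.choose m : ℝ) * (A (m + 1) * B (n - m)))
        + ∑ m ∈ Finset.range (n + 1), (n.choose m : ℝ) * (A m * B (n + 1 - m)) := by
    rw [← Finset.sum_add_distrib]
    refine Finset.sum_congr rfl fun m hm => ?_
    have hm' := Finset.mem_range.mp hm
    have : n - m + 1 = n + 1 - m := by omega
    rw [this]; ring
  rw [expand]
  rw [Finset.sum_range_succ' (fun m => ((n + 1).choose m : ℝ) * (A m * B (n + 1 - m))) (n + 1)]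
  have rhs1 : ∑ m ∈ Finset.range (n + 1),
      ((n + 1).choose (m + 1) : ℝ) * (A (m + 1) * B (n + 1 - (m + 1)))
      = (∑ m ∈ Finset.range (n + 1), (n.choose m : ℝ) * (A (m + 1) * B (n - m)))
        + ∑ m ∈ Finset.range (n + 1), (n.choose (m + 1) : ℝ) * (A (m + 1) * B (n - m)) := by
    rw [← Finset.sum_add_distrib]
    refine Finset.sum_congr rfl fun m hm => ?_
    have h1 : n + 1 - (m + 1) = n - m := by omega
    rw [h1, Nat.choose_succ_succ, Nat.cast_add]; ring
  rw [rhs1]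
  have rhs2 : ∑ m ∈ Finset.range (n + 1), (n.choose m : ℝ) * (A m * B (n + 1 - m))
      = (∑ m ∈ Finset.range (n + 1), (n.choose (m + 1) : ℝ) * (A (m + 1) * B (n - m)))
        + ((n + 1).choose 0 : ℝ) * (A 0 * B (n + 1 - 0)) := by
    rw [Finset.sum_range_succ' (fun m => (n.choose m : ℝ) * (A m * B (n + 1 - m))) n]
    rw [Finset.sum_range_succ (fun m => (n.choose (m + 1) : ℝ) * (A (m + 1) * B (n - m))) n]
    simp only [Nat.choose_succ_self, Nat.cast_zero, zero_mul, add_zero,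
      Nat.choose_zero_right, Nat.cast_one, Nat.sub_zero]
    refine congrArg₂ (· + ·) (Finset.sum_congr rfl fun m hm => ?_) rfl
    have : n + 1 - (m + 1) = n - m := by omega
    rw [this]
  rw [rhs2]; ring

lemma itd_mul {f g : ℝ → ℝ} (hf : ContDiff ℝ (⊤ : ℕ∞) f) (hg : ContDiff ℝ (⊤ : ℕ∞) g) (n : ℕ) :
    iteratedDeriv n (fun x => f x * g x) = fun x =>
      ∑ m ∈ Finset.range (n + 1),
        (n.choose m : ℝ) * (iteratedDeriv m f x * iteratedDeriv (n - m) g x) := by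
  have hdf : ∀ m : ℕ, Differentiable ℝ (iteratedDeriv m f) := fun m => by
    rw [iteratedDeriv_eq_iterate]
    exact (hf.iterate_deriv m).differentiable (by simp)
  have hdg : ∀ m : ℕ, Differentiable ℝ (iteratedDeriv m g) := fun m => by
    rw [iteratedDeriv_eq_iterate]
    exact (hg.iterate_deriv m).differentiable (by simp)
  induction n with
  | zero => funext x; simp [iteratedDeriv_zero]
  | succ n ih =>
    rw [iteratedDeriv_succ, ih]
    funext x
    have hterm : ∀ m ∈ Finset.range (n + 1), HasDerivAt
        (fun y => (n.choose m : ℝ) * (iteratedDeriv m f y * iteratedDeriv (n - m) g y))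
        ((n.choose m : ℝ) * (iteratedDeriv (m + 1) f x * iteratedDeriv (n - m) g x
          + iteratedDeriv m f x * iteratedDeriv (n - m + 1) g x)) x := by
      intro m _
      have h1 : HasDerivAt (iteratedDeriv m f) (iteratedDeriv (m + 1) f x) x := by
        rw [iteratedDeriv_succ]; exact ((hdf m) x).hasDerivAt
      have h2 : HasDerivAt (iteratedDeriv (n - m) g) (iteratedDeriv (n - m + 1) g x) x := by
        rw [iteratedDeriv_succ]; exact ((hdg (n - m)) x).hasDerivAt
      exact (h1.mul h2).const_mul _
    rw [(HasDerivAt.fun_sum hterm).deriv]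
    exact pascal_sum (fun m => iteratedDeriv m f x) (fun m => iteratedDeriv m g x) n

lemma itd_dot {f g : ℝ → Fin 2 → ℝ} (hf : ContDiff ℝ (⊤ : ℕ∞) f) (hg : ContDiff ℝ (⊤ : ℕ∞) g)
    (c : ℝ) (hc : ∀ t, f t ⬝ᵥ g t = c) (N : ℕ) (hN : 1 ≤ N) :
    ∑ m ∈ Finset.range (N + 1),
      (N.choose m : ℝ) * (iteratedDeriv m f 0 ⬝ᵥ iteratedDeriv (N - m) g 0) = 0 := by
  have hfk : ∀ k : Fin 2, ContDiff ℝ (⊤ : ℕ∞) (fun t => f t k) := fun k =>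
    (ContinuousLinearMap.proj (R := ℝ) (φ := fun _ : Fin 2 => ℝ) k).contDiff.comp hf
  have hgk : ∀ k : Fin 2, ContDiff ℝ (⊤ : ℕ∞) (fun t => g t k) := fun k =>
    (ContinuousLinearMap.proj (R := ℝ) (φ := fun _ : Fin 2 => ℝ) k).contDiff.comp hg
  have h0 : iteratedDeriv N (fun t => f t ⬝ᵥ g t) 0 = 0 := by
    have he : (fun t => f t ⬝ᵥ g t) = fun _ : ℝ => c := funext hc
    rw [he, itd_const_fn N hN]
  have hfun : (fun t => f t ⬝ᵥ g t)
      = (fun t => f t 0 * g t 0) + fun t => f t 1 * g t 1 := by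
    funext t; simp [dotProduct, Fin.sum_univ_two]
  have hsplit : iteratedDeriv N (fun t => f t ⬝ᵥ g t) 0
      = iteratedDeriv N (fun t => f t 0 * g t 0) 0
        + iteratedDeriv N (fun t => f t 1 * g t 1) 0 := by
    rw [hfun, ← iteratedDerivWithin_univ, ← iteratedDerivWithin_univ, ← iteratedDerivWithin_univ]
    exact iteratedDerivWithin_add (Set.mem_univ 0) uniqueDiffOn_univ
      (((hfk 0).mul (hgk 0)).of_le (by exact_mod_cast le_top)).contDiffWithinAt
      (((hfk 1).mul (hgk 1)).of_le (by exact_mod_cast le_top)).contDiffWithinAt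
  rw [h0, itd_mul (hfk 0) (hgk 0), itd_mul (hfk 1) (hgk 1)] at hsplit
  simp only [itd_apply hf, itd_apply hg] at hsplit
  calc ∑ m ∈ Finset.range (N + 1),
        (N.choose m : ℝ) * (iteratedDeriv m f 0 ⬝ᵥ iteratedDeriv (N - m) g 0)
      = (∑ m ∈ Finset.range (N + 1),
          (N.choose m : ℝ) * (iteratedDeriv m f 0 0 * iteratedDeriv (N - m) g 0 0))
        + ∑ m ∈ Finset.range (N + 1),
          (N.choose m : ℝ) * (iteratedDeriv m f 0 1 * iteratedDeriv (N - m) g 0 1) := by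
        rw [← Finset.sum_add_distrib]
        refine Finset.sum_congr rfl fun m _ => ?_
        simp [dotProduct, Fin.sum_univ_two]; ring
    _ = 0 := hsplit.symm

/-- if a pinned affine-normalized realization of an incidence
structure is second-order rigid, then every pinned smooth motion has all
derivatives of all orders `n ≥ 1` vanishing at `t = 0`, for all points and lines. -/
theorem secondOrderRigid_smooth_motion_derivs_vanish
    {P L : Type*} [Fintype P] [Fintype L] (I : Set (P × L))
    (p : P → Fin 2 → ℝ) (l : L → Fin 2 → ℝ)
    (hreal : ∀ ij ∈ I, p ij.1 ⬝ᵥ l ij.2 = -1)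
    (Q : Set P)
    (hsor : ∀ (p' p'' : P → Fin 2 → ℝ) (l' l'' : L → Fin 2 → ℝ),
      (∀ ij ∈ I, p ij.1 ⬝ᵥ l' ij.2 + p' ij.1 ⬝ᵥ l ij.2 = 0) →
      (∀ ij ∈ I, p ij.1 ⬝ᵥ l'' ij.2 + 2 * (p' ij.1 ⬝ᵥ l' ij.2) +
        p'' ij.1 ⬝ᵥ l ij.2 = 0) →
      (∀ i ∈ Q, p' i = 0) → (∀ i ∈ Q, p'' i = 0) →
      p' = 0 ∧ l' = 0)
    (pt : ℝ → P → Fin 2 → ℝ) (lt : ℝ → L → Fin 2 → ℝ)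
    (hsmooth_p : ∀ i, ContDiff ℝ (⊤ : ℕ∞) (fun t => pt t i))
    (hsmooth_l : ∀ j, ContDiff ℝ (⊤ : ℕ∞) (fun t => lt t j))
    (h0p : pt 0 = p) (h0l : lt 0 = l)
    (hmot : ∀ t, ∀ ij ∈ I, pt t ij.1 ⬝ᵥ lt t ij.2 = -1)
    (hpin : ∀ t, ∀ i ∈ Q, pt t i = p i) :
    ∀ n : ℕ, 1 ≤ n →
      (∀ i, iteratedDeriv n (fun t => pt t i) 0 = 0) ∧
      (∀ j, iteratedDeriv n (fun t => lt t j) 0 = 0) := by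
  intro n
  induction n using Nat.strong_induction_on with
  | _ n IH =>
  intro hn
  have hp : ∀ i, ContDiff ℝ (⊤ : ℕ∞) (fun t => pt t i) := fun i => (hsmooth_p i).of_le (by simp)
  have hl : ∀ j, ContDiff ℝ (⊤ : ℕ∞) (fun t => lt t j) := fun j => (hsmooth_l j).of_le (by simp)
  set Dp : ℕ → P → Fin 2 → ℝ := fun m i => iteratedDeriv m (fun t => pt t i) 0 with hDp
  set Dl : ℕ → L → Fin 2 → ℝ := fun m j => iteratedDeriv m (fun t => lt t j) 0 with hDl
  have prevp : ∀ m, 1 ≤ m → m < n → ∀ i, Dp m i = 0 := fun m h1 h2 i => (IH m h2 h1).1 i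
  have prevl : ∀ m, 1 ≤ m → m < n → ∀ j, Dl m j = 0 := fun m h1 h2 j => (IH m h2 h1).2 j
  have Dp0 : ∀ i, Dp 0 i = p i := fun i => by
    simp only [hDp, iteratedDeriv_zero]; exact congrFun h0p i
  have Dl0 : ∀ j, Dl 0 j = l j := fun j => by
    simp only [hDl, iteratedDeriv_zero]; exact congrFun h0l j
  have gen : ∀ N, 1 ≤ N → ∀ ij ∈ I, ∑ m ∈ Finset.range (N + 1),
      (N.choose m : ℝ) * (Dp m ij.1 ⬝ᵥ Dl (N - m) ij.2) = 0 :=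
    fun N hN ij hij => itd_dot (hp ij.1) (hl ij.2) (-1) (fun t => hmot t ij hij) N hN
  -- first-order equation
  have eq1 : ∀ ij ∈ I, p ij.1 ⬝ᵥ Dl n ij.2 + Dp n ij.1 ⬝ᵥ l ij.2 = 0 := by
    intro ij hij
    have h := gen n hn ij hij
    have hsub : ({0, n} : Finset ℕ) ⊆ Finset.range (n + 1) := by
      intro x hx; simp only [Finset.mem_insert, Finset.mem_singleton] at hx
      rcases hx with rfl | rfl <;> simp [Finset.mem_range] <;> omega
    rw [← Finset.sum_subset hsub (fun m hm hm' => ?_)] at h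
    · rw [Finset.sum_pair (show (0 : ℕ) ≠ n by omega)] at h
      simpa [Dp0, Dl0, Nat.sub_self] using h
    · simp only [Finset.mem_insert, Finset.mem_singleton, not_or] at hm'
      have hm1 : 1 ≤ m := by omega
      have hm2 : m < n := by
        have := Finset.mem_range.mp hm; omega
      rw [prevp m hm1 hm2, zero_dotProduct, mul_zero]
  -- second-order equation
  have eq2 : ∀ ij ∈ I, p ij.1 ⬝ᵥ Dl (2 * n) ij.2
      + ((2 * n).choose n : ℝ) * (Dp n ij.1 ⬝ᵥ Dl n ij.2)
      + Dp (2 * n) ij.1 ⬝ᵥ l ij.2 = 0 := by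
    intro ij hij
    have h := gen (2 * n) (by omega) ij hij
    have hsub : ({0, n, 2 * n} : Finset ℕ) ⊆ Finset.range (2 * n + 1) := by
      intro x hx
      simp only [Finset.mem_insert, Finset.mem_singleton] at hx
      rcases hx with rfl | rfl | rfl <;> simp [Finset.mem_range] <;> omega
    rw [← Finset.sum_subset hsub (fun m hm hm' => ?_)] at h
    · have h0n : (0 : ℕ) ∉ ({n, 2 * n} : Finset ℕ) := by simp; omega
      have hn2n : n ∉ ({2 * n} : Finset ℕ) := by simp; omega
      rw [show ({0, n, 2 * n} : Finset ℕ) = insert 0 (insert n {2 * n}) from rfl,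
        Finset.sum_insert h0n, Finset.sum_insert hn2n, Finset.sum_singleton] at h
      rw [show 2 * n - n = n from by omega] at h
      simp only [Dp0, Dl0, Nat.sub_self, Nat.sub_zero, Nat.choose_self, Nat.choose_zero_right,
        Nat.cast_one, one_mul] at h
      linarith [h]
    · simp only [Finset.mem_insert, Finset.mem_singleton, not_or] at hm'
      have hmr := Finset.mem_range.mp hm
      rcases lt_or_gt_of_ne hm'.2.1 with hlt | hgt
      · have hm1 : 1 ≤ m := by omega
        rw [prevp m hm1 hlt, zero_dotProduct, mul_zero]
      · have h1 : 1 ≤ 2 * n - m := by omega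
        have h2 : 2 * n - m < n := by omega
        rw [prevl (2 * n - m) h1 h2, dotProduct_zero, mul_zero]
  set C : ℝ := ((2 * n).choose n : ℝ) with hC
  have hCpos : (0 : ℝ) < C := by
    rw [hC]; exact_mod_cast Nat.choose_pos (by omega : n ≤ 2 * n)
  have hCne : C ≠ 0 := ne_of_gt hCpos
  obtain ⟨hp', hl'⟩ := hsor (fun i => Dp n i) (fun i => (2 / C) • Dp (2 * n) i)
      (fun j => Dl n j) (fun j => (2 / C) • Dl (2 * n) j)
      (fun ij hij => eq1 ij hij)
      (fun ij hij => by
        have h2 := eq2 ij hij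
        have h3 : p ij.1 ⬝ᵥ Dl (2 * n) ij.2 + Dp (2 * n) ij.1 ⬝ᵥ l ij.2
            = -(C * (Dp n ij.1 ⬝ᵥ Dl n ij.2)) := by linarith
        rw [dotProduct_smul, smul_dotProduct]
        simp only [smul_eq_mul]
        calc 2 / C * (p ij.1 ⬝ᵥ Dl (2 * n) ij.2) + 2 * (Dp n ij.1 ⬝ᵥ Dl n ij.2)
              + 2 / C * (Dp (2 * n) ij.1 ⬝ᵥ l ij.2)
            = 2 / C * (p ij.1 ⬝ᵥ Dl (2 * n) ij.2 + Dp (2 * n) ij.1 ⬝ᵥ l ij.2)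
              + 2 * (Dp n ij.1 ⬝ᵥ Dl n ij.2) := by ring
          _ = 2 / C * (-(C * (Dp n ij.1 ⬝ᵥ Dl n ij.2)))
              + 2 * (Dp n ij.1 ⬝ᵥ Dl n ij.2) := by rw [h3]
          _ = 0 := by field_simp; ring
      )
      (fun i hi => by
        have hconst : (fun t => pt t i) = fun _ : ℝ => p i := funext fun t => hpin t i hi
        show Dp n i = 0
        simp only [hDp, hconst, itd_const_fn n hn])
      (fun i hi => by
        have hconst : (fun t => pt t i) = fun _ : ℝ => p i := funext fun t => hpin t i hi
        show (2 / C) • Dp (2 * n) i = 0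
        simp only [hDp, hconst, itd_const_fn (2 * n) (show 1 ≤ 2 * n by omega)]
        simp)
  exact ⟨fun i => congrFun hp' i, fun j => congrFun hl' j⟩
end

section
/- Let (p, l) be an affine-normalized realization of an incidence structure S = (P, L, I) with pin set Q ⊆ P, and suppose this pinned realization is second-order rigid. Then every pinned analytic motion (p_t, l_t) of (p, l) is constant: p_t = p and l_t = l for all t ∈ ℝ. That is, every second-order rigid projective configuration is rigid. -/
/-!
Let `a n` and `b n` be the `n`-th derivatives at `0` of the points and lines of the motion. By
Leibniz's rule, differentiating the incidence `⟪p_t i, l_t j⟫ = -1` `n` times gives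
`∑ₖ (n choose k) ⟪a k i, b (n - k) j⟫ = 0` for `n ≥ 1`. Once the coefficients of orders
`1, …, m - 1` are known to vanish, the identity of order `m` says that `(a m, b m)` is a
first-order flex, and the identity of order `2m` reads
`⟪p, b (2m)⟫ + (2m choose m) ⟪a m, b m⟫ + ⟪a (2m), l⟫ = 0`, so after rescaling the order-`2m`
coefficients it extends to a pinned second-order flex. Second-order rigidity forces
`a m = 0` and `b m = 0`; hence all derivatives of positive order vanish at `0`, and analyticity
makes the motion constant.
-/

open Matrix Finset

section BinomialDot

variable {ι R : Type*} [Fintype ι] [CommSemiring R]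

def binomialDot (u v : ℕ → ι → R) (n : ℕ) : R :=
  ∑ i ∈ range (n + 1), n.choose i * (u i ⬝ᵥ v (n - i))

theorem binomialDot_eq_of_forall_lt {u v : ℕ → ι → R} {m : ℕ} (hm : m ≠ 0)
    (hu : ∀ i, 0 < i → i < m → u i = 0) :
    binomialDot u v m = u 0 ⬝ᵥ v m + u m ⬝ᵥ v 0 := by
  rw [binomialDot, sum_eq_add_of_mem 0 m (by simp) (by simp) (Ne.symm hm)]
  · simp
  · intro i hi ⟨hi0, him⟩
    rw [hu i (Nat.pos_of_ne_zero hi0) (by grind), zero_dotProduct, mul_zero]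

theorem binomialDot_two_mul {u v : ℕ → ι → R} {m : ℕ} (hm : m ≠ 0)
    (hu : ∀ i, 0 < i → i < m → u i = 0) (hv : ∀ i, 0 < i → i < m → v i = 0) :
    binomialDot u v (2 * m) =
      u 0 ⬝ᵥ v (2 * m) + (2 * m).choose m * (u m ⬝ᵥ v m) + u (2 * m) ⬝ᵥ v 0 := by
  rw [binomialDot, sum_range_succ,
    sum_eq_add_of_mem 0 m (by simp; omega) (by simp; omega) (Ne.symm hm)]
  · simp [show 2 * m - m = m by omega]
  · intro i hi ⟨hi0, him⟩
    rcases lt_or_gt_of_ne him with hlt | hgt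
    · rw [hu i (Nat.pos_of_ne_zero hi0) hlt, zero_dotProduct, mul_zero]
    · rw [hv (2 * m - i) (by grind) (by omega), dotProduct_zero, mul_zero]

end BinomialDot

section IteratedDeriv

variable {𝕜 : Type*} [NontriviallyNormedField 𝕜]

theorem iteratedDeriv_apply {ι : Type*} [Fintype ι] {f : 𝕜 → ι → 𝕜} {x : 𝕜} {n : ℕ}
    (hf : ContDiffAt 𝕜 n f x) (c : ι) :
    iteratedDeriv n (fun s => f s c) x = iteratedDeriv n f x c := by
  have := (ContinuousLinearMap.proj (R := 𝕜) (φ := fun _ : ι => 𝕜) c).iteratedFDeriv_comp_left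
    hf le_rfl
  simp only [iteratedDeriv_eq_iteratedFDeriv]
  exact congrFun (congrArg DFunLike.coe this) _

theorem iteratedDeriv_dotProduct {ι : Type*} [Fintype ι] {f g : 𝕜 → ι → 𝕜} {x : 𝕜} {n : ℕ}
    (hf : ContDiffAt 𝕜 n f x) (hg : ContDiffAt 𝕜 n g x) :
    iteratedDeriv n (fun s => f s ⬝ᵥ g s) x =
      binomialDot (fun i => iteratedDeriv i f x) (fun i => iteratedDeriv i g x) n := by
  have hfc : ∀ c, ContDiffAt 𝕜 n (fun s => f s c) x := fun c => contDiffAt_pi.1 hf c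
  have hgc : ∀ c, ContDiffAt 𝕜 n (fun s => g s c) x := fun c => contDiffAt_pi.1 hg c
  simp only [binomialDot, dotProduct, mul_sum]
  rw [iteratedDeriv_fun_sum fun c _ => (hfc c).mul (hgc c), sum_comm]
  refine sum_congr rfl fun c _ => ?_
  rw [iteratedDeriv_fun_mul (hfc c) (hgc c)]
  refine sum_congr rfl fun i hi => ?_
  have hin : i ≤ n := Nat.lt_succ_iff.1 (mem_range.1 hi)
  rw [iteratedDeriv_apply (hf.of_le (by exact_mod_cast hin)) c,
    iteratedDeriv_apply (hg.of_le (by exact_mod_cast n.sub_le i)) c, mul_assoc]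

theorem apply_eq_of_forall_iteratedDeriv_eq_zero [CharZero 𝕜] [PreconnectedSpace 𝕜]
    {E : Type*} [NormedAddCommGroup E] [NormedSpace 𝕜 E] [CompleteSpace E]
    {f : 𝕜 → E} (hf : ∀ z, AnalyticAt 𝕜 f z) {z₀ : 𝕜}
    (h : ∀ n ≠ 0, iteratedDeriv n f z₀ = 0) (z : 𝕜) : f z = f z₀ := by
  have hg : ∀ z, AnalyticAt 𝕜 (fun z => f z - f z₀) z := fun z => (hf z).sub analyticAt_const
  have htop : analyticOrderAt (fun z => f z - f z₀) z₀ = ⊤ := by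
    refine ENat.eq_of_forall_natCast_le_iff fun n => ?_
    simp only [le_top, iff_true]
    refine (natCast_le_analyticOrderAt_iff_iteratedDeriv_eq_zero (hg z₀)).2 fun i _ => ?_
    rcases eq_or_ne i 0 with rfl | hi
    · simp
    · rw [iteratedDeriv_fun_sub (hf z₀).contDiffAt contDiffAt_const, h i hi, iteratedDeriv_const,
        if_neg hi, sub_zero]
  exact sub_eq_zero.1
    (congrFun ((AnalyticOnNhd.analyticOrderAt_eq_top_iff_eq_zero z₀ hg).1 htop) z)

end IteratedDeriv

section Rigidity

variable {P L : Type*} {d : ℕ}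

def IsSecondOrderRigid (I : Set (P × L)) (p : P → Fin d → ℝ) (l : L → Fin d → ℝ)
    (Q : Set P) : Prop :=
  ∀ (p' p'' : P → Fin d → ℝ) (l' l'' : L → Fin d → ℝ),
    (∀ ij ∈ I, p ij.1 ⬝ᵥ l' ij.2 + p' ij.1 ⬝ᵥ l ij.2 = 0) →
    (∀ ij ∈ I, p ij.1 ⬝ᵥ l'' ij.2 + 2 * (p' ij.1 ⬝ᵥ l' ij.2) + p'' ij.1 ⬝ᵥ l ij.2 = 0) →
    (∀ i ∈ Q, p' i = 0) → (∀ i ∈ Q, p'' i = 0) →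
    p' = 0 ∧ l' = 0

theorem IsSecondOrderRigid.coeff_eq_zero {I : Set (P × L)} {Q : Set P}
    {a : ℕ → P → Fin d → ℝ} {b : ℕ → L → Fin d → ℝ}
    (hrig : IsSecondOrderRigid I (a 0) (b 0) Q)
    (hinc : ∀ ij ∈ I, ∀ n ≠ 0, binomialDot (fun k => a k ij.1) (fun k => b k ij.2) n = 0)
    (hpin : ∀ i ∈ Q, ∀ n ≠ 0, a n i = 0) (n : ℕ) (hn : n ≠ 0) : a n = 0 ∧ b n = 0 := by
  induction n using Nat.strong_induction_on with
  | _ m ih =>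
  have ha : ∀ i, 0 < i → i < m → a i = 0 := fun i hi him => (ih i him hi.ne').1
  have hb : ∀ i, 0 < i → i < m → b i = 0 := fun i hi him => (ih i him hi.ne').2
  have hfirst : ∀ ij ∈ I, a 0 ij.1 ⬝ᵥ b m ij.2 + a m ij.1 ⬝ᵥ b 0 ij.2 = 0 := fun ij hij =>
    (binomialDot_eq_of_forall_lt hn fun i hi him => congrFun (ha i hi him) ij.1).symm.trans
      (hinc ij hij m hn)
  set C : ℝ := ((2 * m).choose m : ℝ)
  have hC : C ≠ 0 := Nat.cast_ne_zero.2 (Nat.choose_pos (by omega)).ne'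
  have hsecond : ∀ ij ∈ I, a 0 ij.1 ⬝ᵥ b (2 * m) ij.2 + C * (a m ij.1 ⬝ᵥ b m ij.2)
      + a (2 * m) ij.1 ⬝ᵥ b 0 ij.2 = 0 := fun ij hij => by
    rw [← binomialDot_two_mul hn (fun i hi him => congrFun (ha i hi him) ij.1)
      (fun i hi him => congrFun (hb i hi him) ij.2)]
    exact hinc ij hij (2 * m) (by omega)
  -- The order-`2m` identity, rescaled by `2 / C`, is the second-order flex condition.
  refine hrig (a m) ((2 / C) • a (2 * m)) (b m) ((2 / C) • b (2 * m)) hfirst (fun ij hij => ?_)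
    (fun i hi => hpin i hi m hn) (fun i hi => by simp [hpin i hi (2 * m) (by omega)])
  simp only [Pi.smul_apply, dotProduct_smul, smul_dotProduct, smul_eq_mul]
  linear_combination (2 / C) * hsecond ij hij - (a m ij.1 ⬝ᵥ b m ij.2) * div_mul_cancel₀ 2 hC

end Rigidity

theorem secondOrderRigid_implies_rigid_general
    {P L : Type*} (I : Set (P × L))
    (p : P → Fin 2 → ℝ) (l : L → Fin 2 → ℝ)
    (Q : Set P)
    (hsor : ∀ (p' p'' : P → Fin 2 → ℝ) (l' l'' : L → Fin 2 → ℝ),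
      (∀ ij ∈ I, p ij.1 ⬝ᵥ l' ij.2 + p' ij.1 ⬝ᵥ l ij.2 = 0) →
      (∀ ij ∈ I, p ij.1 ⬝ᵥ l'' ij.2 + 2 * (p' ij.1 ⬝ᵥ l' ij.2) +
        p'' ij.1 ⬝ᵥ l ij.2 = 0) →
      (∀ i ∈ Q, p' i = 0) → (∀ i ∈ Q, p'' i = 0) →
      p' = 0 ∧ l' = 0)
    (pt : ℝ → P → Fin 2 → ℝ) (lt : ℝ → L → Fin 2 → ℝ)
    (han_p : ∀ i, ∀ t : ℝ, AnalyticAt ℝ (fun s => pt s i) t)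
    (han_l : ∀ j, ∀ t : ℝ, AnalyticAt ℝ (fun s => lt s j) t)
    (h0p : pt 0 = p) (h0l : lt 0 = l)
    (hmot : ∀ t, ∀ ij ∈ I, pt t ij.1 ⬝ᵥ lt t ij.2 = -1)
    (hpin : ∀ t, ∀ i ∈ Q, pt t i = p i) :
    ∀ t : ℝ, pt t = p ∧ lt t = l := by
  set a : ℕ → P → Fin 2 → ℝ := fun n i => iteratedDeriv n (fun s => pt s i) 0
  set b : ℕ → L → Fin 2 → ℝ := fun n j => iteratedDeriv n (fun s => lt s j) 0
  have ha0 : a 0 = p := by simp only [a, iteratedDeriv_zero, h0p]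
  have hb0 : b 0 = l := by simp only [b, iteratedDeriv_zero, h0l]
  have hrig : IsSecondOrderRigid I (a 0) (b 0) Q := ha0 ▸ hb0 ▸ hsor
  have hinc : ∀ ij ∈ I, ∀ n ≠ 0, binomialDot (fun k => a k ij.1) (fun k => b k ij.2) n = 0 := by
    intro ij hij n hn
    rw [← iteratedDeriv_dotProduct (han_p ij.1 0).contDiffAt (han_l ij.2 0).contDiffAt,
      funext fun t => hmot t ij hij, iteratedDeriv_const, if_neg hn]
  have hpinned : ∀ i ∈ Q, ∀ n ≠ 0, a n i = 0 := by
    intro i hi n hn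
    simp only [a, funext fun t => hpin t i hi, iteratedDeriv_const, if_neg hn]
  have hcoeff := hrig.coeff_eq_zero hinc hpinned
  refine fun t => ⟨funext fun i => ?_, funext fun j => ?_⟩
  · rw [apply_eq_of_forall_iteratedDeriv_eq_zero (han_p i)
      (fun n hn => congrFun (hcoeff n hn).1 i) t, h0p]
  · rw [apply_eq_of_forall_iteratedDeriv_eq_zero (han_l j)
      (fun n hn => congrFun (hcoeff n hn).2 j) t, h0l]

/-- a second-order rigid pinned affine-normalized realization is
rigid: every pinned real-analytic motion is constant. -/
theorem secondOrderRigid_implies_rigid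
    {P L : Type*} [Fintype P] [Fintype L] (I : Set (P × L))
    (p : P → Fin 2 → ℝ) (l : L → Fin 2 → ℝ)
    (hreal : ∀ ij ∈ I, p ij.1 ⬝ᵥ l ij.2 = -1)
    (Q : Set P)
    (hsor : ∀ (p' p'' : P → Fin 2 → ℝ) (l' l'' : L → Fin 2 → ℝ),
      (∀ ij ∈ I, p ij.1 ⬝ᵥ l' ij.2 + p' ij.1 ⬝ᵥ l ij.2 = 0) →
      (∀ ij ∈ I, p ij.1 ⬝ᵥ l'' ij.2 + 2 * (p' ij.1 ⬝ᵥ l' ij.2) +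
        p'' ij.1 ⬝ᵥ l ij.2 = 0) →
      (∀ i ∈ Q, p' i = 0) → (∀ i ∈ Q, p'' i = 0) →
      p' = 0 ∧ l' = 0)
    (pt : ℝ → P → Fin 2 → ℝ) (lt : ℝ → L → Fin 2 → ℝ)
    (han_p : ∀ i, ∀ t : ℝ, AnalyticAt ℝ (fun s => pt s i) t)
    (han_l : ∀ j, ∀ t : ℝ, AnalyticAt ℝ (fun s => lt s j) t)
    (h0p : pt 0 = p) (h0l : lt 0 = l)
    (hmot : ∀ t, ∀ ij ∈ I, pt t ij.1 ⬝ᵥ lt t ij.2 = -1)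
    (hpin : ∀ t, ∀ i ∈ Q, pt t i = p i) :
    ∀ t : ℝ, pt t = p ∧ lt t = l :=
  secondOrderRigid_implies_rigid_general I p l Q hsor pt lt han_p han_l h0p h0l hmot hpin
end

section
/- There exist an incidence structure S = (P, L, I), an affine-normalized realization (p, l) of S, and a pin set Q ⊆ P such that the pinned realization is second-order rigid but not infinitesimally rigid: every pinned second-order flex (p', p'', l', l'') has p' = 0 and l' = 0, yet there exists a pinned infinitesimal flex (p', l') with (p', l') ≠ (0, 0). -/
open Matrix

private lemma dot_inc (a b c d : ℝ) (h : a * c + b * d = -1) :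
    (![a,b] : Fin 2 → ℝ) ⬝ᵥ ![c,d] = -1 := by
  simpa [dotProduct, Fin.sum_univ_two] using h

private lemma dot_flex (a b c d : ℝ) (u v : Fin 2 → ℝ)
    (h : (![a,b] : Fin 2 → ℝ) ⬝ᵥ u + v ⬝ᵥ ![c,d] = 0) :
    a * u 0 + b * u 1 + c * v 0 + d * v 1 = 0 := by
  simp only [dotProduct, Fin.sum_univ_two, Matrix.cons_val_zero, Matrix.cons_val_one,
    Matrix.head_cons] at h
  linarith

private lemma dot_flex2 (a b c d : ℝ) (u w x y : Fin 2 → ℝ)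
    (h : (![a,b] : Fin 2 → ℝ) ⬝ᵥ u + 2 * (x ⬝ᵥ w) + y ⬝ᵥ ![c,d] = 0) :
    a * u 0 + b * u 1 + 2 * (x 0 * w 0 + x 1 * w 1) + c * y 0 + d * y 1 = 0 := by
  simp only [dotProduct, Fin.sum_univ_two, Matrix.cons_val_zero, Matrix.cons_val_one,
    Matrix.head_cons] at h
  linarith

private lemma dot_flex_mk (a b c d : ℝ) (u v : Fin 2 → ℝ)
    (h : a * u 0 + b * u 1 + c * v 0 + d * v 1 = 0) :
    (![a,b] : Fin 2 → ℝ) ⬝ᵥ u + v ⬝ᵥ ![c,d] = 0 := by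
  simp only [dotProduct, Fin.sum_univ_two, Matrix.cons_val_zero, Matrix.cons_val_one,
    Matrix.head_cons]
  linarith

set_option maxHeartbeats 2000000 in
/-- there is a pinned affine-normalized realization of an incidence
structure which is second-order rigid (every pinned second-order flex has zero
first-order part) but not infinitesimally rigid (it has a nonzero pinned
infinitesimal flex). -/
theorem secondOrderRigid_not_infinitesimallyRigid :
    ∃ (np nl : ℕ) (I : Set (Fin np × Fin nl))
      (p : Fin np → Fin 2 → ℝ) (l : Fin nl → Fin 2 → ℝ) (Q : Set (Fin np)),
      (∀ ij ∈ I, p ij.1 ⬝ᵥ l ij.2 = -1) ∧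
      (∀ (p' p'' : Fin np → Fin 2 → ℝ) (l' l'' : Fin nl → Fin 2 → ℝ),
        (∀ ij ∈ I, p ij.1 ⬝ᵥ l' ij.2 + p' ij.1 ⬝ᵥ l ij.2 = 0) →
        (∀ ij ∈ I, p ij.1 ⬝ᵥ l'' ij.2 + 2 * (p' ij.1 ⬝ᵥ l' ij.2) +
          p'' ij.1 ⬝ᵥ l ij.2 = 0) →
        (∀ i ∈ Q, p' i = 0) → (∀ i ∈ Q, p'' i = 0) →
        p' = 0 ∧ l' = 0) ∧
      (∃ (p' : Fin np → Fin 2 → ℝ) (l' : Fin nl → Fin 2 → ℝ),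
        (∀ ij ∈ I, p ij.1 ⬝ᵥ l' ij.2 + p' ij.1 ⬝ᵥ l ij.2 = 0) ∧
        (∀ i ∈ Q, p' i = 0) ∧ (p', l') ≠ (0, 0)) := by
  -- points: 0=a, 1=b (unpinned, both at (0,-1));
  -- pinned: 2=(1,-1), 3=(-1,-1), 4=(-1,0), 5=(1,-2), 6=(1,0), 7=(-1,-2)
  -- lines: 0=M=(0,1), 1=N=(0,1), 2=L1=(1,1), 3=L2=(-1,1)
  refine ⟨8, 4,
    {((0:Fin 8),(0:Fin 4)), (1,0), (2,0), (0,1), (1,1), (3,1),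
      (0,2), (4,2), (5,2), (1,3), (6,3), (7,3)},
    ![![0,-1],![0,-1],![1,-1],![-1,-1],![-1,0],![1,-2],![1,0],![-1,-2]],
    ![![0,1],![0,1],![1,1],![-1,1]],
    {2,3,4,5,6,7}, ?_, ?_, ?_⟩
  · intro ij hij
    simp only [Set.mem_insert_iff, Set.mem_singleton_iff] at hij
    rcases hij with rfl|rfl|rfl|rfl|rfl|rfl|rfl|rfl|rfl|rfl|rfl|rfl <;>
      exact dot_inc _ _ _ _ (by norm_num)
  · intro p' p'' l' l'' h1 h2 hQ _hQ''
    -- pins (coordinatewise)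
    have hp2 : p' 2 = 0 := hQ 2 (by simp)
    have hp3 : p' 3 = 0 := hQ 3 (by simp)
    have hp4 : p' 4 = 0 := hQ 4 (by simp)
    have hp5 : p' 5 = 0 := hQ 5 (by simp)
    have hp6 : p' 6 = 0 := hQ 6 (by simp)
    have hp7 : p' 7 = 0 := hQ 7 (by simp)
    have c2 : ∀ k, p' 2 k = 0 := fun k => by rw [hp2]; rfl
    have c3 : ∀ k, p' 3 k = 0 := fun k => by rw [hp3]; rfl
    have c4 : ∀ k, p' 4 k = 0 := fun k => by rw [hp4]; rfl
    have c5 : ∀ k, p' 5 k = 0 := fun k => by rw [hp5]; rfl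
    have c6 : ∀ k, p' 6 k = 0 := fun k => by rw [hp6]; rfl
    have c7 : ∀ k, p' 7 k = 0 := fun k => by rw [hp7]; rfl
    -- first-order equations in coordinates
    have e42 := dot_flex (-1) 0 1 1 (l' 2) (p' 4) (h1 (4,2) (by simp))
    have e52 := dot_flex 1 (-2) 1 1 (l' 2) (p' 5) (h1 (5,2) (by simp))
    have e63 := dot_flex 1 0 (-1) 1 (l' 3) (p' 6) (h1 (6,3) (by simp))
    have e73 := dot_flex (-1) (-2) (-1) 1 (l' 3) (p' 7) (h1 (7,3) (by simp))
    have e02 := dot_flex 0 (-1) 1 1 (l' 2) (p' 0) (h1 (0,2) (by simp))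
    have e13 := dot_flex 0 (-1) (-1) 1 (l' 3) (p' 1) (h1 (1,3) (by simp))
    have e20 := dot_flex 1 (-1) 0 1 (l' 0) (p' 2) (h1 (2,0) (by simp))
    have e00 := dot_flex 0 (-1) 0 1 (l' 0) (p' 0) (h1 (0,0) (by simp))
    have e10 := dot_flex 0 (-1) 0 1 (l' 0) (p' 1) (h1 (1,0) (by simp))
    have e31 := dot_flex (-1) (-1) 0 1 (l' 1) (p' 3) (h1 (3,1) (by simp))
    have e01 := dot_flex 0 (-1) 0 1 (l' 1) (p' 0) (h1 (0,1) (by simp))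
    have e11 := dot_flex 0 (-1) 0 1 (l' 1) (p' 1) (h1 (1,1) (by simp))
    rw [c2 0, c2 1] at e20
    rw [c3 0, c3 1] at e31
    rw [c4 0, c4 1] at e42
    rw [c5 0, c5 1] at e52
    rw [c6 0, c6 1] at e63
    rw [c7 0, c7 1] at e73
    -- second-order equations at the four (a/b, M/N) incidences
    have f00 := dot_flex2 0 (-1) 0 1 (l'' 0) (l' 0) (p' 0) (p'' 0) (h2 (0,0) (by simp))
    have f10 := dot_flex2 0 (-1) 0 1 (l'' 0) (l' 0) (p' 1) (p'' 1) (h2 (1,0) (by simp))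
    have f01 := dot_flex2 0 (-1) 0 1 (l'' 1) (l' 1) (p' 0) (p'' 0) (h2 (0,1) (by simp))
    have f11 := dot_flex2 0 (-1) 0 1 (l'' 1) (l' 1) (p' 1) (p'' 1) (h2 (1,1) (by simp))
    -- abbreviate the flex parameter
    have hU1 : l' 2 0 = 0 := by linarith
    have hU2 : l' 2 1 = 0 := by linarith
    have hV1 : l' 3 0 = 0 := by linarith
    have hV2 : l' 3 1 = 0 := by linarith
    have hM1 : l' 0 0 = l' 0 1 := by linarith
    have hA2 : p' 0 1 = l' 0 1 := by linarith
    have hB2 : p' 1 1 = l' 0 1 := by linarith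
    have hN2 : l' 1 1 = l' 0 1 := by linarith
    have hN1 : l' 1 0 = -(l' 0 1) := by linarith
    have hA1 : p' 0 0 = -(l' 0 1) := by linarith
    have hB1 : p' 1 0 = l' 0 1 := by linarith
    -- stress-energy argument: f00 - f10 - f01 + f11 = -8 t^2
    have hzero : l' 0 1 = 0 := by nlinarith [f00, f10, f01, f11, sq_nonneg (l' 0 1)]
    have h00 : p' 0 0 = 0 := by linarith
    have h01 : p' 0 1 = 0 := by linarith
    have h10 : p' 1 0 = 0 := by linarith
    have h11 : p' 1 1 = 0 := by linarith
    have g00 : l' 0 0 = 0 := by linarith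
    have g10 : l' 1 0 = 0 := by linarith
    have g11 : l' 1 1 = 0 := by linarith
    constructor
    · funext i k
      fin_cases i <;> fin_cases k
      exacts [h00, h01, h10, h11, c2 0, c2 1, c3 0, c3 1, c4 0, c4 1,
        c5 0, c5 1, c6 0, c6 1, c7 0, c7 1]
    · funext j k
      fin_cases j <;> fin_cases k
      exacts [g00, hzero, g10, g11, hU1, hU2, hV1, hV2]
  · -- the nonzero infinitesimal flex
    refine ⟨![![-1,1],![1,1],0,0,0,0,0,0], ![![1,1],![-1,1],0,0], ?_, ?_, ?_⟩
    · intro ij hij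
      simp only [Set.mem_insert_iff, Set.mem_singleton_iff] at hij
      rcases hij with rfl|rfl|rfl|rfl|rfl|rfl|rfl|rfl|rfl|rfl|rfl|rfl
      exacts [dot_flex_mk 0 (-1) 0 1 ![1,1] ![-1,1] (by norm_num),
        dot_flex_mk 0 (-1) 0 1 ![1,1] ![1,1] (by norm_num),
        dot_flex_mk 1 (-1) 0 1 ![1,1] 0 (by norm_num),
        dot_flex_mk 0 (-1) 0 1 ![-1,1] ![-1,1] (by norm_num),
        dot_flex_mk 0 (-1) 0 1 ![-1,1] ![1,1] (by norm_num),
        dot_flex_mk (-1) (-1) 0 1 ![-1,1] 0 (by norm_num),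
        dot_flex_mk 0 (-1) 1 1 0 ![-1,1] (by norm_num),
        dot_flex_mk (-1) 0 1 1 0 0 (by norm_num),
        dot_flex_mk 1 (-2) 1 1 0 0 (by norm_num),
        dot_flex_mk 0 (-1) (-1) 1 0 ![1,1] (by norm_num),
        dot_flex_mk 1 0 (-1) 1 0 0 (by norm_num),
        dot_flex_mk (-1) (-2) (-1) 1 0 0 (by norm_num)]
    · intro i hi
      simp only [Set.mem_insert_iff, Set.mem_singleton_iff] at hi
      rcases hi with rfl|rfl|rfl|rfl|rfl|rfl <;> rfl
    · intro h
      have := congrFun (congrFun (congrArg Prod.fst h) 0) 0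
      norm_num at this
end

section
/- There exist an incidence structure S = (P, L, I), a set Q ⊆ P of four points, and a homogeneous realization (p, l) of S with every three of the vectors {p i : i ∈ Q} linearly independent, such that: (1) the pinned realization space consists of exactly two realizations — the set of homogeneous realizations (q, m) of S with q i a nonzero scalar multiple of p i for every i ∈ Q, considered modulo the equivalence identifying (q, m) and (q', m') when q i is a nonzero scalar multiple of q' i for every i ∈ P and m j is a nonzero scalar multiple of m' j for every j ∈ L, has exactly two elements; (2) each of the two realizations is infinitesimally rigid as a pinned realization: every homogeneous infinitesimal flex (p', l') of it with p' i a scalar multiple of the point coordinate vector for each i ∈ Q has p' i a scalar multiple of the point coordinate vector for every i ∈ P and l' j a scalar multiple of the line coordinate vector for every j ∈ L; and (3) the two realizations are not projectively equivalent: there is no A ∈ GL(3, ℝ) carrying each point coordinate vector of one realization to a nonzero scalar multiple of the corresponding point coordinate vector of the other and each line coordinate vector likewise via (Aᵀ)⁻¹. -/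
open Matrix

/-- A homogeneous realization of the incidence structure with incidence set `I`. -/
def IsHomRealization {P L : Type*} (I : Set (P × L))
    (q : P → Fin 3 → ℝ) (m : L → Fin 3 → ℝ) : Prop :=
  (∀ i, q i ≠ 0) ∧ (∀ j, m j ≠ 0) ∧ ∀ ij ∈ I, q ij.1 ⬝ᵥ m ij.2 = 0

/-- The realization `q` agrees on the pin set `Q` with the reference point
coordinates `p`, up to nonzero scalars. -/
def PinnedAt {P : Type*} (Q : Finset P) (p q : P → Fin 3 → ℝ) : Prop :=
  ∀ i ∈ Q, ∃ c : ℝ, c ≠ 0 ∧ q i = c • p i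

/-- Two realizations represent the same points and lines of the projective plane
(all coordinate vectors agree up to nonzero scalars). -/
def SameProjReal {P L : Type*} (q : P → Fin 3 → ℝ) (m : L → Fin 3 → ℝ)
    (q' : P → Fin 3 → ℝ) (m' : L → Fin 3 → ℝ) : Prop :=
  (∀ i, ∃ c : ℝ, c ≠ 0 ∧ q i = c • q' i) ∧ (∀ j, ∃ c : ℝ, c ≠ 0 ∧ m j = c • m' j)

/-- Infinitesimal rigidity of a pinned homogeneous realization: every homogeneous
infinitesimal flex whose point parts at the pins are scalar multiples of the
point coordinate vectors consists entirely of scalar multiples of the coordinate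
vectors (i.e., is projectively trivial). -/
def PinnedInfRigid {P L : Type*} (I : Set (P × L)) (Q : Finset P)
    (q : P → Fin 3 → ℝ) (m : L → Fin 3 → ℝ) : Prop :=
  ∀ (p' : P → Fin 3 → ℝ) (l' : L → Fin 3 → ℝ),
    (∀ ij ∈ I, q ij.1 ⬝ᵥ l' ij.2 + p' ij.1 ⬝ᵥ m ij.2 = 0) →
    (∀ i ∈ Q, ∃ c : ℝ, p' i = c • q i) →
    (∀ i, ∃ c : ℝ, p' i = c • q i) ∧ (∀ j, ∃ c : ℝ, l' j = c • m j)

/-!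
Pin the projective frame `e₁, e₂, e₃, e₁ + e₂ + e₃` (points `0`–`3`). Lines `0` and `1`
pass through two frame points each, so they are determined. The free points `4` and `5` lie on
line `1` and line `0` respectively, and both lie on lines `2` and `3`, which pass through the
frame points `0` and `3`. Either `4 ≠ 5`, and then lines `2` and `3` both equal the line
joining them, hence the line through points `0` and `3`, which cuts lines `1` and `0` in the
two free points; or `4 = 5` is the intersection of lines `0` and `1`, and lines `2`, `3` are
then determined. Each step rests on the fact that a vector of ℝ³ orthogonal to two independent
vectors `a`, `b` is a multiple of `a ⨯₃ b`; the same propagation, applied to an infinitesimal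
flex, shows that both realizations are infinitesimally rigid. They are not projectively
equivalent because points `2` and `4` coincide in one of them but not in the other.
-/

def ProjEq (v w : Fin 3 → ℝ) : Prop :=
  ∃ c : ℝ, c ≠ 0 ∧ v = c • w

namespace ProjEq

variable {u v w x : Fin 3 → ℝ}

theorem symm : ProjEq v w → ProjEq w v := by
  rintro ⟨c, hc, rfl⟩
  exact ⟨c⁻¹, inv_ne_zero hc, by rw [smul_smul, inv_mul_cancel₀ hc, one_smul]⟩

theorem trans : ProjEq u v → ProjEq v w → ProjEq u w := by
  rintro ⟨c, hc, rfl⟩ ⟨d, hd, rfl⟩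
  exact ⟨c * d, mul_ne_zero hc hd, smul_smul c d w⟩

theorem dotProduct_eq_zero_iff_left (h : ProjEq v w) : v ⬝ᵥ x = 0 ↔ w ⬝ᵥ x = 0 := by
  obtain ⟨c, hc, rfl⟩ := h
  rw [smul_dotProduct, smul_eq_mul, mul_eq_zero, or_iff_right hc]

theorem dotProduct_eq_zero_iff_right (h : ProjEq v w) : x ⬝ᵥ v = 0 ↔ x ⬝ᵥ w = 0 := by
  rw [dotProduct_comm, h.dotProduct_eq_zero_iff_left, dotProduct_comm]

end ProjEq

theorem projEq_of_exists_eq_smul {v w : Fin 3 → ℝ} (hv : v ≠ 0)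
    (h : ∃ c : ℝ, v = c • w) : ProjEq v w := by
  obtain ⟨c, rfl⟩ := h
  exact ⟨c, left_ne_zero_of_smul hv, rfl⟩

theorem exists_eq_smul_of_cross_eq_zero {u v : Fin 3 → ℝ} (hu : u ≠ 0) (h : u ⨯₃ v = 0) :
    ∃ c : ℝ, v = c • u := by
  have := mt crossProduct_ne_zero_iff_linearIndependent.mpr (not_not.mpr h)
  simpa [LinearIndependent.pair_iff' hu, eq_comm] using this

theorem exists_eq_smul_cross_of_dotProduct_eq_zero {a b v : Fin 3 → ℝ} (hab : a ⨯₃ b ≠ 0)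
    (ha : a ⬝ᵥ v = 0) (hb : b ⬝ᵥ v = 0) : ∃ c : ℝ, v = c • a ⨯₃ b :=
  exists_eq_smul_of_cross_eq_zero hab (by simp [cross_cross_eq_smul_sub_smul, ha, hb])

theorem exists_eq_smul_of_dotProduct_eq_zero {a b v w : Fin 3 → ℝ} (hab : a ⨯₃ b ≠ 0)
    (hw : w ≠ 0) (haw : a ⬝ᵥ w = 0) (hbw : b ⬝ᵥ w = 0) (hav : a ⬝ᵥ v = 0)
    (hbv : b ⬝ᵥ v = 0) : ∃ c : ℝ, v = c • w := by
  obtain ⟨c, rfl⟩ := exists_eq_smul_cross_of_dotProduct_eq_zero hab hav hbv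
  obtain ⟨d, rfl⟩ := exists_eq_smul_cross_of_dotProduct_eq_zero hab haw hbw
  have hd : d ≠ 0 := left_ne_zero_of_smul hw
  exact ⟨c / d, by rw [smul_smul, div_mul_cancel₀ c hd]⟩

theorem pinnedAt_of_eqOn {P : Type*} {Q : Finset P} {p q : P → Fin 3 → ℝ}
    (h : ∀ i ∈ Q, q i = p i) : PinnedAt Q p q :=
  fun i hi => ⟨1, one_ne_zero, by rw [h i hi, one_smul]⟩

def IsInfFlex {P L : Type*} (I : Set (P × L)) (q : P → Fin 3 → ℝ) (m : L → Fin 3 → ℝ)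
    (p' : P → Fin 3 → ℝ) (l' : L → Fin 3 → ℝ) : Prop :=
  ∀ ij ∈ I, q ij.1 ⬝ᵥ l' ij.2 + p' ij.1 ⬝ᵥ m ij.2 = 0

section Propagation

variable {P L : Type*} {I : Set (P × L)} {q q' p' : P → Fin 3 → ℝ}
  {m m' l' : L → Fin 3 → ℝ}

namespace IsHomRealization

theorem exists_eq_smul_line_of_dotProduct (h : IsHomRealization I q m) {a b : P} {j : L}
    (ha : (a, j) ∈ I) (hb : (b, j) ∈ I) (hab : q a ⨯₃ q b ≠ 0) {v : Fin 3 → ℝ}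
    (hav : q a ⬝ᵥ v = 0) (hbv : q b ⬝ᵥ v = 0) : ∃ c : ℝ, v = c • m j :=
  exists_eq_smul_of_dotProduct_eq_zero hab (h.2.1 j) (h.2.2 _ ha) (h.2.2 _ hb) hav hbv

theorem exists_eq_smul_point_of_dotProduct (h : IsHomRealization I q m) {i : P} {a b : L}
    (ha : (i, a) ∈ I) (hb : (i, b) ∈ I) (hab : m a ⨯₃ m b ≠ 0) {v : Fin 3 → ℝ}
    (hav : v ⬝ᵥ m a = 0) (hbv : v ⬝ᵥ m b = 0) : ∃ c : ℝ, v = c • q i := by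
  rw [dotProduct_comm] at hav hbv
  exact exists_eq_smul_of_dotProduct_eq_zero hab (h.1 i)
    ((dotProduct_comm _ _).trans (h.2.2 _ ha)) ((dotProduct_comm _ _).trans (h.2.2 _ hb)) hav hbv

theorem projEq_line (h : IsHomRealization I q m) (h' : IsHomRealization I q' m')
    {a b : P} {j : L} (ha : (a, j) ∈ I) (hb : (b, j) ∈ I) (hab : q' a ⨯₃ q' b ≠ 0)
    (hqa : ProjEq (q a) (q' a)) (hqb : ProjEq (q b) (q' b)) : ProjEq (m j) (m' j) :=
  projEq_of_exists_eq_smul (h.2.1 j) <| h'.exists_eq_smul_line_of_dotProduct ha hb hab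
    (hqa.dotProduct_eq_zero_iff_left.mp (h.2.2 _ ha))
    (hqb.dotProduct_eq_zero_iff_left.mp (h.2.2 _ hb))

theorem projEq_point (h : IsHomRealization I q m) (h' : IsHomRealization I q' m')
    {i : P} {a b : L} (ha : (i, a) ∈ I) (hb : (i, b) ∈ I) (hab : m' a ⨯₃ m' b ≠ 0)
    (hma : ProjEq (m a) (m' a)) (hmb : ProjEq (m b) (m' b)) : ProjEq (q i) (q' i) :=
  projEq_of_exists_eq_smul (h.1 i) <| h'.exists_eq_smul_point_of_dotProduct ha hb hab
    (hma.dotProduct_eq_zero_iff_right.mp (h.2.2 _ ha))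
    (hmb.dotProduct_eq_zero_iff_right.mp (h.2.2 _ hb))

end IsHomRealization

namespace IsInfFlex

theorem dotProduct_eq_zero_iff (hf : IsInfFlex I q m p' l') {i : P} {j : L}
    (hij : (i, j) ∈ I) : p' i ⬝ᵥ m j = 0 ↔ q i ⬝ᵥ l' j = 0 := by
  have := hf _ hij
  constructor <;> intro h <;> linarith

theorem dotProduct_eq_zero_of_point (hf : IsInfFlex I q m p' l') (hr : IsHomRealization I q m)
    {i : P} {j : L} (hij : (i, j) ∈ I) (hi : ∃ c : ℝ, p' i = c • q i) :
    q i ⬝ᵥ l' j = 0 := by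
  obtain ⟨c, hc⟩ := hi
  rw [← hf.dotProduct_eq_zero_iff hij, hc, smul_dotProduct, hr.2.2 _ hij, smul_zero]

theorem dotProduct_eq_zero_of_line (hf : IsInfFlex I q m p' l') (hr : IsHomRealization I q m)
    {i : P} {j : L} (hij : (i, j) ∈ I) (hj : ∃ c : ℝ, l' j = c • m j) :
    p' i ⬝ᵥ m j = 0 := by
  obtain ⟨c, hc⟩ := hj
  rw [hf.dotProduct_eq_zero_iff hij, hc, dotProduct_smul, hr.2.2 _ hij, smul_zero]

theorem exists_eq_smul_line (hf : IsInfFlex I q m p' l') (hr : IsHomRealization I q m)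
    {a b : P} {j : L} (ha : (a, j) ∈ I) (hb : (b, j) ∈ I) (hab : q a ⨯₃ q b ≠ 0)
    (hpa : ∃ c : ℝ, p' a = c • q a) (hpb : ∃ c : ℝ, p' b = c • q b) :
    ∃ c : ℝ, l' j = c • m j :=
  hr.exists_eq_smul_line_of_dotProduct ha hb hab (hf.dotProduct_eq_zero_of_point hr ha hpa)
    (hf.dotProduct_eq_zero_of_point hr hb hpb)

theorem exists_eq_smul_point (hf : IsInfFlex I q m p' l') (hr : IsHomRealization I q m)
    {i : P} {a b : L} (ha : (i, a) ∈ I) (hb : (i, b) ∈ I) (hab : m a ⨯₃ m b ≠ 0)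
    (hla : ∃ c : ℝ, l' a = c • m a) (hlb : ∃ c : ℝ, l' b = c • m b) :
    ∃ c : ℝ, p' i = c • q i :=
  hr.exists_eq_smul_point_of_dotProduct ha hb hab (hf.dotProduct_eq_zero_of_line hr ha hla)
    (hf.dotProduct_eq_zero_of_line hr hb hlb)

end IsInfFlex

end Propagation

def inc : Set (Fin 6 × Fin 4) :=
  {(1, 0), (2, 0), (5, 0), (2, 1), (3, 1), (4, 1), (0, 2), (4, 2), (5, 2), (3, 3), (4, 3), (5, 3)}

def pins : Finset (Fin 6) := {0, 1, 2, 3}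

/-- `refPt, refLn` is the realization with points `4 ≠ 5`, also used as the pinning reference;
in `colPt, colLn` the points `4` and `5` collapse onto point `2`. -/
def refPt : Fin 6 → Fin 3 → ℝ :=
  ![![1, 0, 0], ![0, 1, 0], ![0, 0, 1], ![1, 1, 1], ![1, 1, 1], ![0, 1, 1]]

def refLn : Fin 4 → Fin 3 → ℝ :=
  ![![1, 0, 0], ![-1, 1, 0], ![0, -1, 1], ![0, 1, -1]]

def colPt : Fin 6 → Fin 3 → ℝ :=
  ![![1, 0, 0], ![0, 1, 0], ![0, 0, 1], ![1, 1, 1], ![0, 0, 1], ![0, 0, 1]]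

def colLn : Fin 4 → Fin 3 → ℝ :=
  ![![1, 0, 0], ![-1, 1, 0], ![0, -1, 0], ![-1, 1, 0]]

theorem refPt_four : refPt 4 = refPt 3 := rfl

theorem colPt_five : colPt 5 = colPt 4 := rfl

theorem colLn_three : colLn 3 = colLn 1 := rfl

-- `rfl` would make the kernel compare distinct real literals, which does not terminate in time.
theorem colPt_eq_refPt {i : Fin 6} (hi : i ∈ pins) : colPt i = refPt i := by
  simp only [pins, Finset.mem_insert, Finset.mem_singleton] at hi
  rcases hi with rfl | rfl | rfl | rfl <;> simp [colPt, refPt]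

theorem colLn_zero : colLn 0 = refLn 0 := by simp [colLn, refLn]

theorem colLn_one : colLn 1 = refLn 1 := by simp [colLn, refLn]

theorem colPt_four : colPt 4 = colPt 2 := rfl

theorem isHomRealization_refPt_refLn : IsHomRealization inc refPt refLn := by
  refine ⟨fun i => ?_, fun j => ?_, fun ij hij => ?_⟩
  · fin_cases i <;> simp [refPt]
  · fin_cases j <;> simp [refLn]
  · simp only [inc, Set.mem_insert_iff, Set.mem_singleton_iff] at hij
    rcases hij with rfl | rfl | rfl | rfl | rfl | rfl | rfl | rfl | rfl | rfl | rfl | rfl <;>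
      simp [refPt, refLn]

theorem isHomRealization_colPt_colLn : IsHomRealization inc colPt colLn := by
  refine ⟨fun i => ?_, fun j => ?_, fun ij hij => ?_⟩
  · fin_cases i <;> simp [colPt]
  · fin_cases j <;> simp [colLn]
  · simp only [inc, Set.mem_insert_iff, Set.mem_singleton_iff] at hij
    rcases hij with rfl | rfl | rfl | rfl | rfl | rfl | rfl | rfl | rfl | rfl | rfl | rfl <;>
      simp [colPt, colLn]

theorem linearIndependent_refPt {f : Fin 3 → Fin 6} (hf : Function.Injective f)
    (hpins : ∀ r, f r ∈ pins) : LinearIndependent ℝ (fun r => refPt (f r)) := by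
  refine (linearIndependent_rows_iff_isUnit (A := of fun r => refPt (f r))).mpr ?_
  rw [isUnit_iff_isUnit_det, isUnit_iff_ne_zero, det_fin_three]
  have h01 : f 0 ≠ f 1 := hf.ne (by decide)
  have h02 : f 0 ≠ f 2 := hf.ne (by decide)
  have h12 : f 1 ≠ f 2 := hf.ne (by decide)
  have h0 := hpins 0
  have h1 := hpins 1
  have h2 := hpins 2
  simp only [pins, Finset.mem_insert, Finset.mem_singleton] at h0 h1 h2
  rcases h0 with h0 | h0 | h0 | h0 <;> rcases h1 with h1 | h1 | h1 | h1 <;>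
    rcases h2 with h2 | h2 | h2 | h2 <;> simp_all [refPt]

theorem not_projEq_refPt_four_two : ¬ ProjEq (refPt 4) (refPt 2) := by
  rintro ⟨c, -, h⟩
  simpa [refPt] using congrFun h 0

theorem sameProjReal_of_pinnedAt {q : Fin 6 → Fin 3 → ℝ} {m : Fin 4 → Fin 3 → ℝ}
    (hr : IsHomRealization inc q m) (hpin : PinnedAt pins refPt q) :
    SameProjReal q m colPt colLn ∨ SameProjReal q m refPt refLn := by
  have hR := isHomRealization_refPt_refLn
  have hC := isHomRealization_colPt_colLn
  have h0 : ProjEq (q 0) (refPt 0) := hpin 0 (by decide)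
  have h1 : ProjEq (q 1) (refPt 1) := hpin 1 (by decide)
  have h2 : ProjEq (q 2) (refPt 2) := hpin 2 (by decide)
  have h3 : ProjEq (q 3) (refPt 3) := hpin 3 (by decide)
  have hA : ProjEq (m 0) (refLn 0) := hr.projEq_line hR (a := 1) (b := 2) (by simp [inc])
    (by simp [inc]) (by simp [refPt, cross_apply]) h1 h2
  have hB : ProjEq (m 1) (refLn 1) := hr.projEq_line hR (a := 2) (b := 3) (by simp [inc])
    (by simp [inc]) (by simp [refPt, cross_apply]) h2 h3
  by_cases h45 : q 4 ⨯₃ q 5 = 0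
  · left
    obtain ⟨c, hc⟩ := exists_eq_smul_of_cross_eq_zero (hr.1 4) h45
    have h54 : ProjEq (q 5) (q 4) := projEq_of_exists_eq_smul (hr.1 5) ⟨c, hc⟩
    rw [← colPt_eq_refPt (by decide)] at h0 h1 h2 h3
    rw [← colLn_zero] at hA
    rw [← colLn_one] at hB
    have h4 : ProjEq (q 4) (colPt 4) := by
      refine projEq_of_exists_eq_smul (hr.1 4) <|
        exists_eq_smul_of_dotProduct_eq_zero (a := colLn 0) (b := colLn 1)
          (by simp [colLn, cross_apply]) (hC.1 4) ?_ ?_ ?_ ?_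
      · rw [dotProduct_comm, ← colPt_five]
        exact hC.2.2 (5, 0) (by simp [inc])
      · rw [dotProduct_comm]
        exact hC.2.2 (4, 1) (by simp [inc])
      · rw [dotProduct_comm, ← h54.dotProduct_eq_zero_iff_left]
        exact hA.dotProduct_eq_zero_iff_right.mp (hr.2.2 (5, 0) (by simp [inc]))
      · rw [dotProduct_comm]
        exact hB.dotProduct_eq_zero_iff_right.mp (hr.2.2 (4, 1) (by simp [inc]))
    have h5 : ProjEq (q 5) (colPt 5) := colPt_five ▸ h54.trans h4
    have hL : ProjEq (m 2) (colLn 2) := hr.projEq_line hC (a := 0) (b := 4) (by simp [inc])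
      (by simp [inc]) (by simp [colPt, cross_apply]) h0 h4
    have hN : ProjEq (m 3) (colLn 3) := hr.projEq_line hC (a := 3) (b := 4) (by simp [inc])
      (by simp [inc]) (by simp [colPt, cross_apply]) h3 h4
    refine ⟨fun i => ?_, fun j => ?_⟩
    · fin_cases i
      exacts [h0, h1, h2, h3, h4, h5]
    · fin_cases j
      exacts [hA, hB, hL, hN]
  · right
    -- lines `2` and `3` both join points `4` and `5`
    obtain ⟨c, hc⟩ := hr.exists_eq_smul_line_of_dotProduct (a := 4) (b := 5) (j := 3)
      (by simp [inc]) (by simp [inc]) h45 (hr.2.2 (4, 2) (by simp [inc]))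
      (hr.2.2 (5, 2) (by simp [inc]))
    have hL : ProjEq (m 2) (refLn 2) := by
      refine projEq_of_exists_eq_smul (hr.2.1 2) <|
        hR.exists_eq_smul_line_of_dotProduct (a := 0) (b := 4) (by simp [inc]) (by simp [inc])
          (by simp [refPt, cross_apply]) ?_ ?_
      · exact h0.dotProduct_eq_zero_iff_left.mp (hr.2.2 (0, 2) (by simp [inc]))
      · rw [hc, dotProduct_smul, refPt_four,
          h3.dotProduct_eq_zero_iff_left.mp (hr.2.2 (3, 3) (by simp [inc])), smul_zero]
    have h4 : ProjEq (q 4) (refPt 4) := hr.projEq_point hR (a := 1) (b := 2) (by simp [inc])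
      (by simp [inc]) (by simp [refLn, cross_apply]) hB hL
    have h5 : ProjEq (q 5) (refPt 5) := hr.projEq_point hR (a := 0) (b := 2) (by simp [inc])
      (by simp [inc]) (by simp [refLn, cross_apply]) hA hL
    have hN : ProjEq (m 3) (refLn 3) := hr.projEq_line hR (a := 3) (b := 5) (by simp [inc])
      (by simp [inc]) (by simp [refPt, cross_apply]) h3 h5
    refine ⟨fun i => ?_, fun j => ?_⟩
    · fin_cases i
      exacts [h0, h1, h2, h3, h4, h5]
    · fin_cases j
      exacts [hA, hB, hL, hN]

theorem pinnedInfRigid_refPt_refLn : PinnedInfRigid inc pins refPt refLn := by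
  intro p' l' hf hpin
  change IsInfFlex inc refPt refLn p' l' at hf
  have hR := isHomRealization_refPt_refLn
  have h0 := hpin 0 (by decide)
  have h1 := hpin 1 (by decide)
  have h2 := hpin 2 (by decide)
  have h3 := hpin 3 (by decide)
  have hA := hf.exists_eq_smul_line hR (a := 1) (b := 2) (j := 0) (by simp [inc])
    (by simp [inc]) (by simp [refPt, cross_apply]) h1 h2
  have hB := hf.exists_eq_smul_line hR (a := 2) (b := 3) (j := 1) (by simp [inc])
    (by simp [inc]) (by simp [refPt, cross_apply]) h2 h3
  have h4 : ∃ c : ℝ, p' 4 = c • refPt 4 := by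
    refine hR.exists_eq_smul_point_of_dotProduct (a := 1) (b := 3) (by simp [inc])
      (by simp [inc]) (by simp [refLn, cross_apply])
      (hf.dotProduct_eq_zero_of_line hR (by simp [inc]) hB) ?_
    rw [hf.dotProduct_eq_zero_iff (by simp [inc]), refPt_four]
    exact hf.dotProduct_eq_zero_of_point hR (by simp [inc]) h3
  have hL := hf.exists_eq_smul_line hR (a := 0) (b := 4) (j := 2) (by simp [inc])
    (by simp [inc]) (by simp [refPt, cross_apply]) h0 h4
  have h5 := hf.exists_eq_smul_point hR (i := 5) (a := 0) (b := 2) (by simp [inc])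
    (by simp [inc]) (by simp [refLn, cross_apply]) hA hL
  have hN := hf.exists_eq_smul_line hR (a := 3) (b := 5) (j := 3) (by simp [inc])
    (by simp [inc]) (by simp [refPt, cross_apply]) h3 h5
  refine ⟨fun i => ?_, fun j => ?_⟩
  · fin_cases i
    exacts [h0, h1, h2, h3, h4, h5]
  · fin_cases j
    exacts [hA, hB, hL, hN]

theorem pinnedInfRigid_colPt_colLn : PinnedInfRigid inc pins colPt colLn := by
  intro p' l' hf hpin
  change IsInfFlex inc colPt colLn p' l' at hf
  have hC := isHomRealization_colPt_colLn
  have h0 := hpin 0 (by decide)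
  have h1 := hpin 1 (by decide)
  have h2 := hpin 2 (by decide)
  have h3 := hpin 3 (by decide)
  have hA := hf.exists_eq_smul_line hC (a := 1) (b := 2) (j := 0) (by simp [inc])
    (by simp [inc]) (by simp [colPt, cross_apply]) h1 h2
  have hB := hf.exists_eq_smul_line hC (a := 2) (b := 3) (j := 1) (by simp [inc])
    (by simp [inc]) (by simp [colPt, cross_apply]) h2 h3
  have h5 : ∃ c : ℝ, p' 5 = c • colPt 5 := by
    refine hC.exists_eq_smul_point_of_dotProduct (a := 0) (b := 3) (by simp [inc])
      (by simp [inc]) (by simp [colLn, cross_apply])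
      (hf.dotProduct_eq_zero_of_line hC (by simp [inc]) hA) ?_
    rw [hf.dotProduct_eq_zero_iff (by simp [inc]), colPt_five,
      ← hf.dotProduct_eq_zero_iff (by simp [inc]), colLn_three]
    exact hf.dotProduct_eq_zero_of_line hC (by simp [inc]) hB
  have h4 : ∃ c : ℝ, p' 4 = c • colPt 4 := by
    refine hC.exists_eq_smul_point_of_dotProduct (a := 1) (b := 2) (by simp [inc])
      (by simp [inc]) (by simp [colLn, cross_apply])
      (hf.dotProduct_eq_zero_of_line hC (by simp [inc]) hB) ?_
    rw [hf.dotProduct_eq_zero_iff (by simp [inc]), ← colPt_five]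
    exact hf.dotProduct_eq_zero_of_point hC (by simp [inc]) h5
  have hL := hf.exists_eq_smul_line hC (a := 0) (b := 4) (j := 2) (by simp [inc])
    (by simp [inc]) (by simp [colPt, cross_apply]) h0 h4
  have hN := hf.exists_eq_smul_line hC (a := 3) (b := 4) (j := 3) (by simp [inc])
    (by simp [inc]) (by simp [colPt, cross_apply]) h3 h4
  refine ⟨fun i => ?_, fun j => ?_⟩
  · fin_cases i
    exacts [h0, h1, h2, h3, h4, h5]
  · fin_cases j
    exacts [hA, hB, hL, hN]

/-- there is an incidence structure with a pin set of four points
in general position whose pinned realization space consists of exactly two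
realizations, both infinitesimally rigid as pinned realizations, and not
projectively equivalent to one another. -/
theorem two_isolated_realizations :
    ∃ (np nl : ℕ) (I : Set (Fin np × Fin nl)) (Q : Finset (Fin np))
      (p : Fin np → Fin 3 → ℝ) (l : Fin nl → Fin 3 → ℝ),
      Q.card = 4 ∧
      IsHomRealization I p l ∧
      (∀ f : Fin 3 → {i // i ∈ Q}, Function.Injective f →
        LinearIndependent ℝ (fun r => p (f r).1)) ∧
      ∃ (q0 : Fin np → Fin 3 → ℝ) (m0 : Fin nl → Fin 3 → ℝ)
        (q1 : Fin np → Fin 3 → ℝ) (m1 : Fin nl → Fin 3 → ℝ),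
        IsHomRealization I q0 m0 ∧ PinnedAt Q p q0 ∧
        IsHomRealization I q1 m1 ∧ PinnedAt Q p q1 ∧
        -- (1) exactly two realizations, modulo projective identification
        ¬ SameProjReal q0 m0 q1 m1 ∧
        (∀ (q : Fin np → Fin 3 → ℝ) (m : Fin nl → Fin 3 → ℝ),
          IsHomRealization I q m → PinnedAt Q p q →
          SameProjReal q m q0 m0 ∨ SameProjReal q m q1 m1) ∧
        -- (2) each of the two realizations is infinitesimally rigid when pinned
        PinnedInfRigid I Q q0 m0 ∧ PinnedInfRigid I Q q1 m1 ∧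
        -- (3) the two realizations are not projectively equivalent
        ¬ ∃ A : Matrix (Fin 3) (Fin 3) ℝ, IsUnit A.det ∧
          (∀ i, ∃ c : ℝ, c ≠ 0 ∧ A.mulVec (q0 i) = c • q1 i) ∧
          (∀ j, ∃ c : ℝ, c ≠ 0 ∧ (A⁻¹)ᵀ.mulVec (m0 j) = c • m1 j) := by
  refine ⟨6, 4, inc, pins, refPt, refLn, rfl, isHomRealization_refPt_refLn,
    fun f hf => linearIndependent_refPt (Subtype.val_injective.comp hf) (fun r => (f r).2),
    colPt, colLn, refPt, refLn, isHomRealization_colPt_colLn,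
    pinnedAt_of_eqOn fun _ => colPt_eq_refPt, isHomRealization_refPt_refLn,
    pinnedAt_of_eqOn fun _ _ => rfl, fun h => ?_, fun _ _ => sameProjReal_of_pinnedAt,
    pinnedInfRigid_colPt_colLn, pinnedInfRigid_refPt_refLn, fun ⟨A, _, hA, _⟩ => ?_⟩
  · exact not_projEq_refPt_four_two (ProjEq.trans (ProjEq.symm (h.1 4)) (colPt_four ▸ h.1 2))
  · exact not_projEq_refPt_four_two (ProjEq.trans (ProjEq.symm (hA 4)) (colPt_four ▸ hA 2))
end

section
/- Let S = (P, L, I) be an incidence structure and let (p⁰, l⁰) and (p¹, l¹) be two homogeneous realizations of S. Then there exist continuous maps t ↦ p_t i ∈ ℝ³ \ {0} (for each i ∈ P) and t ↦ l_t j ∈ ℝ³ \ {0} (for each j ∈ L), defined for t ∈ [0, 1], such that ⟪p_t i, l_t j⟫ = 0 for every (i, j) ∈ I and every t ∈ [0, 1], and such that at t = 0 each p_0 i is a nonzero scalar multiple of p⁰ i and each l_0 j is a nonzero scalar multiple of l⁰ j, while at t = 1 each p_1 i is a nonzero scalar multiple of p¹ i and each l_1 j is a nonzero scalar multiple of l¹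 j. That is, any two realizations in the (unpinned) realization space of an incidence structure are joined by a path within the realization space. -/
open Matrix

section AuxRealization

lemma aux_ne_zero_of_dot {x y : Fin 3 → ℝ} (h : x ⬝ᵥ y ≠ 0) : x ≠ 0 :=
  fun h0 => h (by simp [h0])

lemma aux_dot_self_pos {x : Fin 3 → ℝ} (hx : x ≠ 0) : 0 < x ⬝ᵥ x := by
  have h1 : 0 ≤ x ⬝ᵥ x := Finset.sum_nonneg fun i _ => mul_self_nonneg _
  rcases h1.lt_or_eq with h | h
  · exact h
  · exact absurd (dotProduct_self_eq_zero.1 h.symm) hx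

lemma aux_scalar_seg {a b s : ℝ} (h : 0 < a * b) (hs0 : 0 ≤ s) (hs1 : s ≤ 1) :
    (1-s)*a + s*b ≠ 0 := by
  intro h0
  rcases eq_or_lt_of_le hs0 with rfl | hs0'
  · have ha : a = 0 := by linarith
    rw [ha, zero_mul] at h; exact lt_irrefl 0 h
  · have key : (1-s)*(a*a) + s*(a*b) = 0 := by linear_combination a * h0
    have t1 : 0 < s*(a*b) := mul_pos hs0' h
    have t2 : 0 ≤ (1-s)*(a*a) := mul_nonneg (by linarith) (mul_self_nonneg a)
    linarith

lemma aux_seg_ne_zero {x y : Fin 3 → ℝ} (hx : x ≠ 0) (hy : y ≠ 0) (hxy : 0 ≤ x ⬝ᵥ y)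
    {s : ℝ} (hs0 : 0 ≤ s) (hs1 : s ≤ 1) : (1-s) • x + s • y ≠ 0 := by
  intro h
  have e1 : (1-s) * (x ⬝ᵥ x) + s * (y ⬝ᵥ x) = 0 := by
    have := congrArg (· ⬝ᵥ x) h
    simpa [add_dotProduct, smul_dotProduct, smul_eq_mul] using this
  have e2 : (1-s) * (x ⬝ᵥ y) + s * (y ⬝ᵥ y) = 0 := by
    have := congrArg (· ⬝ᵥ y) h
    simpa [add_dotProduct, smul_dotProduct, smul_eq_mul] using this
  have hxx := aux_dot_self_pos hx
  have hyy := aux_dot_self_pos hy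
  rw [dotProduct_comm y x] at e1
  nlinarith [mul_nonneg hs0 hxy, mul_nonneg (by linarith : (0:ℝ) ≤ 1-s) hxx.le,
    mul_nonneg (by linarith : (0:ℝ) ≤ 1-s) hxy, mul_nonneg hs0 hyy.le]

lemma aux_phase1_dot (p l u : Fin 3 → ℝ) (huu : u ⬝ᵥ u = 1) (hpl : p ⬝ᵥ l = 0) (s : ℝ) :
    ((p ⬝ᵥ u) • u + (1-s) • (p - (p ⬝ᵥ u) • u)) ⬝ᵥ (l - (s * (l ⬝ᵥ u)) • u) = 0 := by
  simp only [add_dotProduct, sub_dotProduct, smul_dotProduct, dotProduct_sub,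
    dotProduct_smul, smul_eq_mul, dotProduct_comm u l, dotProduct_comm u p, huu, hpl]
  ring

lemma aux_middle_dot (u y0 y1 : Fin 3 → ℝ) (huu : u ⬝ᵥ u = 1) (c r0 r1 τ : ℝ) :
    (c • u) ⬝ᵥ (r0 • (y0 - (y0 ⬝ᵥ u) • u) + r1 • (τ • (y1 - (y1 ⬝ᵥ u) • u))) = 0 := by
  simp only [smul_dotProduct, dotProduct_add, dotProduct_smul, dotProduct_sub,
    smul_eq_mul, huu, dotProduct_comm u y0, dotProduct_comm u y1]
  ring

noncomputable def auxDotL (v : Fin 3 → ℝ) : (Fin 3 → ℝ) →ₗ[ℝ] ℝ where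
  toFun x := v ⬝ᵥ x
  map_add' a b := by simp [dotProduct_add]
  map_smul' c a := by simp [dotProduct_smul]

lemma aux_ker_dotL_ne_top {v : Fin 3 → ℝ} (hv : v ≠ 0) : LinearMap.ker (auxDotL v) ≠ ⊤ := by
  intro h
  have : v ∈ LinearMap.ker (auxDotL v) := h ▸ Submodule.mem_top
  have hv2 : v ⬝ᵥ v = 0 := this
  exact hv (dotProduct_self_eq_zero.1 hv2)

lemma aux_span_singleton_ne_top {v : Fin 3 → ℝ} (hv : v ≠ 0) :
    Submodule.span ℝ {v} ≠ ⊤ := by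
  intro h
  have h1 : Module.finrank ℝ (Submodule.span ℝ {v}) = 1 := finrank_span_singleton hv
  rw [h, finrank_top] at h1
  simp [Module.finrank_fin_fun] at h1

lemma aux_mem_span_of {l w : Fin 3 → ℝ} (hl : l ≠ 0) (h : l - (l ⬝ᵥ w) • w = 0) :
    w ∈ Submodule.span ℝ {l} := by
  have heq : l = (l ⬝ᵥ w) • w := sub_eq_zero.mp h
  have hβ : l ⬝ᵥ w ≠ 0 := by intro h0; rw [h0, zero_smul] at heq; exact hl heq
  obtain ⟨β, hβdef⟩ : ∃ β, β = l ⬝ᵥ w := ⟨_, rfl⟩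
  rw [← hβdef] at heq hβ
  refine Submodule.mem_span_singleton.2 ⟨β⁻¹, ?_⟩
  rw [heq, smul_smul, inv_mul_cancel₀ hβ, one_smul]

lemma aux_exists_good_u {P L : Type*} [Fintype P] [Fintype L]
    (p0 p1 : P → Fin 3 → ℝ) (l0 l1 : L → Fin 3 → ℝ)
    (hp0 : ∀ i, p0 i ≠ 0) (hp1 : ∀ i, p1 i ≠ 0)
    (hl0 : ∀ j, l0 j ≠ 0) (hl1 : ∀ j, l1 j ≠ 0) :
    ∃ u : Fin 3 → ℝ, u ⬝ᵥ u = 1 ∧ (∀ i, p0 i ⬝ᵥ u ≠ 0) ∧ (∀ i, p1 i ⬝ᵥ u ≠ 0) ∧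
      (∀ j, l0 j - (l0 j ⬝ᵥ u) • u ≠ 0) ∧ (∀ j, l1 j - (l1 j ⬝ᵥ u) • u ≠ 0) := by
  classical
  set W : Option ((P ⊕ P) ⊕ (L ⊕ L)) → Submodule ℝ (Fin 3 → ℝ) := fun o =>
    match o with
    | none => ⊥
    | some (Sum.inl (Sum.inl i)) => LinearMap.ker (auxDotL (p0 i))
    | some (Sum.inl (Sum.inr i)) => LinearMap.ker (auxDotL (p1 i))
    | some (Sum.inr (Sum.inl j)) => Submodule.span ℝ {l0 j}
    | some (Sum.inr (Sum.inr j)) => Submodule.span ℝ {l1 j} with hW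
  have hne : ⋃ o, (W o : Set (Fin 3 → ℝ)) ≠ Set.univ := by
    intro h
    obtain ⟨o, ho⟩ := Subspace.exists_eq_top_of_iUnion_eq_univ h
    match o with
    | none => exact absurd ho (by simp [hW])
    | some (Sum.inl (Sum.inl i)) => exact aux_ker_dotL_ne_top (hp0 i) ho
    | some (Sum.inl (Sum.inr i)) => exact aux_ker_dotL_ne_top (hp1 i) ho
    | some (Sum.inr (Sum.inl j)) => exact aux_span_singleton_ne_top (hl0 j) ho
    | some (Sum.inr (Sum.inr j)) => exact aux_span_singleton_ne_top (hl1 j) ho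
  obtain ⟨v, hv⟩ : ∃ v : Fin 3 → ℝ, ∀ o, v ∉ W o := by
    rcases Set.ne_univ_iff_exists_notMem _ |>.1 hne with ⟨v, hv⟩
    exact ⟨v, fun o ho => hv (Set.mem_iUnion.2 ⟨o, ho⟩)⟩
  have hv0 : v ≠ 0 := fun h => hv none (by simp [hW, h])
  have hvv : 0 < v ⬝ᵥ v := aux_dot_self_pos hv0
  set c : ℝ := (Real.sqrt (v ⬝ᵥ v))⁻¹ with hc
  have hsq : Real.sqrt (v ⬝ᵥ v) > 0 := Real.sqrt_pos.2 hvv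
  have hcne : c ≠ 0 := inv_ne_zero (ne_of_gt hsq)
  have hcc : c * c = (v ⬝ᵥ v)⁻¹ := by
    rw [hc, ← mul_inv, Real.mul_self_sqrt hvv.le]
  have hmem : ∀ x : Fin 3 → ℝ, x ≠ 0 → (x - (x ⬝ᵥ (c • v)) • (c • v) = 0) →
      v ∈ Submodule.span ℝ {x} := by
    intro x hx h
    have h1 : (c • v) ∈ Submodule.span ℝ {x} := aux_mem_span_of hx h
    have h2 := Submodule.smul_mem (Submodule.span ℝ {x}) c⁻¹ h1
    rwa [smul_smul, inv_mul_cancel₀ hcne, one_smul] at h2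
  have hdot : ∀ x : Fin 3 → ℝ, x ⬝ᵥ (c • v) = 0 → x ⬝ᵥ v = 0 := by
    intro x h
    rw [dotProduct_smul, smul_eq_mul] at h
    rcases mul_eq_zero.1 h with h' | h'
    · exact absurd h' hcne
    · exact h'
  refine ⟨c • v, ?_, ?_, ?_, ?_, ?_⟩
  · rw [dotProduct_smul, smul_dotProduct, smul_eq_mul, smul_eq_mul, ← mul_assoc, hcc,
      inv_mul_cancel₀ (ne_of_gt hvv)]
  · intro i h
    exact hv (some (Sum.inl (Sum.inl i))) (show v ∈ LinearMap.ker (auxDotL (p0 i)) by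
      simpa [auxDotL, LinearMap.mem_ker] using hdot _ h)
  · intro i h
    exact hv (some (Sum.inl (Sum.inr i))) (show v ∈ LinearMap.ker (auxDotL (p1 i)) by
      simpa [auxDotL, LinearMap.mem_ker] using hdot _ h)
  · intro j h
    exact hv (some (Sum.inr (Sum.inl j))) (hmem _ (hl0 j) h)
  · intro j h
    exact hv (some (Sum.inr (Sum.inr j))) (hmem _ (hl1 j) h)

end AuxRealization

/-- any two homogeneous realizations of an incidence structure are
joined by a continuous path of realizations (t ∈ [0,1]) within the realization
space, matching the given realizations at the endpoints up to nonzero scalars. -/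
theorem realization_space_path_connected
    {P L : Type*} [Fintype P] [Fintype L] (I : Set (P × L))
    (p0 : P → Fin 3 → ℝ) (l0 : L → Fin 3 → ℝ)
    (p1 : P → Fin 3 → ℝ) (l1 : L → Fin 3 → ℝ)
    (hp0 : ∀ i, p0 i ≠ 0) (hl0 : ∀ j, l0 j ≠ 0)
    (hp1 : ∀ i, p1 i ≠ 0) (hl1 : ∀ j, l1 j ≠ 0)
    (h0 : ∀ ij ∈ I, p0 ij.1 ⬝ᵥ l0 ij.2 = 0)
    (h1 : ∀ ij ∈ I, p1 ij.1 ⬝ᵥ l1 ij.2 = 0) :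
    ∃ (pt : ℝ → P → Fin 3 → ℝ) (lt : ℝ → L → Fin 3 → ℝ),
      (∀ i, ContinuousOn (fun t => pt t i) (Set.Icc 0 1)) ∧
      (∀ j, ContinuousOn (fun t => lt t j) (Set.Icc 0 1)) ∧
      (∀ t ∈ Set.Icc (0:ℝ) 1, ∀ i, pt t i ≠ 0) ∧
      (∀ t ∈ Set.Icc (0:ℝ) 1, ∀ j, lt t j ≠ 0) ∧
      (∀ t ∈ Set.Icc (0:ℝ) 1, ∀ ij ∈ I, pt t ij.1 ⬝ᵥ lt t ij.2 = 0) ∧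
      (∀ i, ∃ c : ℝ, c ≠ 0 ∧ pt 0 i = c • p0 i) ∧
      (∀ j, ∃ c : ℝ, c ≠ 0 ∧ lt 0 j = c • l0 j) ∧
      (∀ i, ∃ c : ℝ, c ≠ 0 ∧ pt 1 i = c • p1 i) ∧
      (∀ j, ∃ c : ℝ, c ≠ 0 ∧ lt 1 j = c • l1 j) := by
  classical
  obtain ⟨u, huu, hA, hB, hC, hD⟩ := aux_exists_good_u p0 p1 l0 l1 hp0 hp1 hl0 hl1
  have hu0 : u ≠ 0 := aux_ne_zero_of_dot (huu ▸ one_ne_zero)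
  -- sign corrections
  obtain ⟨σ, hσpos, hσne⟩ : ∃ σ : P → ℝ,
      (∀ i, 0 < (p0 i ⬝ᵥ u) * (σ i * (p1 i ⬝ᵥ u))) ∧ (∀ i, σ i ≠ 0) := by
    refine ⟨fun i => if (p0 i ⬝ᵥ u) * (p1 i ⬝ᵥ u) < 0 then -1 else 1, fun i => ?_, fun i => ?_⟩
    · by_cases h : (p0 i ⬝ᵥ u) * (p1 i ⬝ᵥ u) < 0
      · simp only [if_pos h]; nlinarith
      · simp only [if_neg h]
        have := mul_ne_zero (hA i) (hB i)
        rcases (not_lt.1 h).lt_or_eq with h' | h'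
        · nlinarith
        · exact absurd h'.symm this
    · by_cases h : (p0 i ⬝ᵥ u) * (p1 i ⬝ᵥ u) < 0
      · simp only [if_pos h]; norm_num
      · simp only [if_neg h]; norm_num
  obtain ⟨τ, hτpos, hτne⟩ : ∃ τ : L → ℝ,
      (∀ j, 0 ≤ (l0 j - (l0 j ⬝ᵥ u) • u) ⬝ᵥ (τ j • (l1 j - (l1 j ⬝ᵥ u) • u))) ∧
      (∀ j, τ j ≠ 0) := by
    refine ⟨fun j => if (l0 j - (l0 j ⬝ᵥ u) • u) ⬝ᵥ (l1 j - (l1 j ⬝ᵥ u) • u) < 0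
      then -1 else 1, fun j => ?_, fun j => ?_⟩
    · by_cases h : (l0 j - (l0 j ⬝ᵥ u) • u) ⬝ᵥ (l1 j - (l1 j ⬝ᵥ u) • u) < 0
      · simp only [if_pos h, dotProduct_smul, smul_eq_mul]; nlinarith
      · simp only [if_neg h, dotProduct_smul, smul_eq_mul, one_mul]
        exact not_lt.1 h
    · by_cases h : (l0 j - (l0 j ⬝ᵥ u) • u) ⬝ᵥ (l1 j - (l1 j ⬝ᵥ u) • u) < 0
      · simp only [if_pos h]; norm_num
      · simp only [if_neg h]; norm_num
  -- the three phases
  refine ⟨fun t i =>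
      if t ≤ 1/3 then
        (p0 i ⬝ᵥ u) • u + (1 - 3*t) • (p0 i - (p0 i ⬝ᵥ u) • u)
      else if t ≤ 2/3 then
        ((1-(3*t-1)) * (p0 i ⬝ᵥ u) + (3*t-1) * (σ i * (p1 i ⬝ᵥ u))) • u
      else
        σ i • ((p1 i ⬝ᵥ u) • u + (1-(3-3*t)) • (p1 i - (p1 i ⬝ᵥ u) • u)),
    fun t j =>
      if t ≤ 1/3 then
        l0 j - ((3*t) * (l0 j ⬝ᵥ u)) • u
      else if t ≤ 2/3 then
        (1-(3*t-1)) • (l0 j - (l0 j ⬝ᵥ u) • u) + (3*t-1) • (τ j • (l1 j - (l1 j ⬝ᵥ u) • u))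
      else
        τ j • (l1 j - ((3-3*t) * (l1 j ⬝ᵥ u)) • u),
    ?_, ?_, ?_, ?_, ?_, ?_, ?_, ?_, ?_⟩
  · -- continuity of points
    intro i
    apply Continuous.continuousOn
    apply Continuous.if_le
    · fun_prop
    · apply Continuous.if_le
      · fun_prop
      · fun_prop
      · fun_prop
      · fun_prop
      · intro x hx
        subst hx
        norm_num
        try module
    · fun_prop
    · fun_prop
    · intro x hx
      subst hx
      rw [if_pos (by norm_num : (1:ℝ)/3 ≤ 2/3)]
      norm_num
      try module
  · -- continuity of lines
    intro j
    apply Continuous.continuousOn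
    apply Continuous.if_le
    · fun_prop
    · apply Continuous.if_le
      · fun_prop
      · fun_prop
      · fun_prop
      · fun_prop
      · intro x hx
        subst hx
        norm_num
        try module
    · fun_prop
    · fun_prop
    · intro x hx
      subst hx
      rw [if_pos (by norm_num : (1:ℝ)/3 ≤ 2/3)]
      norm_num
      try module
  · -- points nonzero
    intro t ht i
    by_cases h13 : t ≤ 1/3
    · simp only [if_pos h13]
      apply aux_ne_zero_of_dot (y := u)
      have : ((p0 i ⬝ᵥ u) • u + (1 - 3*t) • (p0 i - (p0 i ⬝ᵥ u) • u)) ⬝ᵥ u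
          = p0 i ⬝ᵥ u := by
        simp only [add_dotProduct, smul_dotProduct, sub_dotProduct, smul_eq_mul, huu]
        ring
      rw [this]; exact hA i
    · by_cases h23 : t ≤ 2/3
      · simp only [if_neg h13, if_pos h23]
        refine smul_ne_zero ?_ hu0
        have hs0 : (0:ℝ) ≤ 3*t-1 := by push_neg at h13; linarith
        have hs1 : (3*t-1:ℝ) ≤ 1 := by linarith
        have := aux_scalar_seg (hσpos i) hs0 hs1
        convert this using 2 <;> ring
      · simp only [if_neg h13, if_neg h23]
        refine smul_ne_zero (hσne i) ?_
        apply aux_ne_zero_of_dot (y := u)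
        have : ((p1 i ⬝ᵥ u) • u + (1-(3-3*t)) • (p1 i - (p1 i ⬝ᵥ u) • u)) ⬝ᵥ u
            = p1 i ⬝ᵥ u := by
          simp only [add_dotProduct, smul_dotProduct, sub_dotProduct, smul_eq_mul, huu]
          ring
        rw [this]; exact hB i
  · -- lines nonzero
    intro t ht j
    by_cases h13 : t ≤ 1/3
    · simp only [if_pos h13]
      apply aux_ne_zero_of_dot (y := l0 j - (l0 j ⬝ᵥ u) • u)
      have : (l0 j - ((3*t) * (l0 j ⬝ᵥ u)) • u) ⬝ᵥ (l0 j - (l0 j ⬝ᵥ u) • u)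
          = (l0 j - (l0 j ⬝ᵥ u) • u) ⬝ᵥ (l0 j - (l0 j ⬝ᵥ u) • u) := by
        simp only [sub_dotProduct, dotProduct_sub, smul_dotProduct, dotProduct_smul,
          smul_eq_mul, huu, dotProduct_comm u (l0 j)]
        ring
      rw [this]
      exact ne_of_gt (aux_dot_self_pos (hC j))
    · by_cases h23 : t ≤ 2/3
      · simp only [if_neg h13, if_pos h23]
        have hs0 : (0:ℝ) ≤ 3*t-1 := by push_neg at h13; linarith
        have hs1 : (3*t-1:ℝ) ≤ 1 := by linarith
        have := aux_seg_ne_zero (hC j) (smul_ne_zero (hτne j) (hD j)) (hτpos j) hs0 hs1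
        convert this using 2
        try ring
      · simp only [if_neg h13, if_neg h23]
        refine smul_ne_zero (hτne j) ?_
        apply aux_ne_zero_of_dot (y := l1 j - (l1 j ⬝ᵥ u) • u)
        have : (l1 j - ((3-3*t) * (l1 j ⬝ᵥ u)) • u) ⬝ᵥ (l1 j - (l1 j ⬝ᵥ u) • u)
            = (l1 j - (l1 j ⬝ᵥ u) • u) ⬝ᵥ (l1 j - (l1 j ⬝ᵥ u) • u) := by
          simp only [sub_dotProduct, dotProduct_sub, smul_dotProduct, dotProduct_smul,
            smul_eq_mul, huu, dotProduct_comm u (l1 j)]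
          ring
        rw [this]
        exact ne_of_gt (aux_dot_self_pos (hD j))
  · -- incidences
    intro t ht ij hij
    by_cases h13 : t ≤ 1/3
    · simp only [if_pos h13]
      exact aux_phase1_dot _ _ u huu (h0 ij hij) (3*t)
    · by_cases h23 : t ≤ 2/3
      · simp only [if_neg h13, if_pos h23]
        exact aux_middle_dot u (l0 ij.2) (l1 ij.2) huu _ _ _ _
      · simp only [if_neg h13, if_neg h23]
        rw [smul_dotProduct, dotProduct_smul, aux_phase1_dot _ _ u huu (h1 ij hij) (3-3*t)]
        simp
  · -- t = 0 points
    intro i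
    refine ⟨1, one_ne_zero, ?_⟩
    beta_reduce
    rw [if_pos (by norm_num : (0:ℝ) ≤ 1/3)]
    norm_num
    try module
  · -- t = 0 lines
    intro j
    refine ⟨1, one_ne_zero, ?_⟩
    beta_reduce
    rw [if_pos (by norm_num : (0:ℝ) ≤ 1/3)]
    norm_num
  · -- t = 1 points
    intro i
    refine ⟨σ i, hσne i, ?_⟩
    beta_reduce
    rw [if_neg (by norm_num : ¬((1:ℝ) ≤ 1/3)), if_neg (by norm_num : ¬((1:ℝ) ≤ 2/3))]
    norm_num
    try module
  · -- t = 1 lines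
    intro j
    refine ⟨τ j, hτne j, ?_⟩
    beta_reduce
    rw [if_neg (by norm_num : ¬((1:ℝ) ≤ 1/3)), if_neg (by norm_num : ¬((1:ℝ) ≤ 2/3))]
    norm_num
end
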